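/- arXiv:1908.01382 — 9 statements merged into one kernel-verified Lean document; each statement's English description precedes it below -/
import Mathlib

section
/- Under the online geometric construction, the resulting random permutation has the Mallows distribution: let X_2,...,X_n be independent with P(X_j = m) = (1-q)q^m/(1-q^j) for 0 ≤ m ≤ j-1, and build σ ∈ S_n by inserting j so that X_j previously placed numbers lie to its right. Then the constructed permutation has inv(σ) = Σ_{j=2}^n X_j and is distributed as P_n^q. -/
open Finset Filter Topology

noncomputable section

/-- Number of inversions of a permutation of `Fin n`. -/
def invCount {n : ℕ} (σ : Equiv.Perm (Fin n)) : ℕ :=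
  (Finset.univ.filter (fun p : Fin n × Fin n => p.1 < p.2 ∧ σ p.2 < σ p.1)).card

/-- Mallows normalization constant `Z_n(q) = ∑_{σ ∈ S_n} q^{inv σ}`. -/
def mallowsZ (n : ℕ) (q : ℝ) : ℝ := ∑ σ : Equiv.Perm (Fin n), q ^ invCount σ

/-- Mallows probability of a permutation. -/
def mallowsP (n : ℕ) (q : ℝ) (σ : Equiv.Perm (Fin n)) : ℝ := q ^ invCount σ / mallowsZ n q

/-- `σ` contains the pattern `τ`. -/
def ContainsPattern {n m : ℕ} (σ : Equiv.Perm (Fin n)) (τ : Equiv.Perm (Fin m)) : Prop :=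
  ∃ f : Fin m → Fin n, StrictMono f ∧ ∀ j k : Fin m, τ j < τ k ↔ σ (f j) < σ (f k)

/-- `σ` avoids the pattern `τ`. -/
def AvoidsPattern {n m : ℕ} (σ : Equiv.Perm (Fin n)) (τ : Equiv.Perm (Fin m)) : Prop :=
  ¬ ContainsPattern σ τ

open scoped Classical in
/-- Mallows probability that a permutation of `[n]` avoids the pattern `τ`,
i.e. `P_n^q(S_n(τ))`. -/
def avoidProb (n : ℕ) (q : ℝ) {m : ℕ} (τ : Equiv.Perm (Fin m)) : ℝ :=
  ∑ σ : Equiv.Perm (Fin n), if AvoidsPattern σ τ then mallowsP n q σ else 0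

/-- For a permutation `σ` and a number `j` (0-indexed), the number of smaller values
lying to the right of `j` in `σ`; this is the value `X_j` in the online construction. -/
def xval {n : ℕ} (σ : Equiv.Perm (Fin n)) (j : Fin n) : ℕ :=
  (Finset.univ.filter (fun i : Fin n => σ⁻¹ j < i ∧ σ i < j)).card


lemma xval_le {n : ℕ} (σ : Equiv.Perm (Fin n)) (j : Fin n) : xval σ j ≤ j.val := by
  classical
  have h1 : (univ.filter (fun i : Fin n => σ⁻¹ j < i ∧ σ i < j)) ⊆
      univ.filter (fun i : Fin n => σ i < j) := by
    intro i hi; simp only [mem_filter, mem_univ, true_and] at hi ⊢; exact hi.2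
  have h2 : (univ.filter (fun i : Fin n => σ i < j)).card = (Finset.Iio j).card := by
    apply Finset.card_bij (fun i _ => σ i)
    · intro a ha; simp only [mem_filter, mem_univ, true_and] at ha; simpa using ha
    · intro a _ b _ hab; exact σ.injective hab
    · intro k hk; simp only [mem_Iio] at hk
      exact ⟨σ⁻¹ k, by simp [hk], by simp⟩
  have := Finset.card_le_card h1
  rw [h2, Fin.card_Iio] at this
  exact this

lemma invCount_eq_sum {n : ℕ} (σ : Equiv.Perm (Fin n)) :
    invCount σ = ∑ j : Fin n, xval σ j := by
  classical
  have : ∑ j : Fin n, xval σ j =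
      (univ.sigma (fun j : Fin n => univ.filter (fun i : Fin n => σ⁻¹ j < i ∧ σ i < j))).card := by
    rw [Finset.card_sigma]; rfl
  rw [this, invCount]
  apply Finset.card_bij (fun p _ => (⟨σ p.1, p.2⟩ : (_ : Fin n) × Fin n))
  · intro p hp
    simp only [mem_filter, mem_univ, true_and] at hp
    simp only [Finset.mem_sigma, mem_filter, mem_univ, true_and, Equiv.Perm.inv_def, Equiv.symm_apply_apply]
    exact hp
  · intro a _ b _ hab
    obtain ⟨h1, h2⟩ := Sigma.mk.inj_iff.mp hab
    exact Prod.ext (σ.injective h1) (eq_of_heq h2)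
  · rintro ⟨j, i⟩ hk
    simp only [Finset.mem_sigma, mem_filter, mem_univ, true_and] at hk
    exact ⟨(σ⁻¹ j, i), by simpa using hk, by simp⟩

lemma aux_antitone {n : ℕ} (Q : Finset (Fin n)) {p p' : Fin n} (hp : p ∉ Q) (hp' : p' ∉ Q)
    (h : (univ.filter (fun i => p < i ∧ i ∉ Q)).card
       = (univ.filter (fun i => p' < i ∧ i ∉ Q)).card) : p = p' := by
  classical
  have key : ∀ a b : Fin n, a < b → b ∉ Q →
      (univ.filter (fun i => a < i ∧ i ∉ Q)).card ≠ (univ.filter (fun i => b < i ∧ i ∉ Q)).card := by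
    intro a b hab hb
    have hss : (univ.filter (fun i => b < i ∧ i ∉ Q)) ⊂ (univ.filter (fun i => a < i ∧ i ∉ Q)) := by
      constructor
      · intro i hi; simp only [mem_filter, mem_univ, true_and] at hi ⊢
        exact ⟨hab.trans hi.1, hi.2⟩
      · intro hsub
        have hb2 : b ∈ univ.filter (fun i => a < i ∧ i ∉ Q) := by
          simp only [mem_filter, mem_univ, true_and]; exact ⟨hab, hb⟩
        have := hsub hb2
        simp only [mem_filter, mem_univ, true_and] at this
        exact absurd this.1 (lt_irrefl _)
    have := Finset.card_lt_card hss
    omega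
  rcases lt_trichotomy p p' with hlt | he | hlt
  · exact absurd h (key p p' hlt hp')
  · exact he
  · exact absurd h.symm (key p' p hlt hp)

lemma xval_injective {n : ℕ} {σ τ : Equiv.Perm (Fin n)} (h : ∀ j, xval σ j = xval τ j) :
    σ = τ := by
  classical
  have key : ∀ m : ℕ, ∀ j : Fin n, n - j.val ≤ m → σ⁻¹ j = τ⁻¹ j := by
    intro m
    induction m with
    | zero => intro j hj; exact absurd hj (by have := j.isLt; omega)
    | succ m ih =>
      intro j hj
      set Q : Finset (Fin n) := univ.filter (fun i : Fin n => j < σ i) with hQdef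
      have hih : ∀ k : Fin n, j < k → σ⁻¹ k = τ⁻¹ k := by
        intro k hk
        exact ih k (by have := Fin.lt_iff_val_lt_val.mp hk; omega)
      have hQ : Q = univ.filter (fun i : Fin n => j < τ i) := by
        ext i
        simp only [hQdef, mem_filter, mem_univ, true_and]
        constructor
        · intro hi
          have h1 : τ⁻¹ (σ i) = i := by rw [← hih (σ i) hi]; simp
          have : τ i = σ i := by conv_lhs => rw [← h1]; rw [Equiv.Perm.inv_def, Equiv.apply_symm_apply]
          rwa [this]
        · intro hi
          have h1 : σ⁻¹ (τ i) = i := by rw [hih (τ i) hi]; simp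
          have : σ i = τ i := by conv_lhs => rw [← h1]; rw [Equiv.Perm.inv_def, Equiv.apply_symm_apply]
          rwa [this]
      have hpσ : σ⁻¹ j ∉ Q := by simp [hQdef]
      have hpτ : τ⁻¹ j ∉ Q := by rw [hQ]; simp
      have e1 : xval σ j = (univ.filter (fun i => σ⁻¹ j < i ∧ i ∉ Q)).card := by
        rw [xval]
        congr 1
        ext i
        simp only [mem_filter, mem_univ, true_and, hQdef, not_lt]
        constructor
        · intro ⟨h1, h2⟩; exact ⟨h1, le_of_lt h2⟩
        · intro ⟨h1, h2⟩
          refine ⟨h1, lt_of_le_of_ne h2 (fun he => ?_)⟩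
          have : i = σ⁻¹ j := by rw [← he]; simp
          rw [this] at h1; exact lt_irrefl _ h1
      have e2 : xval τ j = (univ.filter (fun i => τ⁻¹ j < i ∧ i ∉ Q)).card := by
        rw [xval, hQ]
        congr 1
        ext i
        simp only [mem_filter, mem_univ, true_and, not_lt]
        constructor
        · intro ⟨h1, h2⟩; exact ⟨h1, le_of_lt h2⟩
        · intro ⟨h1, h2⟩
          refine ⟨h1, lt_of_le_of_ne h2 (fun he => ?_)⟩
          have : i = τ⁻¹ j := by rw [← he]; simp
          rw [this] at h1; exact lt_irrefl _ h1
      exact aux_antitone Q hpσ hpτ (by rw [← e1, ← e2]; exact h j)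
  have hinv : σ⁻¹ = τ⁻¹ := Equiv.ext (fun j => key n j (by omega))
  calc σ = (σ⁻¹)⁻¹ := (inv_inv σ).symm
  _ = (τ⁻¹)⁻¹ := by rw [hinv]
  _ = τ := inv_inv τ

def mallowsCode {n : ℕ} (σ : Equiv.Perm (Fin n)) : ∀ j : Fin n, Fin (j.val + 1) :=
  fun j => ⟨xval σ j, Nat.lt_succ_of_le (xval_le σ j)⟩

lemma prod_id_factorial : ∀ n : ℕ, (∏ j : Fin n, (j.val + 1)) = n.factorial := by
  intro n
  induction n with
  | zero => simp
  | succ n ih => rw [Fin.prod_univ_castSucc]; simp [ih, Nat.factorial_succ]; ring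

lemma mallowsCode_bijective {n : ℕ} : Function.Bijective (mallowsCode (n := n)) := by
  rw [Fintype.bijective_iff_injective_and_card]
  constructor
  · intro σ τ hst
    exact xval_injective (fun j => congrArg Fin.val (congrFun hst j))
  · rw [Fintype.card_perm, Fintype.card_pi, Fintype.card_fin]
    simp only [Fintype.card_fin]
    exact (prod_id_factorial n).symm

lemma mallowsZ_eq (n : ℕ) (q : ℝ) (hq1 : q ≠ 1) :
    mallowsZ n q = ∏ j : Fin n, (1 - q ^ (j.val + 1)) / (1 - q) := by
  classical
  have h1 : mallowsZ n q = ∑ x : (∀ j : Fin n, Fin (j.val + 1)), q ^ (∑ j : Fin n, (x j).val) := by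
    rw [mallowsZ]
    rw [← Fintype.sum_bijective mallowsCode mallowsCode_bijective _ _ (fun σ => ?_)]
    rw [invCount_eq_sum]
    rfl
  rw [h1]
  have h2 : ∀ x : (∀ j : Fin n, Fin (j.val + 1)),
      q ^ (∑ j : Fin n, (x j).val) = ∏ j : Fin n, q ^ (x j).val := by
    intro x; rw [Finset.prod_pow_eq_pow_sum]
  rw [Finset.sum_congr rfl (fun x _ => h2 x)]
  have h3 : ∑ x : (∀ j : Fin n, Fin (j.val + 1)), ∏ j : Fin n, q ^ (x j).val
      = ∏ j : Fin n, ∑ m : Fin (j.val + 1), q ^ m.val := by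
    rw [Finset.prod_univ_sum]
    rw [← Fintype.piFinset_univ]
  rw [h3]
  apply Finset.prod_congr rfl
  intro j _
  rw [Fin.sum_univ_eq_sum_range (fun m => q ^ m), geom_sum_eq hq1]
  rw [div_eq_div_iff (by intro hc; apply hq1; linarith [sub_eq_zero.mp hc])
    (by intro hc; apply hq1; linarith [sub_eq_zero.mp hc])]
  ring

/-- The online geometric construction yields the Mallows distribution:
the insertion variables `X_j = xval σ j` satisfy `X_j ≤ j-1`, the number of inversions
of `σ` is `∑_j X_j`, and the probability `∏_j (1-q)q^{X_j}/(1-q^j)` that the independent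
truncated geometric variables take exactly these values equals `P_n^q(σ)`. -/
theorem stmt3 (q : ℝ) (hq : q ∈ Set.Ioo (0:ℝ) 1) (n : ℕ) (σ : Equiv.Perm (Fin n)) :
    (∀ j : Fin n, xval σ j ≤ j.val) ∧
    invCount σ = ∑ j : Fin n, xval σ j ∧
    (∏ j : Fin n, (1 - q) * q ^ (xval σ j) / (1 - q ^ (j.val + 1))) = mallowsP n q σ := by
  obtain ⟨hq0, hq1⟩ := hq
  have hqne1 : q ≠ 1 := ne_of_lt hq1
  refine ⟨xval_le σ, invCount_eq_sum σ, ?_⟩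
  rw [mallowsP, mallowsZ_eq n q hqne1, invCount_eq_sum, ← Finset.prod_pow_eq_pow_sum,
    ← Finset.prod_div_distrib]
  apply Finset.prod_congr rfl
  intro j _
  have hne : (1 : ℝ) - q ^ (j.val + 1) ≠ 0 := by
    have : q ^ (j.val + 1) < 1 := pow_lt_one₀ (le_of_lt hq0) hq1 (Nat.succ_ne_zero _)
    linarith
  have hne2 : (1 : ℝ) - q ≠ 0 := by linarith
  field_simp
end
end

section
/- For q ∈ (0,1), every pattern τ ∈ S_3 other than 123, and every n ≥ 3, the Mallows probability that a random permutation of [n] avoids τ is strictly greater than (1-q)^n. -/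
open Finset Filter Topology

noncomputable section

/-- The pattern 132 as a permutation of `Fin 3` (0-indexed values). -/
def p132 : Equiv.Perm (Fin 3) := ⟨![0,2,1], ![0,2,1], by decide, by decide⟩
/-- The pattern 213. -/
def p213 : Equiv.Perm (Fin 3) := ⟨![1,0,2], ![1,0,2], by decide, by decide⟩
/-- The pattern 231. -/
def p231 : Equiv.Perm (Fin 3) := ⟨![1,2,0], ![2,0,1], by decide, by decide⟩
/-- The pattern 312. -/
def p312 : Equiv.Perm (Fin 3) := ⟨![2,0,1], ![1,2,0], by decide, by decide⟩
/-- The pattern 321. -/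
def p321 : Equiv.Perm (Fin 3) := ⟨![2,1,0], ![2,1,0], by decide, by decide⟩

namespace Stmt5Aux


variable {n : ℕ}

/-- `invCount` as in the problem statement, inlined. -/

def code (σ : Equiv.Perm (Fin n)) (i : Fin n) : ℕ :=
  (univ.filter (fun j => i < j ∧ σ j < σ i)).card

def acode (σ : Equiv.Perm (Fin n)) (i : Fin n) : ℕ :=
  (univ.filter (fun j => j < i ∧ σ j < σ i)).card

lemma invCount_eq_sum_code (σ : Equiv.Perm (Fin n)) : invCount σ = ∑ i, code σ i := by
  classical
  unfold invCount code
  rw [Finset.card_filter, Fintype.sum_prod_type]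
  exact Finset.sum_congr rfl fun i _ => (Finset.card_filter _ _).symm

lemma code_lt (σ : Equiv.Perm (Fin n)) (i : Fin n) : code σ i < n - i := by
  classical
  have h1 : code σ i ≤ (Finset.Ioi i).card := by
    apply Finset.card_le_card
    intro j hj
    simp only [mem_filter, mem_univ, true_and] at hj
    simpa [Finset.mem_Ioi] using hj.1
  rw [Fin.card_Ioi] at h1
  have h2 := i.isLt
  omega

lemma acode_add_code (σ : Equiv.Perm (Fin n)) (i : Fin n) :
    acode σ i + code σ i = (σ i : ℕ) := by
  classical
  have hdisj : Disjoint (univ.filter (fun j => j < i ∧ σ j < σ i))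
      (univ.filter (fun j => i < j ∧ σ j < σ i)) := by
    rw [Finset.disjoint_left]
    intro j hj1 hj2
    simp only [mem_filter] at hj1 hj2
    exact absurd (hj1.2.1.trans hj2.2.1) (lt_irrefl j)
  have hunion : (univ.filter (fun j => j < i ∧ σ j < σ i)) ∪
      (univ.filter (fun j => i < j ∧ σ j < σ i)) = univ.filter (fun j => σ j < σ i) := by
    ext j
    simp only [mem_union, mem_filter, mem_univ, true_and]
    constructor
    · rintro (⟨_, h⟩ | ⟨_, h⟩) <;> exact h
    · intro h
      rcases lt_trichotomy j i with hj | hj | hj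
      · exact Or.inl ⟨hj, h⟩
      · subst hj; exact absurd h (lt_irrefl _)
      · exact Or.inr ⟨hj, h⟩
  have hcard : (univ.filter (fun j => σ j < σ i)).card = (σ i : ℕ) := by
    rw [← Fin.card_Iio (σ i)]
    apply Finset.card_bij (fun j _ => σ j)
    · intro j hj
      simp only [mem_filter] at hj
      simpa [Finset.mem_Iio] using hj.2
    · intro a _ b _ hab
      exact σ.injective hab
    · intro v hv
      refine ⟨σ.symm v, ?_, by simp⟩
      simp only [mem_filter, mem_univ, true_and, Equiv.apply_symm_apply]
      simpa [Finset.mem_Iio] using hv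
  calc acode σ i + code σ i
      = ((univ.filter (fun j => j < i ∧ σ j < σ i)) ∪
          (univ.filter (fun j => i < j ∧ σ j < σ i))).card := by
        rw [Finset.card_union_of_disjoint hdisj]; rfl
    _ = (σ i : ℕ) := by rw [hunion, hcard]

lemma code_lt_code {σ σ' : Equiv.Perm (Fin n)} (i : Fin n)
    (hpre : ∀ j, j < i → σ j = σ' j) (hlt : σ i < σ' i) :
    code σ i < code σ' i := by
  classical
  have h1 := acode_add_code σ i
  have h2 := acode_add_code σ' i
  have hlt' : (σ i : ℕ) < (σ' i : ℕ) := hlt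
  have key : acode σ' i < acode σ i + ((σ' i : ℕ) - (σ i : ℕ)) := by
    have hrw : (univ.filter (fun j => j < i ∧ σ' j < σ' i)) =
        (univ.filter (fun j => j < i ∧ σ j < σ' i)) := by
      apply Finset.filter_congr
      intro j _
      constructor
      · rintro ⟨hj, h⟩; exact ⟨hj, by rwa [hpre j hj]⟩
      · rintro ⟨hj, h⟩; exact ⟨hj, by rwa [← hpre j hj]⟩
    have hsub : (univ.filter (fun j => j < i ∧ σ j < σ' i)) ⊆
        (univ.filter (fun j => j < i ∧ σ j < σ i)) ∪
        (univ.filter (fun j => j < i ∧ σ i ≤ σ j ∧ σ j < σ' i)) := by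
      intro j hj
      simp only [mem_filter, mem_univ, true_and, mem_union] at hj ⊢
      rcases lt_or_ge (σ j) (σ i) with h | h
      · exact Or.inl ⟨hj.1, h⟩
      · exact Or.inr ⟨hj.1, h, hj.2⟩
    have hS : (univ.filter (fun j => j < i ∧ σ i ≤ σ j ∧ σ j < σ' i)).card <
        (σ' i : ℕ) - (σ i : ℕ) := by
      have himg : ((univ.filter (fun j => j < i ∧ σ i ≤ σ j ∧ σ j < σ' i)).image σ) ⊂
          Finset.Ico (σ i) (σ' i) := by
        constructor
        · intro v hv
          simp only [mem_image, mem_filter, mem_univ, true_and] at hv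
          obtain ⟨j, ⟨_, h1, h2⟩, rfl⟩ := hv
          simp [Finset.mem_Ico, h1, h2]
        · intro hsub'
          have hmem : σ i ∈ Finset.Ico (σ i) (σ' i) := by
            simp [Finset.mem_Ico, hlt]
          have := hsub' hmem
          simp only [mem_image, mem_filter, mem_univ, true_and] at this
          obtain ⟨j, ⟨hj, _, _⟩, hje⟩ := this
          have : j = i := σ.injective hje
          subst this
          exact absurd hj (lt_irrefl _)
      have hcard := Finset.card_lt_card himg
      rw [Finset.card_image_of_injective _ σ.injective, Fin.card_Ico] at hcard
      exact hcard
    calc acode σ' i = (univ.filter (fun j => j < i ∧ σ j < σ' i)).card := by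
          unfold acode; rw [hrw]
      _ ≤ ((univ.filter (fun j => j < i ∧ σ j < σ i)) ∪
            (univ.filter (fun j => j < i ∧ σ i ≤ σ j ∧ σ j < σ' i))).card :=
          Finset.card_le_card hsub
      _ ≤ acode σ i + (univ.filter (fun j => j < i ∧ σ i ≤ σ j ∧ σ j < σ' i)).card :=
          Finset.card_union_le _ _
      _ < acode σ i + ((σ' i : ℕ) - (σ i : ℕ)) := by omega
  omega

lemma code_injective :
    Function.Injective (fun σ : Equiv.Perm (Fin n) => fun i => code σ i) := by
  classical
  intro σ σ' h
  by_contra hne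
  have hex : (univ.filter (fun i => σ i ≠ σ' i)).Nonempty := by
    by_contra hc
    rw [Finset.not_nonempty_iff_eq_empty, Finset.filter_eq_empty_iff] at hc
    apply hne
    ext x
    exact congrArg Fin.val (not_not.mp (hc (Finset.mem_univ x)))
  set s := univ.filter (fun i => σ i ≠ σ' i) with hs
  set i := s.min' hex with hi
  have himem : σ i ≠ σ' i := (Finset.mem_filter.mp (s.min'_mem hex)).2
  have hpre : ∀ j, j < i → σ j = σ' j := by
    intro j hj
    by_contra hc
    have : i ≤ j := s.min'_le j (by simp [hs, hc])
    exact absurd hj (not_lt.mpr this)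
  have hfun : code σ i = code σ' i := congrFun h i
  rcases lt_or_gt_of_ne himem with h1 | h1
  · exact absurd hfun (Nat.ne_of_lt (code_lt_code i hpre h1))
  · exact absurd hfun.symm (Nat.ne_of_lt (code_lt_code i (fun j hj => (hpre j hj).symm) h1))


lemma mallowsZ_le {q : ℝ} (hq0 : 0 ≤ q) (n : ℕ) :
    mallowsZ n q ≤ ∏ i : Fin n, ∑ k ∈ Finset.range (n - i), q ^ k := by
  classical
  rw [mallowsZ]
  calc ∑ σ : Equiv.Perm (Fin n), q ^ invCount σ
      = ∑ σ : Equiv.Perm (Fin n), ∏ i, q ^ code σ i := by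
        refine Finset.sum_congr rfl fun σ _ => ?_
        rw [invCount_eq_sum_code]
        exact (Finset.prod_pow_eq_pow_sum _ _ _).symm
    _ = ∑ f ∈ Finset.univ.image (fun σ : Equiv.Perm (Fin n) => fun i => code σ i),
          ∏ i, q ^ f i := by
        rw [Finset.sum_image (fun a _ b _ hab => code_injective hab)]
    _ ≤ ∑ f ∈ Fintype.piFinset (fun i : Fin n => Finset.range (n - i)), ∏ i, q ^ f i := by
        apply Finset.sum_le_sum_of_subset_of_nonneg
        · intro f hf
          simp only [Finset.mem_image] at hf
          obtain ⟨σ, _, rfl⟩ := hf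
          rw [Fintype.mem_piFinset]
          intro i
          rw [Finset.mem_range]
          exact code_lt σ i
        · intro f _ _
          exact Finset.prod_nonneg fun i _ => pow_nonneg hq0 _
    _ = ∏ i : Fin n, ∑ k ∈ Finset.range (n - i), q ^ k := (Finset.prod_univ_sum _ _).symm

lemma id_avoids {n : ℕ} {τ : Equiv.Perm (Fin 3)} (hτ : τ ≠ 1) :
    AvoidsPattern (1 : Equiv.Perm (Fin n)) τ := by
  rintro ⟨f, hf, h⟩
  apply hτ
  have hmono : ∀ j k : Fin 3, j < k → τ j < τ k := by
    intro j k hjk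
    rw [h j k]
    simpa using hf hjk
  have h0 : (τ 0 : ℕ) < τ 1 := hmono 0 1 (by decide)
  have h1 : (τ 1 : ℕ) < τ 2 := hmono 1 2 (by decide)
  have h2 : (τ 2 : ℕ) < 3 := (τ 2).isLt
  have e0 : τ 0 = 0 := Fin.ext (by omega)
  have e1 : τ 1 = 1 := Fin.ext (by omega)
  have e2 : τ 2 = 2 := Fin.ext (by omega)
  ext i
  fin_cases i
  · exact congrArg Fin.val e0
  · exact congrArg Fin.val e1
  · exact congrArg Fin.val e2

lemma invCount_one {n : ℕ} : invCount (1 : Equiv.Perm (Fin n)) = 0 := by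
  classical
  unfold invCount
  rw [Finset.card_eq_zero, Finset.filter_eq_empty_iff]
  rintro p _ ⟨h1, h2⟩
  simp only [Equiv.Perm.coe_one, id_eq] at h2
  exact absurd (h1.trans h2) (lt_irrefl _)


end Stmt5Aux

/-- For every pattern `τ ∈ S_3` other than `123` (the identity), the Mallows probability
of avoiding `τ` exceeds `(1-q)^n`. -/
theorem stmt5 (q : ℝ) (hq : q ∈ Set.Ioo (0:ℝ) 1) (τ : Equiv.Perm (Fin 3)) (hτ : τ ≠ 1)
    (n : ℕ) (hn : 3 ≤ n) :
    (1 - q) ^ n < avoidProb n q τ := by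
  classical
  obtain ⟨hq0, hq1⟩ := hq
  have hq1' : 0 < 1 - q := by linarith
  have hZpos : 0 < mallowsZ n q :=
    Finset.sum_pos (fun σ _ => pow_pos hq0 _) Finset.univ_nonempty
  -- Z * (1-q)^n < 1
  have hgeom : ∀ i : Fin n, (∑ k ∈ Finset.range (n - (i : ℕ)), q ^ k) * (1 - q)
      = 1 - q ^ (n - (i : ℕ)) := by
    intro i
    have h := geom_sum_mul q (n - (i : ℕ))
    linear_combination -h
  have hstep : mallowsZ n q * (1 - q) ^ n ≤ ∏ i : Fin n, (1 - q ^ (n - (i : ℕ))) := by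
    calc mallowsZ n q * (1 - q) ^ n
        ≤ (∏ i : Fin n, ∑ k ∈ Finset.range (n - (i : ℕ)), q ^ k) * (1 - q) ^ n :=
          mul_le_mul_of_nonneg_right (Stmt5Aux.mallowsZ_le hq0.le n) (pow_nonneg hq1'.le n)
      _ = ∏ i : Fin n, ((∑ k ∈ Finset.range (n - (i : ℕ)), q ^ k) * (1 - q)) := by
          rw [Finset.prod_mul_distrib, Finset.prod_const, Finset.card_univ, Fintype.card_fin]
      _ = ∏ i : Fin n, (1 - q ^ (n - (i : ℕ))) := Finset.prod_congr rfl fun i _ => hgeom i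
  have hprod : ∏ i : Fin n, (1 - q ^ (n - (i : ℕ))) < 1 := by
    have hn0 : 0 < n := by omega
    have hfac : ∀ i : Fin n, 0 ≤ 1 - q ^ (n - (i : ℕ)) ∧ 1 - q ^ (n - (i : ℕ)) ≤ 1 := by
      intro i
      constructor
      · have := pow_le_one₀ hq0.le hq1.le (n := n - (i : ℕ))
        linarith
      · have := pow_nonneg hq0.le (n - (i : ℕ))
        linarith
    set i0 : Fin n := ⟨0, hn0⟩ with hi0
    rw [← Finset.mul_prod_erase Finset.univ _ (Finset.mem_univ i0)]
    have hrest : ∏ i ∈ Finset.univ.erase i0, (1 - q ^ (n - (i : ℕ))) ≤ 1 :=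
      Finset.prod_le_one (fun i _ => (hfac i).1) (fun i _ => (hfac i).2)
    have hf0 : 1 - q ^ (n - (i0 : ℕ)) < 1 := by
      have := pow_pos hq0 (n - (i0 : ℕ))
      linarith
    calc (1 - q ^ (n - (i0 : ℕ))) * ∏ i ∈ Finset.univ.erase i0, (1 - q ^ (n - (i : ℕ)))
        ≤ (1 - q ^ (n - (i0 : ℕ))) * 1 :=
          mul_le_mul_of_nonneg_left hrest (hfac i0).1
      _ < 1 := by rw [mul_one]; exact hf0
  have hZ : (1 - q) ^ n * mallowsZ n q < 1 := by
    rw [mul_comm]; exact lt_of_le_of_lt hstep hprod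
  -- identity gives lower bound on avoidProb
  have hP1 : mallowsP n q 1 = 1 / mallowsZ n q := by
    rw [mallowsP, Stmt5Aux.invCount_one, pow_zero]
  have hsum : mallowsP n q 1 ≤ avoidProb n q τ := by
    rw [avoidProb]
    have h1 : (if AvoidsPattern (1 : Equiv.Perm (Fin n)) τ then mallowsP n q 1 else 0)
        = mallowsP n q 1 := if_pos (Stmt5Aux.id_avoids hτ)
    rw [← h1]
    refine Finset.single_le_sum (f := fun σ : Equiv.Perm (Fin n) =>
      if AvoidsPattern σ τ then mallowsP n q σ else 0) (fun σ _ => ?_) (Finset.mem_univ 1)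
    split
    · exact div_nonneg (pow_nonneg hq0.le _) hZpos.le
    · exact le_refl 0
  have hgoal : (1 - q) ^ n < 1 / mallowsZ n q := (lt_div_iff₀ hZpos).mpr hZ
  calc (1 - q) ^ n < 1 / mallowsZ n q := hgoal
    _ = mallowsP n q 1 := hP1.symm
    _ ≤ avoidProb n q τ := hsum
end
end

section
/- The Mallows measure is consistent under restriction to intervals and has independent blocks: if σ is distributed as P_{n_1+n_2}^q, I_1 = {1,...,n_1}, I_2 = {n_1+1,...,n_1+n_2}, and σ_{I_i} denotes the pattern (relative-order permutation in S_{n_i}) induced by σ restricted to positions in I_i, then σ_{I_1} and σ_{I_2} are independent with σ_{I_i} distributed as P_{n_i}^q. -/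
open Finset Filter Topology

noncomputable section

namespace Stmt6Aux

open scoped Classical

variable {n₁ n₂ : ℕ}


def crossCount {N : ℕ} (S : Finset (Fin N)) : ℕ :=
  ∑ a ∈ S, ∑ b ∈ Sᶜ, if b < a then 1 else 0

lemma perm_eq_of_order_iff {m : ℕ} (τ τ' : Equiv.Perm (Fin m))
    (h : ∀ j k, τ j < τ k ↔ τ' j < τ' k) : τ = τ' := by
  have hmono : StrictMono (fun x => τ' (τ.symm x)) := by
    intro a b hab
    exact (h (τ.symm a) (τ.symm b)).mp (by simpa using hab)
  have h1 : (fun x => τ' (τ.symm x)) = (univ : Finset (Fin m)).orderEmbOfFin (by simp) :=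
    Finset.orderEmbOfFin_unique _ (fun x => mem_univ _) hmono
  have h2 : (id : Fin m → Fin m) = (univ : Finset (Fin m)).orderEmbOfFin (by simp) :=
    Finset.orderEmbOfFin_unique _ (fun x => mem_univ _) strictMono_id
  have hid : (fun x => τ' (τ.symm x)) = id := h1.trans h2.symm
  refine Equiv.ext fun j => ?_
  have := congrFun hid (τ j)
  simpa using this.symm

lemma card_compl_eq {S : Finset (Fin (n₁ + n₂))} (hS : S.card = n₁) : Sᶜ.card = n₂ := by
  simp [Finset.card_compl, hS]

lemma castAdd_injective : Function.Injective (fun i : Fin n₁ => Fin.castAdd n₂ i) := by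
  intro a b h
  simpa [Fin.ext_iff] using congrArg Fin.val h

def mkFun (S : Finset (Fin (n₁ + n₂))) (hS : S.card = n₁)
    (π₁ : Equiv.Perm (Fin n₁)) (π₂ : Equiv.Perm (Fin n₂)) : Fin (n₁ + n₂) → Fin (n₁ + n₂) :=
  fun x => Sum.elim (fun i => S.orderEmbOfFin hS (π₁ i))
    (fun j => Sᶜ.orderEmbOfFin (card_compl_eq hS) (π₂ j)) (finSumFinEquiv.symm x)

lemma mkFun_inj (S : Finset (Fin (n₁ + n₂))) (hS : S.card = n₁)
    (π₁ : Equiv.Perm (Fin n₁)) (π₂ : Equiv.Perm (Fin n₂)) :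
    Function.Injective (mkFun S hS π₁ π₂) := by
  have helim : Function.Injective
      (Sum.elim (fun i => S.orderEmbOfFin hS (π₁ i))
        (fun j => Sᶜ.orderEmbOfFin (card_compl_eq hS) (π₂ j))) := by
    intro a b hab
    rcases a with i | i <;> rcases b with j | j <;>
      simp only [Sum.elim_inl, Sum.elim_inr] at hab
    · exact congrArg Sum.inl (π₁.injective ((S.orderEmbOfFin hS).injective hab))
    · exfalso
      have h1 : S.orderEmbOfFin hS (π₁ i) ∈ S := Finset.orderEmbOfFin_mem _ _ _
      have h2 : Sᶜ.orderEmbOfFin (card_compl_eq hS) (π₂ j) ∈ Sᶜ := Finset.orderEmbOfFin_mem _ _ _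
      rw [hab] at h1
      exact (Finset.mem_compl.mp h2) h1
    · exfalso
      have h1 : S.orderEmbOfFin hS (π₁ j) ∈ S := Finset.orderEmbOfFin_mem _ _ _
      have h2 : Sᶜ.orderEmbOfFin (card_compl_eq hS) (π₂ i) ∈ Sᶜ := Finset.orderEmbOfFin_mem _ _ _
      rw [hab] at h2
      exact (Finset.mem_compl.mp h2) h1
    · exact congrArg Sum.inr (π₂.injective ((Sᶜ.orderEmbOfFin (card_compl_eq hS)).injective hab))
  exact helim.comp finSumFinEquiv.symm.injective

def mkPerm (S : Finset (Fin (n₁ + n₂))) (hS : S.card = n₁)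
    (π₁ : Equiv.Perm (Fin n₁)) (π₂ : Equiv.Perm (Fin n₂)) : Equiv.Perm (Fin (n₁ + n₂)) :=
  Equiv.ofBijective _ (Finite.injective_iff_bijective.mp (mkFun_inj S hS π₁ π₂))

lemma mkPerm_castAdd (S : Finset (Fin (n₁ + n₂))) (hS : S.card = n₁)
    (π₁ : Equiv.Perm (Fin n₁)) (π₂ : Equiv.Perm (Fin n₂)) (i : Fin n₁) :
    mkPerm S hS π₁ π₂ (Fin.castAdd n₂ i) = S.orderEmbOfFin hS (π₁ i) := by
  simp [mkPerm, mkFun, finSumFinEquiv_symm_apply_castAdd]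

lemma mkPerm_natAdd (S : Finset (Fin (n₁ + n₂))) (hS : S.card = n₁)
    (π₁ : Equiv.Perm (Fin n₁)) (π₂ : Equiv.Perm (Fin n₂)) (j : Fin n₂) :
    mkPerm S hS π₁ π₂ (Fin.natAdd n₁ j) = Sᶜ.orderEmbOfFin (card_compl_eq hS) (π₂ j) := by
  simp [mkPerm, mkFun, finSumFinEquiv_symm_apply_natAdd]



lemma patt₁_mkPerm (patt₁ : Equiv.Perm (Fin (n₁ + n₂)) → Equiv.Perm (Fin n₁))
    (h₁ : ∀ σ (j k : Fin n₁),
      patt₁ σ j < patt₁ σ k ↔ σ (Fin.castAdd n₂ j) < σ (Fin.castAdd n₂ k))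
    (S : Finset (Fin (n₁ + n₂))) (hS : S.card = n₁)
    (π₁ : Equiv.Perm (Fin n₁)) (π₂ : Equiv.Perm (Fin n₂)) :
    patt₁ (mkPerm S hS π₁ π₂) = π₁ := by
  refine perm_eq_of_order_iff _ _ fun j k => ?_
  rw [h₁, mkPerm_castAdd, mkPerm_castAdd]
  exact (S.orderEmbOfFin hS).lt_iff_lt

lemma patt₂_mkPerm (patt₂ : Equiv.Perm (Fin (n₁ + n₂)) → Equiv.Perm (Fin n₂))
    (h₂ : ∀ σ (j k : Fin n₂),
      patt₂ σ j < patt₂ σ k ↔ σ (Fin.natAdd n₁ j) < σ (Fin.natAdd n₁ k))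
    (S : Finset (Fin (n₁ + n₂))) (hS : S.card = n₁)
    (π₁ : Equiv.Perm (Fin n₁)) (π₂ : Equiv.Perm (Fin n₂)) :
    patt₂ (mkPerm S hS π₁ π₂) = π₂ := by
  refine perm_eq_of_order_iff _ _ fun j k => ?_
  rw [h₂, mkPerm_natAdd, mkPerm_natAdd]
  exact (Sᶜ.orderEmbOfFin (card_compl_eq hS)).lt_iff_lt

lemma invCount_eq_sum {m : ℕ} (σ : Equiv.Perm (Fin m)) :
    invCount σ = ∑ x : Fin m, ∑ y : Fin m, if x < y ∧ σ y < σ x then 1 else 0 := by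
  rw [invCount, Finset.card_filter, Fintype.sum_prod_type]

lemma sum_orderEmbOfFin {N k : ℕ} (S : Finset (Fin N)) (hS : S.card = k) (f : Fin N → ℕ) :
    ∑ i : Fin k, f (S.orderEmbOfFin hS i) = ∑ a ∈ S, f a := by
  refine Finset.sum_bij (fun i _ => S.orderEmbOfFin hS i)
    (fun i _ => Finset.orderEmbOfFin_mem _ _ _)
    (fun i _ j _ h => (S.orderEmbOfFin hS).injective h) ?_ (fun i _ => rfl)
  intro b hb
  have : b ∈ Set.range (S.orderEmbOfFin hS) := by
    rw [Finset.range_orderEmbOfFin]; exact Finset.mem_coe.mpr hb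
  rcases this with ⟨i, hi⟩
  exact ⟨i, mem_univ _, hi⟩

lemma invCount_mkPerm (S : Finset (Fin (n₁ + n₂))) (hS : S.card = n₁)
    (π₁ : Equiv.Perm (Fin n₁)) (π₂ : Equiv.Perm (Fin n₂)) :
    invCount (mkPerm S hS π₁ π₂) = invCount π₁ + invCount π₂ + crossCount S := by
  have key : ∀ (F : Fin (n₁ + n₂) → Fin (n₁ + n₂) → ℕ),
      ∑ x, ∑ y, F x y = ∑ u : Fin n₁ ⊕ Fin n₂, ∑ v : Fin n₁ ⊕ Fin n₂,
        F (finSumFinEquiv u) (finSumFinEquiv v) := by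
    intro F
    have h1 : ∀ u : Fin n₁ ⊕ Fin n₂,
        ∑ v : Fin n₁ ⊕ Fin n₂, F (finSumFinEquiv u) (finSumFinEquiv v)
          = ∑ y, F (finSumFinEquiv u) y := fun u => Equiv.sum_comp finSumFinEquiv _
    rw [Finset.sum_congr rfl fun u _ => h1 u, Equiv.sum_comp finSumFinEquiv
      (fun x => ∑ y, F x y)]
  rw [invCount_eq_sum, key, Fintype.sum_sum_type]
  have expand : ∀ u : Fin n₁ ⊕ Fin n₂, ∀ G : Fin n₁ ⊕ Fin n₂ → ℕ, True := fun _ _ => trivial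
  simp only [Fintype.sum_sum_type, finSumFinEquiv_apply_left, finSumFinEquiv_apply_right]
  have hLL : ∀ i j : Fin n₁,
      (if Fin.castAdd n₂ i < Fin.castAdd n₂ j ∧
          mkPerm S hS π₁ π₂ (Fin.castAdd n₂ j) < mkPerm S hS π₁ π₂ (Fin.castAdd n₂ i)
        then 1 else 0)
      = (if i < j ∧ π₁ j < π₁ i then 1 else 0) := by
    intro i j
    refine if_congr ?_ rfl rfl
    rw [mkPerm_castAdd, mkPerm_castAdd]
    constructor
    · rintro ⟨h1, h2⟩
      refine ⟨?_, (S.orderEmbOfFin hS).lt_iff_lt.mp h2⟩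
      simp only [Fin.lt_def, Fin.coe_castAdd] at h1 ⊢; omega
    · rintro ⟨h1, h2⟩
      refine ⟨?_, (S.orderEmbOfFin hS).lt_iff_lt.mpr h2⟩
      simp only [Fin.lt_def, Fin.coe_castAdd] at h1 ⊢; omega
  have hRR : ∀ i j : Fin n₂,
      (if Fin.natAdd n₁ i < Fin.natAdd n₁ j ∧
          mkPerm S hS π₁ π₂ (Fin.natAdd n₁ j) < mkPerm S hS π₁ π₂ (Fin.natAdd n₁ i)
        then 1 else 0)
      = (if i < j ∧ π₂ j < π₂ i then 1 else 0) := by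
    intro i j
    refine if_congr ?_ rfl rfl
    rw [mkPerm_natAdd, mkPerm_natAdd]
    constructor
    · rintro ⟨h1, h2⟩
      refine ⟨?_, (Sᶜ.orderEmbOfFin (card_compl_eq hS)).lt_iff_lt.mp h2⟩
      simp only [Fin.lt_def, Fin.coe_natAdd] at h1 ⊢; omega
    · rintro ⟨h1, h2⟩
      refine ⟨?_, (Sᶜ.orderEmbOfFin (card_compl_eq hS)).lt_iff_lt.mpr h2⟩
      simp only [Fin.lt_def, Fin.coe_natAdd] at h1 ⊢; omega
  have hLR : ∀ (i : Fin n₁) (j : Fin n₂),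
      (if Fin.castAdd n₂ i < Fin.natAdd n₁ j ∧
          mkPerm S hS π₁ π₂ (Fin.natAdd n₁ j) < mkPerm S hS π₁ π₂ (Fin.castAdd n₂ i)
        then 1 else 0)
      = (if Sᶜ.orderEmbOfFin (card_compl_eq hS) (π₂ j) < S.orderEmbOfFin hS (π₁ i)
        then 1 else 0) := by
    intro i j
    refine if_congr ?_ rfl rfl
    rw [mkPerm_castAdd, mkPerm_natAdd]
    have htriv : Fin.castAdd n₂ i < Fin.natAdd n₁ j := by
      simp only [Fin.lt_def, Fin.coe_castAdd, Fin.coe_natAdd]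
      omega
    exact ⟨fun h => h.2, fun h => ⟨htriv, h⟩⟩
  have hRL : ∀ (i : Fin n₂) (j : Fin n₁),
      (if Fin.natAdd n₁ i < Fin.castAdd n₂ j ∧
          mkPerm S hS π₁ π₂ (Fin.castAdd n₂ j) < mkPerm S hS π₁ π₂ (Fin.natAdd n₁ i)
        then 1 else 0) = 0 := by
    intro i j
    rw [if_neg]
    rintro ⟨h1, -⟩
    simp only [Fin.lt_def, Fin.coe_castAdd, Fin.coe_natAdd] at h1
    omega
  -- now assemble
  have e1 : ∑ i : Fin n₁, (∑ j : Fin n₁,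
        (if Fin.castAdd n₂ i < Fin.castAdd n₂ j ∧
          mkPerm S hS π₁ π₂ (Fin.castAdd n₂ j) < mkPerm S hS π₁ π₂ (Fin.castAdd n₂ i)
        then 1 else 0)
      + ∑ j : Fin n₂,
        (if Fin.castAdd n₂ i < Fin.natAdd n₁ j ∧
          mkPerm S hS π₁ π₂ (Fin.natAdd n₁ j) < mkPerm S hS π₁ π₂ (Fin.castAdd n₂ i)
        then 1 else 0))
      = invCount π₁ + crossCount S := by
    rw [Finset.sum_add_distrib]
    congr 1
    · rw [invCount_eq_sum π₁]
      exact Finset.sum_congr rfl fun i _ => Finset.sum_congr rfl fun j _ => hLL i j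
    · simp only [crossCount]
      have step1 : ∀ i : Fin n₁, ∑ j : Fin n₂,
          (if Fin.castAdd n₂ i < Fin.natAdd n₁ j ∧
            mkPerm S hS π₁ π₂ (Fin.natAdd n₁ j) < mkPerm S hS π₁ π₂ (Fin.castAdd n₂ i)
          then 1 else 0)
          = ∑ b ∈ Sᶜ, if b < S.orderEmbOfFin hS (π₁ i) then 1 else 0 := by
        intro i
        rw [Finset.sum_congr rfl fun j _ => hLR i j]
        rw [← sum_orderEmbOfFin Sᶜ (card_compl_eq hS)
          (fun b => if b < S.orderEmbOfFin hS (π₁ i) then 1 else 0)]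
        exact Equiv.sum_comp π₂ (fun b => if (Sᶜ.orderEmbOfFin (card_compl_eq hS)) b < (S.orderEmbOfFin hS) (π₁ i) then 1 else 0)
      rw [Finset.sum_congr rfl fun i _ => step1 i]
      rw [← sum_orderEmbOfFin S hS (fun a => ∑ b ∈ Sᶜ, if b < a then 1 else 0)]
      exact Equiv.sum_comp π₁ (fun a => ∑ b ∈ Sᶜ, if b < (S.orderEmbOfFin hS) a then 1 else 0)
  have e2 : ∑ i : Fin n₂, (∑ j : Fin n₁,
        (if Fin.natAdd n₁ i < Fin.castAdd n₂ j ∧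
          mkPerm S hS π₁ π₂ (Fin.castAdd n₂ j) < mkPerm S hS π₁ π₂ (Fin.natAdd n₁ i)
        then 1 else 0)
      + ∑ j : Fin n₂,
        (if Fin.natAdd n₁ i < Fin.natAdd n₁ j ∧
          mkPerm S hS π₁ π₂ (Fin.natAdd n₁ j) < mkPerm S hS π₁ π₂ (Fin.natAdd n₁ i)
        then 1 else 0))
      = invCount π₂ := by
    rw [Finset.sum_add_distrib, invCount_eq_sum π₂]
    have : ∑ i : Fin n₂, ∑ j : Fin n₁,
        (if Fin.natAdd n₁ i < Fin.castAdd n₂ j ∧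
          mkPerm S hS π₁ π₂ (Fin.castAdd n₂ j) < mkPerm S hS π₁ π₂ (Fin.natAdd n₁ i)
        then 1 else 0) = 0 := by
      refine Finset.sum_eq_zero fun i _ => Finset.sum_eq_zero fun j _ => hRL i j
    rw [this, zero_add]
    exact Finset.sum_congr rfl fun i _ => Finset.sum_congr rfl fun j _ => hRR i j
  refine (congrArg₂ (· + ·) e1 e2).trans ?_
  ring


lemma image_castAdd_apply (σ : Equiv.Perm (Fin (n₁ + n₂))) :
    (Finset.image (fun i : Fin n₁ => σ (Fin.castAdd n₂ i)) univ).card = n₁ := by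
  rw [Finset.card_image_of_injective _ (fun a b h => castAdd_injective (σ.injective h)),
    card_univ, Fintype.card_fin]

lemma image_mkPerm (S : Finset (Fin (n₁ + n₂))) (hS : S.card = n₁)
    (π₁ : Equiv.Perm (Fin n₁)) (π₂ : Equiv.Perm (Fin n₂)) :
    Finset.image (fun i : Fin n₁ => mkPerm S hS π₁ π₂ (Fin.castAdd n₂ i)) univ = S := by
  apply Finset.eq_of_subset_of_card_le
  · intro x hx
    rcases Finset.mem_image.mp hx with ⟨i, -, rfl⟩
    rw [mkPerm_castAdd]
    exact Finset.orderEmbOfFin_mem _ _ _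
  · rw [hS, image_castAdd_apply]

lemma mkPerm_eq_of_patt (σ : Equiv.Perm (Fin (n₁ + n₂)))
    (patt₁ : Equiv.Perm (Fin (n₁ + n₂)) → Equiv.Perm (Fin n₁))
    (patt₂ : Equiv.Perm (Fin (n₁ + n₂)) → Equiv.Perm (Fin n₂))
    (h₁ : ∀ σ (j k : Fin n₁),
      patt₁ σ j < patt₁ σ k ↔ σ (Fin.castAdd n₂ j) < σ (Fin.castAdd n₂ k))
    (h₂ : ∀ σ (j k : Fin n₂),
      patt₂ σ j < patt₂ σ k ↔ σ (Fin.natAdd n₁ j) < σ (Fin.natAdd n₁ k))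
    (π₁ : Equiv.Perm (Fin n₁)) (π₂ : Equiv.Perm (Fin n₂))
    (hp₁ : patt₁ σ = π₁) (hp₂ : patt₂ σ = π₂) :
    mkPerm (Finset.image (fun i : Fin n₁ => σ (Fin.castAdd n₂ i)) univ)
      (image_castAdd_apply σ) π₁ π₂ = σ := by
  set S := Finset.image (fun i : Fin n₁ => σ (Fin.castAdd n₂ i)) univ with hSdef
  have hS : S.card = n₁ := image_castAdd_apply σ
  have hg₁ : (fun t : Fin n₁ => σ (Fin.castAdd n₂ (π₁.symm t))) = S.orderEmbOfFin hS := by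
    apply Finset.orderEmbOfFin_unique
    · intro t
      exact Finset.mem_image.mpr ⟨π₁.symm t, mem_univ _, rfl⟩
    · intro a b hab
      have := (h₁ σ (π₁.symm a) (π₁.symm b)).mp ?_
      · exact this
      · rw [hp₁]; simpa using hab
  have hmem₂ : ∀ j : Fin n₂, σ (Fin.natAdd n₁ j) ∈ Sᶜ := by
    intro j
    rw [Finset.mem_compl]
    intro hmem
    rcases Finset.mem_image.mp hmem with ⟨i, -, hi⟩
    have := σ.injective hi
    have := congrArg Fin.val this
    simp only [Fin.coe_castAdd, Fin.coe_natAdd] at this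
    omega
  have hg₂ : (fun t : Fin n₂ => σ (Fin.natAdd n₁ (π₂.symm t)))
      = Sᶜ.orderEmbOfFin (card_compl_eq hS) := by
    apply Finset.orderEmbOfFin_unique
    · intro t; exact hmem₂ _
    · intro a b hab
      have := (h₂ σ (π₂.symm a) (π₂.symm b)).mp ?_
      · exact this
      · rw [hp₂]; simpa using hab
  refine Equiv.ext fun x => ?_
  refine Fin.addCases (fun i => ?_) (fun j => ?_) x
  · rw [mkPerm_castAdd]
    have := congrFun hg₁ (π₁ i)
    simpa using this.symm
  · rw [mkPerm_natAdd]
    have := congrFun hg₂ (π₂ j)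
    simpa using this.symm

lemma fiber_sum (q : ℝ)
    (patt₁ : Equiv.Perm (Fin (n₁ + n₂)) → Equiv.Perm (Fin n₁))
    (patt₂ : Equiv.Perm (Fin (n₁ + n₂)) → Equiv.Perm (Fin n₂))
    (h₁ : ∀ σ (j k : Fin n₁),
      patt₁ σ j < patt₁ σ k ↔ σ (Fin.castAdd n₂ j) < σ (Fin.castAdd n₂ k))
    (h₂ : ∀ σ (j k : Fin n₂),
      patt₂ σ j < patt₂ σ k ↔ σ (Fin.natAdd n₁ j) < σ (Fin.natAdd n₁ k))
    (π₁ : Equiv.Perm (Fin n₁)) (π₂ : Equiv.Perm (Fin n₂)) :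
    ∑ σ : Equiv.Perm (Fin (n₁ + n₂)),
        (if patt₁ σ = π₁ ∧ patt₂ σ = π₂ then q ^ invCount σ else 0)
      = q ^ invCount π₁ * q ^ invCount π₂ *
        ∑ S ∈ Finset.powersetCard n₁ (univ : Finset (Fin (n₁ + n₂))), q ^ crossCount S := by
  rw [← Finset.sum_filter, Finset.mul_sum]
  refine (Finset.sum_bij
    (fun S hS => mkPerm S (Finset.mem_powersetCard_univ.mp hS) π₁ π₂) ?_ ?_ ?_ ?_).symm
  · intro S hS
    rw [Finset.mem_filter]
    exact ⟨mem_univ _, patt₁_mkPerm patt₁ h₁ _ _ _ _, patt₂_mkPerm patt₂ h₂ _ _ _ _⟩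
  · intro S hSm T hTm hST
    have h1 := image_mkPerm S (Finset.mem_powersetCard_univ.mp hSm) π₁ π₂
    have h2 := image_mkPerm T (Finset.mem_powersetCard_univ.mp hTm) π₁ π₂
    rw [← h1, ← h2]
    exact congrArg (fun τ : Equiv.Perm (Fin (n₁ + n₂)) =>
      Finset.image (fun i : Fin n₁ => τ (Fin.castAdd n₂ i)) univ) hST
  · intro σ hσ
    rw [Finset.mem_filter] at hσ
    obtain ⟨-, hp₁, hp₂⟩ := hσ
    exact ⟨Finset.image (fun i : Fin n₁ => σ (Fin.castAdd n₂ i)) univ,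
      Finset.mem_powersetCard_univ.mpr (image_castAdd_apply σ),
      mkPerm_eq_of_patt σ patt₁ patt₂ h₁ h₂ π₁ π₂ hp₁ hp₂⟩
  · intro S hS
    rw [invCount_mkPerm, pow_add, pow_add]

lemma sum_sum_ite_eq {α β : Type*} [Fintype α] [Fintype β]
    (a : α) (b : β) (c : ℝ) :
    ∑ x : α, ∑ y : β, (if a = x ∧ b = y then c else 0) = c := by
  simp [ite_and, Finset.sum_ite_eq]

lemma Z_factor (q : ℝ)
    (patt₁ : Equiv.Perm (Fin (n₁ + n₂)) → Equiv.Perm (Fin n₁))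
    (patt₂ : Equiv.Perm (Fin (n₁ + n₂)) → Equiv.Perm (Fin n₂))
    (h₁ : ∀ σ (j k : Fin n₁),
      patt₁ σ j < patt₁ σ k ↔ σ (Fin.castAdd n₂ j) < σ (Fin.castAdd n₂ k))
    (h₂ : ∀ σ (j k : Fin n₂),
      patt₂ σ j < patt₂ σ k ↔ σ (Fin.natAdd n₁ j) < σ (Fin.natAdd n₁ k)) :
    mallowsZ (n₁ + n₂) q = mallowsZ n₁ q * mallowsZ n₂ q *
      ∑ S ∈ Finset.powersetCard n₁ (univ : Finset (Fin (n₁ + n₂))), q ^ crossCount S := by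
  set C := ∑ S ∈ Finset.powersetCard n₁ (univ : Finset (Fin (n₁ + n₂))), q ^ crossCount S
  have expand : mallowsZ (n₁ + n₂) q
      = ∑ π₁ : Equiv.Perm (Fin n₁), ∑ π₂ : Equiv.Perm (Fin n₂),
        ∑ σ : Equiv.Perm (Fin (n₁ + n₂)),
          (if patt₁ σ = π₁ ∧ patt₂ σ = π₂ then q ^ invCount σ else 0) := by
    rw [mallowsZ]
    have e1 : ∀ σ : Equiv.Perm (Fin (n₁ + n₂)), q ^ invCount σ
        = ∑ π₁ : Equiv.Perm (Fin n₁), ∑ π₂ : Equiv.Perm (Fin n₂),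
          (if patt₁ σ = π₁ ∧ patt₂ σ = π₂ then q ^ invCount σ else 0) := by
      intro σ
      symm
      simp [ite_and, Finset.sum_ite_eq]
    rw [Finset.sum_congr rfl fun σ _ => e1 σ]
    exact Finset.sum_comm.trans (Finset.sum_congr rfl fun π₁ _ => Finset.sum_comm)
  rw [expand]
  have step : ∀ π₁ : Equiv.Perm (Fin n₁),
      ∑ π₂ : Equiv.Perm (Fin n₂), ∑ σ : Equiv.Perm (Fin (n₁ + n₂)),
        (if patt₁ σ = π₁ ∧ patt₂ σ = π₂ then q ^ invCount σ else 0)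
      = q ^ invCount π₁ * (mallowsZ n₂ q * C) := by
    intro π₁
    rw [Finset.sum_congr rfl fun π₂ _ => fiber_sum q patt₁ patt₂ h₁ h₂ π₁ π₂]
    have e2 : ∀ π₂ : Equiv.Perm (Fin n₂), q ^ invCount π₁ * q ^ invCount π₂ * C
        = q ^ invCount π₁ * (q ^ invCount π₂ * C) := fun _ => by ring
    rw [Finset.sum_congr rfl fun π₂ _ => e2 π₂, ← Finset.mul_sum, ← Finset.sum_mul, ← mallowsZ]
  rw [Finset.sum_congr rfl fun π₁ _ => step π₁, ← Finset.sum_mul, ← mallowsZ, ← mul_assoc]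

end Stmt6Aux

open scoped Classical in
/-- Consistency and block independence of the Mallows measure: the patterns induced by
`σ ∼ P_{n₁+n₂}^q` on the position blocks `{1,…,n₁}` and `{n₁+1,…,n₁+n₂}` are independent,
distributed as `P_{n₁}^q` and `P_{n₂}^q` respectively. -/
theorem stmt6 (q : ℝ) (hq : q ∈ Set.Ioo (0:ℝ) 1) (n₁ n₂ : ℕ)
    (patt₁ : Equiv.Perm (Fin (n₁ + n₂)) → Equiv.Perm (Fin n₁))
    (patt₂ : Equiv.Perm (Fin (n₁ + n₂)) → Equiv.Perm (Fin n₂))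
    (h₁ : ∀ σ (j k : Fin n₁),
      patt₁ σ j < patt₁ σ k ↔ σ (Fin.castAdd n₂ j) < σ (Fin.castAdd n₂ k))
    (h₂ : ∀ σ (j k : Fin n₂),
      patt₂ σ j < patt₂ σ k ↔ σ (Fin.natAdd n₁ j) < σ (Fin.natAdd n₁ k))
    (π₁ : Equiv.Perm (Fin n₁)) (π₂ : Equiv.Perm (Fin n₂)) :
    ∑ σ : Equiv.Perm (Fin (n₁ + n₂)),
        (if patt₁ σ = π₁ ∧ patt₂ σ = π₂ then mallowsP (n₁ + n₂) q σ else 0)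
      = mallowsP n₁ q π₁ * mallowsP n₂ q π₂ := by
  obtain ⟨hq0, -⟩ := hq
  have hZ1 : 0 < mallowsZ n₁ q :=
    Finset.sum_pos (fun σ _ => pow_pos hq0 _) Finset.univ_nonempty
  have hZ2 : 0 < mallowsZ n₂ q :=
    Finset.sum_pos (fun σ _ => pow_pos hq0 _) Finset.univ_nonempty
  have hCpos : 0 < ∑ S ∈ Finset.powersetCard n₁ (Finset.univ : Finset (Fin (n₁ + n₂))),
      q ^ Stmt6Aux.crossCount S :=
    Finset.sum_pos (fun S _ => pow_pos hq0 _)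
      (Finset.powersetCard_nonempty.2 (by simp))
  have step : (∑ σ : Equiv.Perm (Fin (n₁ + n₂)),
      (if patt₁ σ = π₁ ∧ patt₂ σ = π₂ then mallowsP (n₁ + n₂) q σ else 0))
      = (∑ σ : Equiv.Perm (Fin (n₁ + n₂)),
        (if patt₁ σ = π₁ ∧ patt₂ σ = π₂ then q ^ invCount σ else 0)) / mallowsZ (n₁ + n₂) q := by
    rw [Finset.sum_div]
    refine Finset.sum_congr rfl fun σ _ => ?_
    by_cases h : patt₁ σ = π₁ ∧ patt₂ σ = π₂ <;> simp [h, mallowsP]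
  rw [step, Stmt6Aux.fiber_sum q patt₁ patt₂ h₁ h₂ π₁ π₂,
    Stmt6Aux.Z_factor q patt₁ patt₂ h₁ h₂, mallowsP, mallowsP]
  have h1 := hZ1.ne'
  have h2 := hZ2.ne'
  have h3 := hCpos.ne'
  field_simp
end
end

section
/- Let q ∈ (0,1), w_n = ∏_{l=1}^n (1-q^l) (with w_0 = 1), and d_n = P_n^q(S_n(312)). Then d_0 = 1 and d_n = (1-q) Σ_{k=1}^n q^{k-1} (w_{k-1} w_{n-k}/w_n) d_{k-1} d_{n-k} for all n ≥ 1. The same recursion holds with 312 replaced by 231. -/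
open Finset Filter Topology

noncomputable section

/-- `w_n = ∏_{l=1}^n (1 - q^l)`, with `w_0 = 1`. -/
def wq (q : ℝ) (n : ℕ) : ℝ := ∏ l ∈ Finset.Icc 1 n, (1 - q ^ l)


set_option maxRecDepth 8000

namespace Stmt9Aux

open Equiv

/-- Triple characterization of containing the pattern 231. -/
lemma contains231_iff {n : ℕ} (σ : Equiv.Perm (Fin n)) :
    ContainsPattern σ p231 ↔ ∃ i j k : Fin n, i < j ∧ j < k ∧ σ k < σ i ∧ σ i < σ j := by
  constructor
  · rintro ⟨f, hf, hiff⟩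
    exact ⟨f 0, f 1, f 2, hf (by decide), hf (by decide),
      (hiff 2 0).1 (by decide), (hiff 0 1).1 (by decide)⟩
  · rintro ⟨i, j, k, hij, hjk, h1, h2⟩
    refine ⟨![i, j, k], ?_, ?_⟩
    · refine StrictMono.vecCons ?_ ?_
      · refine StrictMono.vecCons ?_ ?_
        · intro a b hab; fin_cases a; fin_cases b; simp at hab
        · simpa using hjk
      · simpa using hij
    · have hik := hij.trans hjk
      have e1 : σ k < σ j := h1.trans h2
      have e2 : ∀ {α : Type} (x y z : α) (h : (2:ℕ) < 3), ![x,y,z] ⟨2,h⟩ = z := fun _ _ _ _ => rfl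
      intro a b
      fin_cases a <;> fin_cases b <;>
        simp only [p231, Equiv.coe_fn_mk, Fin.zero_eta, Fin.mk_one, Matrix.cons_val_zero,
          Matrix.cons_val_one, Matrix.head_cons, Fin.isValue, e2] <;>
        simp only [Fin.lt_def] at h1 h2 e1 ⊢ <;>
        omega

lemma contains_inv {n m : ℕ} (σ : Equiv.Perm (Fin n)) (τ : Equiv.Perm (Fin m))
    (h : ContainsPattern σ τ) : ContainsPattern σ⁻¹ τ⁻¹ := by
  obtain ⟨f, hf, hiff⟩ := h
  refine ⟨fun j => σ (f (τ⁻¹ j)), ?_, ?_⟩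
  · intro a b hab
    exact (hiff _ _).1 (by simpa using hab)
  · intro a b
    simp only [Equiv.Perm.coe_inv, Equiv.symm_apply_apply]
    exact (hf.lt_iff_lt).symm

lemma p312_inv : p312⁻¹ = p231 := by decide
lemma p231_inv : p231⁻¹ = p312 := by decide

lemma avoids312_iff_inv {n : ℕ} (σ : Equiv.Perm (Fin n)) :
    AvoidsPattern σ p312 ↔ AvoidsPattern σ⁻¹ p231 := by
  unfold AvoidsPattern
  constructor
  · intro h hc
    exact h (by simpa [p231_inv] using contains_inv σ⁻¹ p231 hc)
  · intro h hc
    exact h (by simpa [p312_inv] using contains_inv σ p312 hc)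

lemma invCount_inv {n : ℕ} (σ : Equiv.Perm (Fin n)) : invCount σ⁻¹ = invCount σ := by
  classical
  unfold invCount
  refine Finset.card_bij (fun p _ => (σ⁻¹ p.2, σ⁻¹ p.1)) ?_ ?_ ?_
  · rintro ⟨x, y⟩ hxy
    simp only [Finset.mem_filter, Finset.mem_univ, true_and] at hxy ⊢
    exact ⟨hxy.2, by simpa using hxy.1⟩
  · rintro ⟨x, y⟩ hxy ⟨x', y'⟩ hxy' h
    simp only [Prod.mk.injEq, EmbeddingLike.apply_eq_iff_eq] at h
    simp [Prod.ext_iff, h.1, h.2]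
  · rintro ⟨x, y⟩ hxy
    simp only [Finset.mem_filter, Finset.mem_univ, true_and] at hxy
    refine ⟨(σ y, σ x), ?_, ?_⟩
    · simp only [Finset.mem_filter, Finset.mem_univ, true_and]
      exact ⟨hxy.2, by simpa using hxy.1⟩
    · simp

/-- Insert the maximum value at position `p`. -/
def ext1 {m : ℕ} (p : Fin (m+1)) (σ : Equiv.Perm (Fin m)) : Equiv.Perm (Fin (m+1)) :=
  (finSuccEquiv' p).trans ((Equiv.optionCongr σ).trans (finSuccEquiv' (Fin.last m)).symm)

lemma ext1_apply_self {m : ℕ} (p : Fin (m+1)) (σ : Equiv.Perm (Fin m)) :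
    ext1 p σ p = Fin.last m := by
  simp [ext1, finSuccEquiv'_at, finSuccEquiv'_symm_none]

lemma ext1_apply_succAbove {m : ℕ} (p : Fin (m+1)) (σ : Equiv.Perm (Fin m)) (a : Fin m) :
    ext1 p σ (p.succAbove a) = (σ a).castSucc := by
  simp [ext1, finSuccEquiv'_succAbove, finSuccEquiv'_symm_some, Fin.succAbove_last]

lemma ext1_bijective {m : ℕ} :
    Function.Bijective (fun x : Fin (m+1) × Equiv.Perm (Fin m) => ext1 x.1 x.2) := by
  constructor
  · rintro ⟨p, σ⟩ ⟨p', σ'⟩ h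
    simp only at h
    have hp : p = p' := by
      have h1 : ext1 p' σ' p = Fin.last m := by rw [← h, ext1_apply_self]
      have h2 : ext1 p' σ' p' = Fin.last m := ext1_apply_self p' σ'
      exact (ext1 p' σ').injective (h1.trans h2.symm)
    subst hp
    suffices hs : σ = σ' by simp [hs]
    ext a
    have h1 : ext1 p σ (p.succAbove a) = ext1 p σ' (p.succAbove a) := by rw [h]
    rw [ext1_apply_succAbove, ext1_apply_succAbove] at h1
    exact congrArg Fin.val (Fin.castSucc_injective _ h1)
  · intro τ
    set p := τ⁻¹ (Fin.last m) with hp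
    set e : Option (Fin m) ≃ Option (Fin m) :=
      ((finSuccEquiv' p).symm.trans (τ.trans (finSuccEquiv' (Fin.last m)))) with he
    have hnone : e none = none := by
      simp [he, finSuccEquiv'_symm_none, hp, Equiv.Perm.coe_inv, Equiv.apply_symm_apply, finSuccEquiv'_at]
    have hopt : Equiv.optionCongr e.removeNone = e := by
      ext x
      cases x with
      | none => simp [hnone]
      | some a =>
        rcases hx : e (some a) with _ | b
        · exact absurd (e.injective (hx.trans hnone.symm)) (by simp)
        · have := Equiv.removeNone_some e ⟨b, hx⟩
          simp only [Equiv.optionCongr_apply, Option.map_some]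
          rw [this, hx]
    refine ⟨⟨p, e.removeNone⟩, ?_⟩
    simp only [ext1, hopt, he]
    ext i
    simp [hp, Equiv.Perm.coe_inv, Equiv.apply_symm_apply, finSuccEquiv'_at]

lemma succAbove_val_lt {m : ℕ} (p : Fin (m+1)) (a : Fin m) (h : a.val < p.val) :
    (p.succAbove a).val = a.val := by
  rw [Fin.succAbove_of_castSucc_lt p a (by simpa [Fin.lt_def] using h)]
  rfl

lemma succAbove_val_ge {m : ℕ} (p : Fin (m+1)) (a : Fin m) (h : p.val ≤ a.val) :
    (p.succAbove a).val = a.val + 1 := by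
  rw [Fin.succAbove_of_le_castSucc p a (by simpa [Fin.le_def] using h)]
  rfl

lemma succAbove_val_cases {m : ℕ} (p : Fin (m+1)) (a : Fin m) :
    (p.succAbove a).val = a.val ∨ (p.succAbove a).val = a.val + 1 := by
  rcases lt_or_ge a.val p.val with h | h
  · exact Or.inl (succAbove_val_lt p a h)
  · exact Or.inr (succAbove_val_ge p a h)

lemma invCount_ext1 {m : ℕ} (p : Fin (m+1)) (σ : Equiv.Perm (Fin m)) :
    invCount (ext1 p σ) = invCount σ + (m - p.val) := by
  classical
  unfold invCount
  have key : (Finset.univ.filter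
        (fun x : Fin (m+1) × Fin (m+1) => x.1 < x.2 ∧ ext1 p σ x.2 < ext1 p σ x.1))
      = ((Finset.univ.filter (fun x : Fin m × Fin m => x.1 < x.2 ∧ σ x.2 < σ x.1)).image
          (fun x => (p.succAbove x.1, p.succAbove x.2)))
        ∪ ((Finset.Ioi p).image (fun j => (p, j))) := by
    ext ⟨i, j⟩
    simp only [Finset.mem_filter, Finset.mem_univ, true_and, Finset.mem_union,
      Finset.mem_image, Finset.mem_Ioi, Prod.mk.injEq, Prod.exists]
    constructor
    · rintro ⟨hij, hv⟩
      by_cases hi : i = p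
      · subst hi
        exact Or.inr ⟨j, hij, rfl, rfl⟩
      · by_cases hj : j = p
        · subst hj
          obtain ⟨a, ha⟩ := Fin.exists_succAbove_eq hi
          rw [← ha, ext1_apply_succAbove, ext1_apply_self] at hv
          exact absurd hv (Fin.castSucc_lt_last _).asymm
        · obtain ⟨a, ha⟩ := Fin.exists_succAbove_eq hi
          obtain ⟨b, hb⟩ := Fin.exists_succAbove_eq hj
          refine Or.inl ⟨a, b, ⟨?_, ?_⟩, ha, hb⟩
          · rw [← ha, ← hb] at hij
            exact Fin.succAbove_lt_succAbove_iff.mp hij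
          · rw [← ha, ← hb, ext1_apply_succAbove, ext1_apply_succAbove] at hv
            exact Fin.castSucc_lt_castSucc_iff.mp hv
    · rintro (⟨a, b, ⟨hab, hv⟩, ha, hb⟩ | ⟨x, hx, h1, h2⟩)
      · subst ha; subst hb
        refine ⟨Fin.succAbove_lt_succAbove_iff.mpr hab, ?_⟩
        rw [ext1_apply_succAbove, ext1_apply_succAbove]
        exact Fin.castSucc_lt_castSucc_iff.mpr hv
      · subst h1; subst h2
        refine ⟨hx, ?_⟩
        obtain ⟨b, hb⟩ := Fin.exists_succAbove_eq (ne_of_gt hx)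
        rw [← hb, ext1_apply_succAbove, ext1_apply_self]
        exact Fin.castSucc_lt_last _
  rw [key, Finset.card_union_of_disjoint, Finset.card_image_of_injective,
    Finset.card_image_of_injective, Fin.card_Ioi]
  · omega
  · exact fun j j' h => congrArg Prod.snd h
  · rintro ⟨a, b⟩ ⟨a', b'⟩ h
    simp only [Prod.mk.injEq] at h
    exact Prod.ext (Fin.succAbove_right_injective h.1) (Fin.succAbove_right_injective h.2)
  · rw [Finset.disjoint_left]
    rintro ⟨x, y⟩ hx hy
    simp only [Finset.mem_image, Prod.mk.injEq, Prod.exists] at hx hy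
    obtain ⟨a, b, _, ha, _⟩ := hx
    obtain ⟨j, _, h1, _⟩ := hy
    exact Fin.succAbove_ne p a (ha.trans h1.symm)



/-- Block condition: the first `c` positions carry the `c` smallest values below everything else. -/
def BlockAt {m : ℕ} (c : ℕ) (σ : Equiv.Perm (Fin m)) : Prop :=
  ∀ a b : Fin m, a.val < c → c ≤ b.val → σ a < σ b

lemma avoids_ext1 {m : ℕ} (p : Fin (m+1)) (σ : Equiv.Perm (Fin m)) :
    AvoidsPattern (ext1 p σ) p231 ↔ AvoidsPattern σ p231 ∧ BlockAt p.val σ := by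
  unfold AvoidsPattern
  rw [contains231_iff, contains231_iff]
  constructor
  · intro h
    constructor
    · rintro ⟨i, j, k, hij, hjk, h1, h2⟩
      refine h ⟨p.succAbove i, p.succAbove j, p.succAbove k,
        Fin.succAbove_lt_succAbove_iff.mpr hij, Fin.succAbove_lt_succAbove_iff.mpr hjk, ?_, ?_⟩ <;>
        rw [ext1_apply_succAbove, ext1_apply_succAbove] <;>
        exact Fin.castSucc_lt_castSucc_iff.mpr (by assumption)
    · intro a b ha hb
      by_contra hc
      have hab : a ≠ b := fun h' => by omega
      have hlt : σ b < σ a := lt_of_le_of_ne (not_lt.mp hc) (fun h' => hab (σ.injective h'.symm))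
      refine h ⟨p.succAbove a, p, p.succAbove b, ?_, ?_, ?_, ?_⟩
      · rw [Fin.lt_def, succAbove_val_lt p a ha]; exact ha
      · rw [Fin.lt_def, succAbove_val_ge p b hb]; omega
      · rw [ext1_apply_succAbove, ext1_apply_succAbove]
        exact Fin.castSucc_lt_castSucc_iff.mpr hlt
      · rw [ext1_apply_succAbove, ext1_apply_self]
        exact Fin.castSucc_lt_last _
  · rintro ⟨hav, hblock⟩ ⟨i, j, k, hij, hjk, h1, h2⟩
    by_cases hip : i = p
    · subst hip
      obtain ⟨a, ha⟩ := Fin.exists_succAbove_eq (ne_of_gt hij)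
      rw [← ha, ext1_apply_succAbove, ext1_apply_self] at h2
      exact absurd h2 (Fin.castSucc_lt_last _).asymm
    by_cases hkp : k = p
    · subst hkp
      obtain ⟨a, ha⟩ := Fin.exists_succAbove_eq hip
      rw [← ha, ext1_apply_succAbove, ext1_apply_self] at h1
      exact absurd h1 (Fin.castSucc_lt_last _).asymm
    by_cases hjp : j = p
    · subst hjp
      obtain ⟨a, ha⟩ := Fin.exists_succAbove_eq hip
      obtain ⟨b, hb⟩ := Fin.exists_succAbove_eq hkp
      have hav' : a.val < j.val := by
        have h' := succAbove_val_cases j a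
        have hi' : (j.succAbove a).val < j.val := by rw [ha]; exact Fin.lt_def.mp hij
        omega
      have hbv : j.val ≤ b.val := by
        have h' := succAbove_val_cases j b
        have hk' : j.val < (j.succAbove b).val := by rw [hb]; exact Fin.lt_def.mp hjk
        omega
      have hba := hblock a b hav' hbv
      rw [← ha, ← hb, ext1_apply_succAbove, ext1_apply_succAbove] at h1
      exact absurd (Fin.castSucc_lt_castSucc_iff.mp h1) hba.asymm
    · obtain ⟨a, ha⟩ := Fin.exists_succAbove_eq hip
      obtain ⟨b, hb⟩ := Fin.exists_succAbove_eq hjp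
      obtain ⟨c, hc⟩ := Fin.exists_succAbove_eq hkp
      rw [← ha, ← hb] at hij
      rw [← hb, ← hc] at hjk
      rw [← ha, ← hc, ext1_apply_succAbove, ext1_apply_succAbove] at h1
      rw [← ha, ← hb, ext1_apply_succAbove, ext1_apply_succAbove] at h2
      exact hav ⟨a, b, c, Fin.succAbove_lt_succAbove_iff.mp hij,
        Fin.succAbove_lt_succAbove_iff.mp hjk,
        Fin.castSucc_lt_castSucc_iff.mp h1, Fin.castSucc_lt_castSucc_iff.mp h2⟩


/-- Block-diagonal permutation. -/
def blk {a b : ℕ} (σL : Equiv.Perm (Fin a)) (σR : Equiv.Perm (Fin b)) : Equiv.Perm (Fin (a+b)) :=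
  finSumFinEquiv.symm.trans ((Equiv.sumCongr σL σR).trans finSumFinEquiv)

lemma blk_castAdd {a b : ℕ} (σL : Equiv.Perm (Fin a)) (σR : Equiv.Perm (Fin b)) (i : Fin a) :
    blk σL σR (Fin.castAdd b i) = Fin.castAdd b (σL i) := by
  simp [blk, finSumFinEquiv_symm_apply_castAdd, finSumFinEquiv_apply_left]

lemma blk_natAdd {a b : ℕ} (σL : Equiv.Perm (Fin a)) (σR : Equiv.Perm (Fin b)) (j : Fin b) :
    blk σL σR (Fin.natAdd a j) = Fin.natAdd a (σR j) := by
  simp [blk, finSumFinEquiv_symm_apply_natAdd, finSumFinEquiv_apply_right]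

lemma natAdd_val {a b : ℕ} (j : Fin b) : (Fin.natAdd a j).val = a + j.val := rfl
lemma castAdd_val {a b : ℕ} (i : Fin a) : (Fin.castAdd b i).val = i.val := rfl

lemma fin_add_cases {a b : ℕ} (x : Fin (a+b)) :
    (∃ i : Fin a, x = Fin.castAdd b i) ∨ (∃ j : Fin b, x = Fin.natAdd a j) := by
  rcases lt_or_ge x.val a with h | h
  · exact Or.inl ⟨⟨x.val, h⟩, by ext; rfl⟩
  · exact Or.inr ⟨⟨x.val - a, by omega⟩, Fin.ext (by simp only [natAdd_val]; omega)⟩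

lemma invCount_blk {a b : ℕ} (σL : Equiv.Perm (Fin a)) (σR : Equiv.Perm (Fin b)) :
    invCount (blk σL σR) = invCount σL + invCount σR := by
  classical
  unfold invCount
  have key : (Finset.univ.filter
        (fun x : Fin (a+b) × Fin (a+b) => x.1 < x.2 ∧ blk σL σR x.2 < blk σL σR x.1))
      = ((Finset.univ.filter (fun x : Fin a × Fin a => x.1 < x.2 ∧ σL x.2 < σL x.1)).image
          (fun x => (Fin.castAdd b x.1, Fin.castAdd b x.2)))
        ∪ ((Finset.univ.filter (fun x : Fin b × Fin b => x.1 < x.2 ∧ σR x.2 < σR x.1)).image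
          (fun x => (Fin.natAdd a x.1, Fin.natAdd a x.2))) := by
    ext ⟨x, y⟩
    simp only [Finset.mem_filter, Finset.mem_univ, true_and, Finset.mem_union,
      Finset.mem_image, Prod.mk.injEq, Prod.exists]
    constructor
    · rintro ⟨hxy, hv⟩
      rcases fin_add_cases x with ⟨i, rfl⟩ | ⟨i, rfl⟩ <;> rcases fin_add_cases y with ⟨j, rfl⟩ | ⟨j, rfl⟩
      · refine Or.inl ⟨i, j, ⟨?_, ?_⟩, rfl, rfl⟩
        · exact Fin.lt_def.mpr (by simpa only [Fin.lt_def, castAdd_val] using hxy)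
        · rw [blk_castAdd, blk_castAdd] at hv
          exact Fin.lt_def.mpr (by simpa only [Fin.lt_def, castAdd_val] using hv)
      · exfalso
        rw [blk_castAdd, blk_natAdd] at hv
        have h1 : (Fin.natAdd a (σR j)).val = a + (σR j).val := rfl
        have h2 : (Fin.castAdd b (σL i)).val = (σL i).val := rfl
        have := Fin.lt_def.mp hv
        have h3 : (σL i).val < a := (σL i).isLt
        omega
      · exfalso
        have := Fin.lt_def.mp hxy
        have h1 : (Fin.natAdd a i).val = a + i.val := rfl
        have h2 : (Fin.castAdd b j).val = j.val := rfl
        have h3 : j.val < a := j.isLt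
        omega
      · refine Or.inr ⟨i, j, ⟨?_, ?_⟩, rfl, rfl⟩
        · have := Fin.lt_def.mp hxy
          have h1 : (Fin.natAdd a i).val = a + i.val := rfl
          have h2 : (Fin.natAdd a j).val = a + j.val := rfl
          exact Fin.lt_def.mpr (by omega)
        · rw [blk_natAdd, blk_natAdd] at hv
          have := Fin.lt_def.mp hv
          have h1 : (Fin.natAdd a (σR i)).val = a + (σR i).val := rfl
          have h2 : (Fin.natAdd a (σR j)).val = a + (σR j).val := rfl
          exact Fin.lt_def.mpr (by omega)
    · rintro (⟨i, j, ⟨hij, hv⟩, rfl, rfl⟩ | ⟨i, j, ⟨hij, hv⟩, rfl, rfl⟩)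
      · refine ⟨Fin.lt_def.mpr (by simpa only [Fin.lt_def, castAdd_val] using hij), ?_⟩
        rw [blk_castAdd, blk_castAdd]
        exact Fin.lt_def.mpr (by simpa only [Fin.lt_def, castAdd_val] using hv)
      · refine ⟨?_, ?_⟩
        · have := Fin.lt_def.mp hij
          exact Fin.lt_def.mpr (by simp only [natAdd_val]; omega)
        · rw [blk_natAdd, blk_natAdd]
          have := Fin.lt_def.mp hv
          exact Fin.lt_def.mpr (by simp only [natAdd_val]; omega)
  rw [key, Finset.card_union_of_disjoint, Finset.card_image_of_injective,
    Finset.card_image_of_injective]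
  · have hinj : Function.Injective (fun j : Fin b => Fin.natAdd a j) := by
      intro u v h; ext
      have h1 : a + u.val = a + v.val := congrArg Fin.val h
      omega
    rintro ⟨x, y⟩ ⟨x', y'⟩ h
    simp only [Prod.mk.injEq] at h
    exact Prod.ext (hinj h.1) (hinj h.2)
  · rintro ⟨x, y⟩ ⟨x', y'⟩ h
    simp only [Prod.mk.injEq] at h
    exact Prod.ext (Fin.castAdd_injective a b h.1) (Fin.castAdd_injective a b h.2)
  · rw [Finset.disjoint_left]
    rintro ⟨x, y⟩ hx hy
    simp only [Finset.mem_image, Prod.mk.injEq, Prod.exists] at hx hy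
    obtain ⟨i, j, _, hi, _⟩ := hx
    obtain ⟨i', j', _, hi', _⟩ := hy
    have h1 : x.val < a := by rw [← hi]; exact i.isLt
    have h2 : a ≤ x.val := by rw [← hi']; simp only [natAdd_val]; omega
    omega

lemma avoids_blk {a b : ℕ} (σL : Equiv.Perm (Fin a)) (σR : Equiv.Perm (Fin b)) :
    AvoidsPattern (blk σL σR) p231 ↔ AvoidsPattern σL p231 ∧ AvoidsPattern σR p231 := by
  unfold AvoidsPattern
  rw [contains231_iff, contains231_iff, contains231_iff]
  constructor
  · intro h
    constructor
    · rintro ⟨i, j, k, hij, hjk, h1, h2⟩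
      refine h ⟨Fin.castAdd b i, Fin.castAdd b j, Fin.castAdd b k, ?_, ?_, ?_, ?_⟩ <;>
        rw [Fin.lt_def] <;>
        simp only [castAdd_val, blk_castAdd] <;>
        first
          | exact Fin.lt_def.mp hij
          | exact Fin.lt_def.mp hjk
          | exact Fin.lt_def.mp h1
          | exact Fin.lt_def.mp h2
    · rintro ⟨i, j, k, hij, hjk, h1, h2⟩
      refine h ⟨Fin.natAdd a i, Fin.natAdd a j, Fin.natAdd a k, ?_, ?_, ?_, ?_⟩ <;>
        rw [Fin.lt_def] <;>
        simp only [natAdd_val, blk_natAdd] <;>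
        have e1 := Fin.lt_def.mp hij <;> have e2 := Fin.lt_def.mp hjk <;>
        have e3 := Fin.lt_def.mp h1 <;> have e4 := Fin.lt_def.mp h2 <;> omega
  · rintro ⟨hL, hR⟩ ⟨i, j, k, hij, hjk, h1, h2⟩
    rcases fin_add_cases i with ⟨i', rfl⟩ | ⟨i', rfl⟩ <;>
      rcases fin_add_cases j with ⟨j', rfl⟩ | ⟨j', rfl⟩ <;>
      rcases fin_add_cases k with ⟨k', rfl⟩ | ⟨k', rfl⟩ <;>
      simp only [blk_castAdd, blk_natAdd] at h1 h2 <;>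
      rw [Fin.lt_def] at hij hjk h1 h2 <;>
      simp only [castAdd_val, natAdd_val] at hij hjk h1 h2
    · exact hL ⟨i', j', k', Fin.lt_def.mpr hij, Fin.lt_def.mpr hjk,
        Fin.lt_def.mpr h1, Fin.lt_def.mpr h2⟩
    · exact absurd h1 (by have := (σL i').isLt; omega)
    · exact absurd hjk (by have := k'.isLt; omega)
    · exact absurd h1 (by have := (σL i').isLt; omega)
    · exact absurd hij (by have := j'.isLt; omega)
    · exact absurd hij (by have := j'.isLt; omega)
    · exact absurd hjk (by have := k'.isLt; omega)
    · exact hR ⟨i', j', k', Fin.lt_def.mpr (by omega), Fin.lt_def.mpr (by omega),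
        Fin.lt_def.mpr (by omega), Fin.lt_def.mpr (by omega)⟩

lemma blockAt_blk {a b : ℕ} (σL : Equiv.Perm (Fin a)) (σR : Equiv.Perm (Fin b)) :
    BlockAt a (blk σL σR) := by
  intro x y hx hy
  rcases fin_add_cases x with ⟨i, rfl⟩ | ⟨i, rfl⟩
  · rcases fin_add_cases y with ⟨j, rfl⟩ | ⟨j, rfl⟩
    · exact absurd hy (by simp only [castAdd_val]; have := j.isLt; omega)
    · rw [blk_castAdd, blk_natAdd, Fin.lt_def]
      simp only [castAdd_val, natAdd_val]
      have := (σL i).isLt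
      omega
  · exact absurd hx (by simp only [natAdd_val]; omega)

lemma blk_inj {a b : ℕ} : Function.Injective
    (fun x : Equiv.Perm (Fin a) × Equiv.Perm (Fin b) => blk x.1 x.2) := by
  rintro ⟨σL, σR⟩ ⟨σL', σR'⟩ h
  simp only at h
  have hL : σL = σL' := by
    apply Equiv.ext; intro i
    have this : blk σL σR (Fin.castAdd b i) = blk σL' σR' (Fin.castAdd b i) := by rw [h]
    rw [blk_castAdd, blk_castAdd] at this
    exact Fin.castAdd_injective a b this
  have hR : σR = σR' := by
    apply Equiv.ext; intro j
    have this : blk σL σR (Fin.natAdd a j) = blk σL' σR' (Fin.natAdd a j) := by rw [h]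
    rw [blk_natAdd, blk_natAdd] at this
    have h2 := congrArg Fin.val this
    simp only [natAdd_val] at h2
    exact Fin.ext (by omega)
  simp [hL, hR]

lemma exists_blk {a b : ℕ} (σ : Equiv.Perm (Fin (a+b))) (hσ : BlockAt a σ) :
    ∃ σL σR, blk σL σR = σ := by
  have key : ∀ i : Fin a, (σ (Fin.castAdd b i)).val < a := by
    intro i
    by_contra hc
    push_neg at hc
    have hcard := Finset.card_le_card_of_injOn (s := (Finset.univ : Finset (Fin b))) (t := Finset.Ioi (σ (Fin.castAdd b i))) (fun j : Fin b => σ (Fin.natAdd a j))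
      (fun j _ => Finset.mem_Ioi.mpr (hσ (Fin.castAdd b i) (Fin.natAdd a j) i.isLt (by simp only [natAdd_val]; omega)))
      (fun u _ v _ h => by
        have h2 := congrArg Fin.val (σ.injective h)
        simp only [natAdd_val] at h2
        exact Fin.ext (by omega))
    rw [Fin.card_Ioi, Finset.card_univ, Fintype.card_fin] at hcard
    have := (σ (Fin.castAdd b i)).isLt
    omega
  have key2 : ∀ j : Fin b, a ≤ (σ (Fin.natAdd a j)).val := by
    intro j
    by_contra hc
    push_neg at hc
    have hcard := Finset.card_le_card_of_injOn (s := (Finset.univ : Finset (Fin a))) (t := Finset.Iio (σ (Fin.natAdd a j))) (fun i : Fin a => σ (Fin.castAdd b i))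
      (fun i _ => Finset.mem_Iio.mpr (hσ (Fin.castAdd b i) (Fin.natAdd a j) i.isLt (by simp only [natAdd_val]; omega)))
      (fun u _ v _ h => Fin.castAdd_injective a b (σ.injective h))
    rw [Fin.card_Iio, Finset.card_univ, Fintype.card_fin] at hcard
    omega
  have hLinj : Function.Injective
      (fun i : Fin a => (⟨(σ (Fin.castAdd b i)).val, key i⟩ : Fin a)) := by
    intro u v h
    simp only [Fin.mk.injEq] at h
    exact Fin.castAdd_injective a b (σ.injective (Fin.ext h))
  have hRinj : Function.Injective
      (fun j : Fin b => (⟨(σ (Fin.natAdd a j)).val - a, by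
        have := (σ (Fin.natAdd a j)).isLt; have := key2 j; omega⟩ : Fin b)) := by
    intro u v h
    simp only [Fin.mk.injEq] at h
    have h2 := h
    have hu := key2 u
    have hv := key2 v
    have h3 : σ (Fin.natAdd a u) = σ (Fin.natAdd a v) := Fin.ext (by omega)
    have h4 := congrArg Fin.val (σ.injective h3)
    simp only [natAdd_val] at h4
    exact Fin.ext (by omega)
  refine ⟨Equiv.ofBijective _ (Finite.injective_iff_bijective.mp hLinj),
    Equiv.ofBijective _ (Finite.injective_iff_bijective.mp hRinj), ?_⟩
  apply Equiv.ext
  intro x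
  rcases fin_add_cases x with ⟨i, rfl⟩ | ⟨j, rfl⟩
  · rw [blk_castAdd]
    exact Fin.ext rfl
  · rw [blk_natAdd]
    refine Fin.ext ?_
    have := key2 j
    simp only [natAdd_val, Equiv.ofBijective_apply]
    omega

open scoped Classical

/-- Weighted count of 231-avoiding permutations. -/
noncomputable def avoidW (q : ℝ) (n : ℕ) : ℝ :=
  ∑ σ : Equiv.Perm (Fin n), if AvoidsPattern σ p231 then q ^ invCount σ else 0

lemma invCount_zero (σ : Equiv.Perm (Fin 0)) : invCount σ = 0 := by
  simp [invCount]

lemma avoids_zero {k : ℕ} (σ : Equiv.Perm (Fin 0)) (τ : Equiv.Perm (Fin (k+1))) :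
    AvoidsPattern σ τ := by
  rintro ⟨f, -, -⟩
  exact (f 0).elim0

lemma avoidW_zero (q : ℝ) : avoidW q 0 = 1 := by
  rw [avoidW]
  rw [Fintype.sum_subsingleton _ (Equiv.refl (Fin 0))]
  rw [if_pos (avoids_zero _ p231), invCount_zero, pow_zero]

lemma mallowsZ_zero (q : ℝ) : mallowsZ 0 q = 1 := by
  rw [mallowsZ, Fintype.sum_subsingleton _ (Equiv.refl (Fin 0)), invCount_zero, pow_zero]

lemma sum_blockAt (q : ℝ) (a b : ℕ) :
    (∑ σ : Equiv.Perm (Fin (a+b)),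
        if AvoidsPattern σ p231 ∧ BlockAt a σ then q ^ invCount σ else 0)
      = avoidW q a * avoidW q b := by
  have hstep : (∑ σ : Equiv.Perm (Fin (a+b)),
        if AvoidsPattern σ p231 ∧ BlockAt a σ then q ^ invCount σ else 0)
      = ∑ x : Equiv.Perm (Fin a) × Equiv.Perm (Fin b),
          (if AvoidsPattern x.1 p231 then q ^ invCount x.1 else 0) *
          (if AvoidsPattern x.2 p231 then q ^ invCount x.2 else 0) := by
    refine (Finset.sum_of_injOn (fun x => blk x.1 x.2) (fun x _ y _ h => blk_inj h)
      (fun x _ => Finset.mem_coe.mpr (Finset.mem_univ _)) ?_ ?_).symm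
    · intro σ _ hσ
      rw [if_neg]
      rintro ⟨-, hblock⟩
      obtain ⟨σL, σR, hs⟩ := exists_blk σ hblock
      exact hσ ⟨(σL, σR), Finset.mem_coe.mpr (Finset.mem_univ _), hs⟩
    · rintro ⟨σL, σR⟩ -
      simp only
      rw [invCount_blk, pow_add]
      by_cases h1 : AvoidsPattern σL p231 <;> by_cases h2 : AvoidsPattern σR p231
      · rw [if_pos h1, if_pos h2, if_pos ⟨(avoids_blk σL σR).mpr ⟨h1, h2⟩, blockAt_blk σL σR⟩]
      · rw [if_pos h1, if_neg h2, mul_zero, if_neg]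
        rintro ⟨hav, -⟩
        exact h2 ((avoids_blk σL σR).mp hav).2
      · rw [if_neg h1, if_pos h2, zero_mul, if_neg]
        rintro ⟨hav, -⟩
        exact h1 ((avoids_blk σL σR).mp hav).1
      · rw [if_neg h1, if_neg h2, mul_zero, if_neg]
        rintro ⟨hav, -⟩
        exact h1 ((avoids_blk σL σR).mp hav).1
  rw [hstep, Fintype.sum_prod_type, avoidW, avoidW, Finset.sum_mul_sum]

lemma sum_blockAt' (q : ℝ) (m c : ℕ) (hc : c ≤ m) :
    (∑ σ : Equiv.Perm (Fin m),
        if AvoidsPattern σ p231 ∧ BlockAt c σ then q ^ invCount σ else 0)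
      = avoidW q c * avoidW q (m - c) := by
  obtain ⟨b, rfl⟩ : ∃ b, m = c + b := ⟨m - c, by omega⟩
  rw [Nat.add_sub_cancel_left]
  exact sum_blockAt q c b

lemma avoidW_succ (q : ℝ) (m : ℕ) :
    avoidW q (m+1) = ∑ p : Fin (m+1),
      q ^ (m - p.val) * (avoidW q p.val * avoidW q (m - p.val)) := by
  rw [avoidW, ← Fintype.sum_bijective (fun x : Fin (m+1) × Equiv.Perm (Fin m) => ext1 x.1 x.2)
    ext1_bijective
    (fun x => if AvoidsPattern (ext1 x.1 x.2) p231 then q ^ invCount (ext1 x.1 x.2) else 0)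
    _ (fun x => rfl), Fintype.sum_prod_type]
  refine Finset.sum_congr rfl (fun p _ => ?_)
  have hsum : ∀ σ : Equiv.Perm (Fin m),
      (if AvoidsPattern (ext1 p σ) p231 then q ^ invCount (ext1 p σ) else 0)
      = q ^ (m - p.val) * (if AvoidsPattern σ p231 ∧ BlockAt p.val σ then q ^ invCount σ else 0) := by
    intro σ
    rw [invCount_ext1]
    by_cases h : AvoidsPattern σ p231 ∧ BlockAt p.val σ
    · rw [if_pos ((avoids_ext1 p σ).mpr h), if_pos h, pow_add, mul_comm]
    · rw [if_neg (fun hc => h ((avoids_ext1 p σ).mp hc)), if_neg h, mul_zero]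
  rw [Finset.sum_congr rfl (fun σ _ => hsum σ), ← Finset.mul_sum,
    sum_blockAt' q m p.val (Nat.lt_succ_iff.mp p.isLt)]

lemma mallowsZ_succ (q : ℝ) (m : ℕ) :
    mallowsZ (m+1) q = (∑ p : Fin (m+1), q ^ (m - p.val)) * mallowsZ m q := by
  rw [mallowsZ, ← Fintype.sum_bijective (fun x : Fin (m+1) × Equiv.Perm (Fin m) => ext1 x.1 x.2)
    ext1_bijective (fun x => q ^ invCount (ext1 x.1 x.2)) _ (fun x => rfl),
    Fintype.sum_prod_type, Finset.sum_mul]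
  refine Finset.sum_congr rfl (fun p _ => ?_)
  rw [mallowsZ, Finset.mul_sum]
  refine Finset.sum_congr rfl (fun σ _ => ?_)
  rw [invCount_ext1, pow_add, mul_comm]

lemma mallowsZ_pos (q : ℝ) (hq : 0 < q) (n : ℕ) : 0 < mallowsZ n q := by
  rw [mallowsZ]
  refine Finset.sum_pos (fun σ _ => pow_pos hq _) ⟨Equiv.refl _, Finset.mem_univ _⟩

lemma wq_eq_Z (q : ℝ) : ∀ n, wq q n = (1-q)^n * mallowsZ n q := by
  intro n
  induction n with
  | zero => simp [wq, mallowsZ_zero]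
  | succ m ih =>
    have hw : wq q (m+1) = wq q m * (1 - q^(m+1)) :=
      Finset.prod_Icc_succ_top (by omega) _
    have hgeom : (1 - q) * (∑ p : Fin (m+1), q ^ (m - p.val)) = 1 - q^(m+1) := by
      have h1 : (∑ p : Fin (m+1), q ^ (m - p.val)) = ∑ i ∈ Finset.range (m+1), q ^ i := by
        rw [Fin.sum_univ_eq_sum_range (fun i => q ^ (m - i)) (m+1), ← Finset.sum_range_reflect]
        refine Finset.sum_congr rfl (fun i hi => ?_)
        rw [Finset.mem_range] at hi
        congr 1
        omega
      rw [h1]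
      linear_combination (-1 : ℝ) * geom_sum_mul q (m+1)
    rw [hw, ih, mallowsZ_succ, ← hgeom]
    ring

lemma wq_pos (q : ℝ) (hq : q ∈ Set.Ioo (0:ℝ) 1) (n : ℕ) : 0 < wq q n := by
  refine Finset.prod_pos (fun l hl => ?_)
  have h1 : q ^ l < 1 := pow_lt_one₀ (le_of_lt hq.1) hq.2 (by
    rw [Finset.mem_Icc] at hl; omega)
  linarith

lemma avoidProb_eq_231 (q : ℝ) (n : ℕ) :
    avoidProb n q p231 = avoidW q n / mallowsZ n q := by
  rw [avoidProb, avoidW, Finset.sum_div]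
  refine Finset.sum_congr rfl (fun σ _ => ?_)
  rw [mallowsP]
  split_ifs
  · rfl
  · exact (zero_div _).symm

lemma rec231 (q : ℝ) (hq : q ∈ Set.Ioo (0:ℝ) 1) (n : ℕ) (hn : 1 ≤ n) :
    avoidProb n q p231 = (1 - q) * ∑ k ∈ Finset.Icc 1 n,
      q ^ (k - 1) * (wq q (k - 1) * wq q (n - k) / wq q n) *
        avoidProb (k - 1) q p231 * avoidProb (n - k) q p231 := by
  obtain ⟨m, rfl⟩ : ∃ m, n = m + 1 := ⟨n - 1, by omega⟩
  have hq0 := hq.1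
  have h1q : (0:ℝ) < 1 - q := by linarith [hq.2]
  have hZ : ∀ j, mallowsZ j q ≠ 0 := fun j => ne_of_gt (mallowsZ_pos q hq0 j)
  have h1q' : (1:ℝ) - q ≠ 0 := ne_of_gt h1q
  rw [avoidProb_eq_231, avoidW_succ, Finset.sum_div,
    Fin.sum_univ_eq_sum_range (fun i => q ^ (m - i) * (avoidW q i * avoidW q (m - i)) / mallowsZ (m+1) q) (m+1),
    ← Finset.sum_range_reflect]
  rw [Finset.mul_sum, ← Finset.Ico_add_one_right_eq_Icc, Finset.sum_Ico_eq_sum_range]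
  refine Finset.sum_congr (by norm_num) (fun j hj => ?_)
  rw [Finset.mem_range] at hj
  have hj' : j ≤ m := by omega
  have e1 : m + 1 - 1 - j = m - j := by omega
  have e2 : m - (m - j) = j := by omega
  have e3 : 1 + j - 1 = j := by omega
  have e4 : m + 1 - (1 + j) = m - j := by omega
  rw [e1, e2, e3, e4]
  rw [avoidProb_eq_231, avoidProb_eq_231, wq_eq_Z, wq_eq_Z, wq_eq_Z]
  have hpow2 : ((1:ℝ) - q)^j * (1 - q)^(m - j) = (1 - q)^m := by
    rw [← pow_add]
    congr 1
    omega
  have hZ1 := hZ (m+1)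
  have hZ2 := hZ j
  have hZ3 := hZ (m - j)
  have hp1 : ((1:ℝ) - q)^(m+1) ≠ 0 := pow_ne_zero _ h1q'
  have hp2 : ((1:ℝ) - q)^j ≠ 0 := pow_ne_zero _ h1q'
  have hp3 : ((1:ℝ) - q)^(m - j) ≠ 0 := pow_ne_zero _ h1q'
  field_simp
  ring_nf
  rw [← hpow2]
  ring

lemma avoidProb_p312_eq (q : ℝ) (n : ℕ) :
    avoidProb n q p312 = avoidProb n q p231 := by
  rw [avoidProb, avoidProb]
  refine Fintype.sum_equiv (Equiv.inv (Equiv.Perm (Fin n))) _ _ (fun σ => ?_)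
  simp only [Equiv.inv_apply]
  by_cases h : AvoidsPattern σ p312
  · rw [if_pos h, if_pos ((avoids312_iff_inv σ).mp h), mallowsP, mallowsP, invCount_inv]
  · rw [if_neg h, if_neg (fun hc => h ((avoids312_iff_inv σ).mpr hc))]

lemma avoidProb_zero' (q : ℝ) (τ : Equiv.Perm (Fin 3)) : avoidProb 0 q τ = 1 := by
  rw [avoidProb, Fintype.sum_subsingleton _ (Equiv.refl (Fin 0)),
    if_pos (avoids_zero _ τ), mallowsP, invCount_zero, mallowsZ_zero, pow_zero]
  norm_num

end Stmt9Aux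

open Stmt9Aux in
/-- Recursion for `d_n = P_n^q(S_n(312))` (and likewise for `231`). -/
theorem stmt9 (q : ℝ) (hq : q ∈ Set.Ioo (0:ℝ) 1) (τ : Equiv.Perm (Fin 3))
    (hτ : τ = p312 ∨ τ = p231) :
    avoidProb 0 q τ = 1 ∧
    ∀ n : ℕ, 1 ≤ n →
      avoidProb n q τ = (1 - q) * ∑ k ∈ Finset.Icc 1 n,
        q ^ (k - 1) * (wq q (k - 1) * wq q (n - k) / wq q n) *
          avoidProb (k - 1) q τ * avoidProb (n - k) q τ := by
  refine ⟨avoidProb_zero' q τ, fun n hn => ?_⟩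
  rcases hτ with rfl | rfl
  · rw [avoidProb_p312_eq, rec231 q hq n hn]
    refine congrArg _ (Finset.sum_congr rfl (fun k _ => ?_))
    rw [avoidProb_p312_eq, avoidProb_p312_eq]
  · exact rec231 q hq n hn
end
end

section
/- If σ ∈ S_n avoids the pattern 213 and σ(k) = 1, then {σ(1),...,σ(k-1)} = {n-k+2,...,n}. -/
open Finset Filter Topology

noncomputable section

/-- If `σ` avoids `213` and the value `1` (i.e. `0` in 0-indexed terms) is at position `k`,
then the values before position `k` are exactly `{n-k+2, …, n}` (1-indexed), i.e. the
0-indexed values `v` with `v ≥ n - k` (where `k` is the 0-indexed position). -/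
theorem stmt12 (n : ℕ) (σ : Equiv.Perm (Fin n)) (h : AvoidsPattern σ p213)
    (k : Fin n) (hk : (σ k).val = 0) :
    (Finset.univ.filter (fun i : Fin n => i < k)).image σ
      = Finset.univ.filter (fun v : Fin n => n - k.val ≤ v.val) := by
  have cardIio : ∀ b : Fin n, (univ.filter (fun x : Fin n => x < b)).card = b.val := by
    intro b
    have : univ.filter (fun x : Fin n => x < b) = Iio b := by ext x; simp
    rw [this, Fin.card_Iio]
  have hmin : ∀ i : Fin n, i ≠ k → σ k < σ i := by
    intro i hi
    have h1 : σ i ≠ σ k := fun he => hi (σ.injective he)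
    have h2 : (σ i).val ≠ 0 := by rw [← hk]; exact fun he => h1 (Fin.ext he)
    exact Fin.lt_def.mpr (by omega)
  have key : ∀ i l : Fin n, i < k → k < l → σ l < σ i := by
    intro i l hik hkl
    by_contra hcon
    push_neg at hcon
    have hne : σ i ≠ σ l := fun he => absurd (σ.injective he) (Fin.ne_of_lt (lt_trans hik hkl))
    have hil : σ i < σ l := lt_of_le_of_ne hcon hne
    have h1 : σ k < σ i := hmin i (Fin.ne_of_lt hik)
    have h2 : σ k < σ l := hmin l (Fin.ne_of_gt hkl)
    apply h
    refine ⟨![i, k, l], ?_, ?_⟩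
    · intro a b hab
      have m0 : ∀ hh, (![i, k, l]) ⟨0, hh⟩ = i := fun _ => rfl
      have m1 : ∀ hh, (![i, k, l]) ⟨1, hh⟩ = k := fun _ => rfl
      have m2 : ∀ hh, (![i, k, l]) ⟨2, hh⟩ = l := fun _ => rfl
      fin_cases a <;> fin_cases b <;>
        simp only [m0, m1, m2] <;>
        first
          | exact absurd hab (lt_irrefl _)
          | exact absurd hab (by decide)
          | exact hik | exact hkl | exact lt_trans hik hkl
    · have e0 : ∀ hh, p213 ⟨0, hh⟩ = 1 := fun _ => rfl
      have e1 : ∀ hh, p213 ⟨1, hh⟩ = 0 := fun _ => rfl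
      have e2 : ∀ hh, p213 ⟨2, hh⟩ = 2 := fun _ => rfl
      have m0 : ∀ hh, (![i, k, l]) ⟨0, hh⟩ = i := fun _ => rfl
      have m1 : ∀ hh, (![i, k, l]) ⟨1, hh⟩ = k := fun _ => rfl
      have m2 : ∀ hh, (![i, k, l]) ⟨2, hh⟩ = l := fun _ => rfl
      intro a b
      fin_cases a <;> fin_cases b <;>
        simp only [e0, e1, e2, m0, m1, m2] <;>
        constructor <;> intro hh <;>
        first
          | exact h1 | exact h2 | exact hil
          | exact absurd hh (lt_irrefl _)
          | exact absurd hh (by decide)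
          | exact absurd hh (asymm h1)
          | exact absurd hh (asymm h2)
          | exact absurd hh (asymm hil)
          | decide
  have hsub : (univ.filter (fun i : Fin n => i < k)).image σ ⊆
      univ.filter (fun v : Fin n => n - k.val ≤ v.val) := by
    intro v hv
    simp only [mem_image, mem_filter, mem_univ, true_and] at hv ⊢
    obtain ⟨i, hik, rfl⟩ := hv
    have himg : (univ.filter (fun l : Fin n => k ≤ l)).image σ ⊆
        univ.filter (fun w : Fin n => w < σ i) := by
      intro w hw
      simp only [mem_image, mem_filter, mem_univ, true_and] at hw ⊢
      obtain ⟨l, hkl, rfl⟩ := hw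
      rcases eq_or_lt_of_le hkl with he | hlt
      · rw [← he]; exact hmin i (Fin.ne_of_lt hik)
      · exact key i l hik hlt
    have hc1 : (univ.filter (fun l : Fin n => k ≤ l)).card = n - k.val := by
      have hpn := Finset.card_filter_add_card_filter_not
        (s := (univ : Finset (Fin n))) (p := fun l : Fin n => k ≤ l)
      simp only [not_le] at hpn
      have h2 := cardIio k
      simp only [Finset.card_univ, Fintype.card_fin] at hpn
      have hkn : k.val < n := k.isLt
      omega
    have hc2 := cardIio (σ i)
    have hle := Finset.card_le_card himg
    rw [Finset.card_image_of_injective _ σ.injective, hc1, hc2] at hle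
    exact hle
  apply Finset.eq_of_subset_of_card_le hsub
  have hA : ((univ.filter (fun i : Fin n => i < k)).image σ).card = k.val := by
    rw [Finset.card_image_of_injective _ σ.injective, cardIio]
  have hB : (univ.filter (fun v : Fin n => n - k.val ≤ v.val)).card = k.val := by
    have himg : (univ.filter (fun v : Fin n => n - k.val ≤ v.val)).image Fin.val
        = Finset.Ico (n - k.val) n := by
      ext x
      simp only [mem_image, mem_filter, mem_univ, true_and, Finset.mem_Ico]
      constructor
      · rintro ⟨v, hv, rfl⟩; exact ⟨hv, v.isLt⟩
      · rintro ⟨h1, h2⟩; exact ⟨⟨x, h2⟩, h1, rfl⟩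
    have := congrArg Finset.card himg
    rw [Finset.card_image_of_injective _ Fin.val_injective, Nat.card_Ico] at this
    have hkn : k.val < n := k.isLt
    omega
  rw [hA, hB]
end
end

section
/- For q ∈ (0,1), lim_{n→∞} (P_n^q(S_n(123)))^{1/n²} = q^{1/4}. -/
open Finset Filter Topology

noncomputable section

def incCount {n : ℕ} (σ : Equiv.Perm (Fin n)) : ℕ :=
  (Finset.univ.filter (fun p : Fin n × Fin n => p.1 < p.2 ∧ σ p.1 < σ p.2)).card

lemma card_filter_val_lt (n k : ℕ) (hk : k ≤ n) :
    ((univ : Finset (Fin n)).filter fun i : Fin n => (i : ℕ) < k).card = k := by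
  have h : ((univ : Finset (Fin n)).filter fun i : Fin n => (i : ℕ) < k)
      = Finset.map (Fin.castLEEmb hk) univ := by
    ext i
    simp only [mem_filter, mem_univ, true_and, Finset.mem_map]
    constructor
    · intro h; exact ⟨⟨i, h⟩, by simp [Fin.castLEEmb, Fin.ext_iff]⟩
    · rintro ⟨j, rfl⟩; simpa using j.isLt
  simp [h]

lemma two_mul_card_lt (n : ℕ) :
    2 * ((univ : Finset (Fin n × Fin n)).filter fun p => p.1 < p.2).card = n * n - n := by
  have hbij : ((univ : Finset (Fin n × Fin n)).filter fun p => p.1 < p.2).card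
      = ((univ : Finset (Fin n × Fin n)).filter fun p => p.2 < p.1).card := by
    apply Finset.card_bij (fun p _ => p.swap)
    · intro p hp; simp at hp ⊢; exact hp
    · intro p hp q hq h
      have := (Prod.ext_iff.mp h)
      simp at this
      exact Prod.ext this.2 this.1
    · intro p hp; exact ⟨p.swap, by simpa using hp, by simp⟩
  have hdisj : Disjoint ((univ : Finset (Fin n × Fin n)).filter fun p => p.1 < p.2)
      ((univ : Finset (Fin n × Fin n)).filter fun p => p.2 < p.1) := by
    rw [Finset.disjoint_left]
    intro p hp hq
    simp at hp hq
    exact absurd (hp.trans hq) (lt_irrefl _)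
  have hunion : ((univ : Finset (Fin n × Fin n)).filter fun p => p.1 < p.2)
      ∪ ((univ : Finset (Fin n × Fin n)).filter fun p => p.2 < p.1)
      = (univ : Finset (Fin n)).offDiag := by
    rw [← Finset.filter_or]
    ext p
    simp only [Finset.mem_offDiag, mem_filter, mem_univ, true_and, Finset.mem_filter]
    constructor
    · rintro (h | h)
      · exact fun he => absurd he (ne_of_lt h)
      · exact fun he => absurd he (ne_of_gt h)
    · intro h
      rcases lt_or_gt_of_ne h with h | h
      · exact Or.inl h
      · exact Or.inr h
  have hcu := Finset.card_union_of_disjoint hdisj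
  rw [hunion, Finset.offDiag_card] at hcu
  simp only [Finset.card_univ, Fintype.card_fin] at hcu
  omega

lemma invCount_add_incCount {n : ℕ} (σ : Equiv.Perm (Fin n)) :
    2 * (invCount σ + incCount σ) = n * n - n := by
  rw [← two_mul_card_lt n]
  congr 1
  rw [invCount, incCount, ← Finset.card_union_of_disjoint]
  · congr 1
    rw [← Finset.filter_or]
    apply Finset.filter_congr
    intro p _
    constructor
    · rintro (⟨h1, h2⟩ | ⟨h1, h2⟩) <;> exact h1
    · intro h1
      rcases lt_or_gt_of_ne (fun he : σ p.1 = σ p.2 => absurd (σ.injective he) (ne_of_lt h1)) with h | h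
      · exact Or.inr ⟨h1, h⟩
      · exact Or.inl ⟨h1, h⟩
  · rw [Finset.disjoint_left]
    intro p hp hq
    simp only [mem_filter] at hp hq
    exact absurd (hp.2.2.trans hq.2.2) (lt_irrefl _)

lemma contains_of_triple {n : ℕ} (σ : Equiv.Perm (Fin n)) (a b c : Fin n)
    (hab : a < b) (hbc : b < c) (h1 : σ a < σ b) (h2 : σ b < σ c) :
    ContainsPattern σ (1 : Equiv.Perm (Fin 3)) := by
  refine ⟨![a, b, c], ?_, ?_⟩
  · intro i j hij
    fin_cases i <;> fin_cases j <;>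
      simp_all [Matrix.cons_val_zero, Matrix.cons_val_one] <;>
      first
        | exact hab | exact hbc | exact hab.trans hbc
        | exact absurd hij (by omega) | omega
  · intro i j
    simp only [Equiv.Perm.one_apply]
    fin_cases i <;> fin_cases j <;>
      simp [Matrix.cons_val_zero, Matrix.cons_val_one] <;>
      first
        | exact h1 | exact h2 | exact h1.trans h2
        | omega
        | (intro h; exact absurd h (by first | exact not_lt.mpr (le_of_lt h1) | exact not_lt.mpr (le_of_lt h2) | exact not_lt.mpr (le_of_lt (h1.trans h2)) | exact lt_irrefl _)) 

lemma incCount_le_of_avoids {n : ℕ} (σ : Equiv.Perm (Fin n))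
    (h : AvoidsPattern σ (1 : Equiv.Perm (Fin 3))) :
    4 * incCount σ ≤ n * n := by
  classical
  set A : Finset (Fin n) := univ.filter (fun i => ∃ j, i < j ∧ σ i < σ j) with hA
  have hsub : (Finset.univ.filter (fun p : Fin n × Fin n => p.1 < p.2 ∧ σ p.1 < σ p.2))
      ⊆ A ×ˢ Aᶜ := by
    intro p hp
    simp only [mem_filter, mem_univ, true_and] at hp
    rw [Finset.mem_product]
    constructor
    · simp only [hA, mem_filter, mem_univ, true_and]
      exact ⟨p.2, hp.1, hp.2⟩
    · simp only [Finset.mem_compl, hA, mem_filter, mem_univ, true_and]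
      rintro ⟨l, hl1, hl2⟩
      exact h (contains_of_triple σ p.1 p.2 l hp.1 hl1 hp.2 hl2)
  have hle : incCount σ ≤ A.card * Aᶜ.card := by
    rw [incCount]
    calc _ ≤ (A ×ˢ Aᶜ).card := Finset.card_le_card hsub
    _ = A.card * Aᶜ.card := Finset.card_product _ _
  have hcompl : Aᶜ.card = n - A.card := by
    rw [Finset.card_compl]; simp
  have hAn : A.card ≤ n := by
    calc A.card ≤ (univ : Finset (Fin n)).card := Finset.card_le_card (Finset.subset_univ _)
    _ = n := by simp
  rw [hcompl] at hle
  nlinarith [Nat.sub_add_cancel hAn, hle, sq_nonneg (2 * A.card - n : ℤ)]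


/-- witness permutation: two decreasing blocks -/
def wfun (n : ℕ) (i : Fin n) : Fin n :=
  if h : (i : ℕ) < (n + 1) / 2 then ⟨(n + 1) / 2 - 1 - i, by have := i.isLt; omega⟩
  else ⟨n - 1 - i + (n + 1) / 2, by have := i.isLt; omega⟩

lemma wfun_val (n : ℕ) (i : Fin n) : (wfun n i : ℕ) =
    if (i : ℕ) < (n + 1) / 2 then (n + 1) / 2 - 1 - i else n - 1 - i + (n + 1) / 2 := by
  unfold wfun; split <;> rfl

lemma wfun_invol (n : ℕ) (i : Fin n) : wfun n (wfun n i) = i := by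
  have hi := i.isLt
  apply Fin.ext
  by_cases h : (i : ℕ) < (n + 1) / 2
  · have h1 : (wfun n i : ℕ) = (n + 1) / 2 - 1 - i := by rw [wfun_val, if_pos h]
    have h2 : (wfun n i : ℕ) < (n + 1) / 2 := by omega
    rw [wfun_val, if_pos h2, h1]
    omega
  · have h1 : (wfun n i : ℕ) = n - 1 - i + (n + 1) / 2 := by rw [wfun_val, if_neg h]
    have h2 : ¬ (wfun n i : ℕ) < (n + 1) / 2 := by omega
    rw [wfun_val, if_neg h2, h1]
    omega

def wperm (n : ℕ) : Equiv.Perm (Fin n) :=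
  ⟨wfun n, wfun n, wfun_invol n, wfun_invol n⟩

lemma wperm_avoids (n : ℕ) : AvoidsPattern (wperm n) (1 : Equiv.Perm (Fin 3)) := by
  rintro ⟨f, hmono, hiff⟩
  set k := (n + 1) / 2 with hk
  have h01 : f 0 < f 1 := hmono (by decide)
  have h12 : f 1 < f 2 := hmono (by decide)
  have g01 : wperm n (f 0) < wperm n (f 1) := (hiff 0 1).mp (by decide)
  have g12 : wperm n (f 1) < wperm n (f 2) := (hiff 1 2).mp (by decide)
  have hv : ∀ i : Fin n, (wperm n i : ℕ) =
      if (i : ℕ) < k then k - 1 - i else n - 1 - i + k := fun i => wfun_val n i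
  have e0 := hv (f 0); have e1 := hv (f 1); have e2 := hv (f 2)
  have l01 : (f 0 : ℕ) < (f 1 : ℕ) := h01
  have l12 : (f 1 : ℕ) < (f 2 : ℕ) := h12
  have m01 : (wperm n (f 0) : ℕ) < (wperm n (f 1) : ℕ) := g01
  have m12 : (wperm n (f 1) : ℕ) < (wperm n (f 2) : ℕ) := g12
  have hn0 := (f 0).isLt
  have hn2 := (f 2).isLt
  rw [e0, e1] at m01
  rw [e1, e2] at m12
  split_ifs at m01 m12 <;> omega

lemma wperm_invCount (n : ℕ) : 4 * invCount (wperm n) ≤ n * n + n := by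
  classical
  set k := (n + 1) / 2 with hk
  have htot := invCount_add_incCount (wperm n)
  -- cross pairs are increasing
  have hsub : ((univ : Finset (Fin n)).filter fun i : Fin n => (i : ℕ) < k) ×ˢ
      ((univ : Finset (Fin n)).filter fun i : Fin n => ¬ (i : ℕ) < k)
      ⊆ (Finset.univ.filter (fun p : Fin n × Fin n => p.1 < p.2 ∧ wperm n p.1 < wperm n p.2)) := by
    intro p hp
    rw [Finset.mem_product] at hp
    simp only [mem_filter, mem_univ, true_and] at hp ⊢
    obtain ⟨h1, h2⟩ := hp
    have hb1 := (p.1).isLt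
    have hb2 := (p.2).isLt
    have e1 := wfun_val n p.1
    have e2 := wfun_val n p.2
    rw [if_pos h1] at e1
    rw [if_neg h2] at e2
    constructor
    · exact Fin.lt_def.mpr (by omega)
    · show wfun n p.1 < wfun n p.2
      exact Fin.lt_def.mpr (by omega)
  have hcard : k * (n - k) ≤ incCount (wperm n) := by
    have := Finset.card_le_card hsub
    rw [Finset.card_product, card_filter_val_lt n k (by omega)] at this
    have hc2 : ((univ : Finset (Fin n)).filter fun i : Fin n => ¬ (i : ℕ) < k).card = n - k := by
      have := Finset.card_filter_add_card_filter_not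
        (s := (univ : Finset (Fin n))) (p := fun i : Fin n => (i : ℕ) < k)
      rw [card_filter_val_lt n k (by omega)] at this
      simp only [Finset.card_univ, Fintype.card_fin] at this
      omega
    rw [hc2] at this
    exact this
  have hkbound : n * n - 1 ≤ 4 * (k * (n - k)) := by
    rcases Nat.even_or_odd n with ⟨m, hm⟩ | ⟨m, hm⟩ <;> subst hm
    · have hkm : k = m := by omega
      rw [hkm] at hcard ⊢
      have e : (m + m) * (m + m) = 4 * (m * (m + m - m)) := by
        have h2 : m + m - m = m := by omega
        rw [h2]; ring
      omega
    · have hkm : k = m + 1 := by omega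
      rw [hkm] at hcard ⊢
      have e : (2 * m + 1) * (2 * m + 1) = 4 * ((m + 1) * (2 * m + 1 - (m + 1))) + 1 := by
        have h2 : 2 * m + 1 - (m + 1) = m := by omega
        rw [h2]; ring
      omega
  omega

open scoped Classical in
def avoidNum (n : ℕ) (q : ℝ) : ℝ :=
  ∑ σ : Equiv.Perm (Fin n), if AvoidsPattern σ (1 : Equiv.Perm (Fin 3)) then q ^ invCount σ else 0

lemma invCount_one (n : ℕ) : invCount (1 : Equiv.Perm (Fin n)) = 0 := by
  rw [invCount]
  convert Finset.card_empty
  rw [Finset.filter_eq_empty_iff]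
  intro p _
  simp only [Equiv.Perm.one_apply]
  rintro ⟨h1, h2⟩
  exact absurd (h1.trans h2) (lt_irrefl _)

lemma mallowsZ_pos {q : ℝ} (hq0 : 0 < q) (n : ℕ) : 0 < mallowsZ n q :=
  Finset.sum_pos (fun σ _ => pow_pos hq0 _) ⟨1, Finset.mem_univ 1⟩

lemma mallowsZ_ge_one {q : ℝ} (hq0 : 0 < q) (n : ℕ) : 1 ≤ mallowsZ n q := by
  have h := Finset.single_le_sum (f := fun σ : Equiv.Perm (Fin n) => q ^ invCount σ)
    (fun σ _ => le_of_lt (pow_pos hq0 _)) (Finset.mem_univ 1)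
  rw [invCount_one, pow_zero] at h
  exact h

lemma mallowsZ_le {q : ℝ} (hq0 : 0 < q) (hq1 : q < 1) (n : ℕ) : mallowsZ n q ≤ (Nat.factorial n : ℝ) := by
  have h := Finset.sum_le_card_nsmul (Finset.univ : Finset (Equiv.Perm (Fin n)))
    (fun σ => q ^ invCount σ) 1 (fun σ _ => pow_le_one₀ (le_of_lt hq0) (le_of_lt hq1))
  simpa [mallowsZ, Finset.card_univ, Fintype.card_perm] using h

open scoped Classical in
lemma avoidProb_eq (q : ℝ) (n : ℕ) :
    avoidProb n q (1 : Equiv.Perm (Fin 3)) = avoidNum n q / mallowsZ n q := by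
  rw [avoidProb, avoidNum, Finset.sum_div]
  congr 1
  funext σ
  split
  · rw [mallowsP]
  · rw [zero_div]

open scoped Classical in
lemma avoidNum_nonneg {q : ℝ} (hq0 : 0 < q) (n : ℕ) : 0 ≤ avoidNum n q := by
  apply Finset.sum_nonneg
  intro σ _
  split
  · exact le_of_lt (pow_pos hq0 _)
  · exact le_refl 0

open scoped Classical in
lemma avoidNum_lower {q : ℝ} (hq0 : 0 < q) (hq1 : q < 1) (n : ℕ) :
    q ^ ((((n:ℝ))^2 + n) / 4) ≤ avoidNum n q := by
  have hmem := Finset.single_le_sum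
    (f := fun σ : Equiv.Perm (Fin n) =>
      if AvoidsPattern σ (1 : Equiv.Perm (Fin 3)) then q ^ invCount σ else 0)
    (fun σ _ => by
      split
      · exact le_of_lt (pow_pos hq0 _)
      · exact le_refl 0)
    (Finset.mem_univ (wperm n))
  rw [if_pos (wperm_avoids n)] at hmem
  refine le_trans ?_ hmem
  rw [← Real.rpow_natCast q (invCount (wperm n))]
  apply Real.rpow_le_rpow_of_exponent_ge hq0 (le_of_lt hq1)
  have h : (4 * invCount (wperm n) : ℝ) ≤ (n:ℝ) * n + n := by exact_mod_cast wperm_invCount n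
  push_cast at h ⊢
  nlinarith

open scoped Classical in
lemma avoidNum_upper {q : ℝ} (hq0 : 0 < q) (hq1 : q < 1) (n : ℕ) :
    avoidNum n q ≤ (Nat.factorial n : ℝ) * q ^ ((((n:ℝ))^2 - 2*n) / 4) := by
  have hb : ∀ σ : Equiv.Perm (Fin n),
      (if AvoidsPattern σ (1 : Equiv.Perm (Fin 3)) then q ^ invCount σ else 0)
        ≤ q ^ ((((n:ℝ))^2 - 2*n) / 4) := by
    intro σ
    split
    · next hav =>
      rw [← Real.rpow_natCast q (invCount σ)]
      apply Real.rpow_le_rpow_of_exponent_ge hq0 (le_of_lt hq1)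
      have h1 := invCount_add_incCount σ
      have h2 := incCount_le_of_avoids σ hav
      have h3 : n ≤ n * n := by
        rcases n with _ | m
        · simp
        · exact Nat.le_mul_of_pos_left _ (Nat.succ_pos m)
      have h4 : 4 * invCount σ + n * n + 2 * n ≥ 2 * (n * n) := by omega
      have : (2:ℝ) * (n * n) ≤ 4 * invCount σ + n * n + 2 * n := by exact_mod_cast h4
      push_cast at this ⊢
      nlinarith
    · exact le_of_lt (Real.rpow_pos_of_pos hq0 _)
  have h := Finset.sum_le_card_nsmul (Finset.univ : Finset (Equiv.Perm (Fin n)))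
    _ _ (fun σ _ => hb σ)
  rw [avoidNum]
  refine h.trans_eq ?_
  simp [Finset.card_univ, Fintype.card_perm, nsmul_eq_mul]

lemma avoidProb_lower {q : ℝ} (hq0 : 0 < q) (hq1 : q < 1) (n : ℕ) :
    q ^ ((((n:ℝ))^2 + n) / 4) / (Nat.factorial n : ℝ) ≤ avoidProb n q (1 : Equiv.Perm (Fin 3)) := by
  rw [avoidProb_eq]
  have hfac : (0:ℝ) < (Nat.factorial n : ℝ) := by exact_mod_cast Nat.factorial_pos n
  calc q ^ ((((n:ℝ))^2 + n) / 4) / (Nat.factorial n : ℝ)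
      ≤ q ^ ((((n:ℝ))^2 + n) / 4) / mallowsZ n q := by
        gcongr
        all_goals first
          | exact le_of_lt (Real.rpow_pos_of_pos hq0 _)
          | exact mallowsZ_pos hq0 n
          | exact mallowsZ_le hq0 hq1 n
    _ ≤ avoidNum n q / mallowsZ n q := by
        gcongr
        all_goals first
          | exact le_of_lt (mallowsZ_pos hq0 n)
          | exact avoidNum_lower hq0 hq1 n

lemma avoidProb_upper {q : ℝ} (hq0 : 0 < q) (hq1 : q < 1) (n : ℕ) :
    avoidProb n q (1 : Equiv.Perm (Fin 3)) ≤ (Nat.factorial n : ℝ) * q ^ ((((n:ℝ))^2 - 2*n) / 4) := by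
  rw [avoidProb_eq]
  calc avoidNum n q / mallowsZ n q ≤ avoidNum n q / 1 := by
        gcongr
        all_goals first
          | exact avoidNum_nonneg hq0 n
          | exact one_pos
          | exact mallowsZ_ge_one hq0 n
    _ = avoidNum n q := div_one _
    _ ≤ _ := avoidNum_upper hq0 hq1 n

lemma avoidProb_nonneg {q : ℝ} (hq0 : 0 < q) (n : ℕ) :
    0 ≤ avoidProb n q (1 : Equiv.Perm (Fin 3)) := by
  rw [avoidProb_eq]
  exact div_nonneg (avoidNum_nonneg hq0 n) (le_of_lt (mallowsZ_pos hq0 n))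

open Filter Topology

lemma tendsto_fac_rpow :
    Tendsto (fun n : ℕ => ((Nat.factorial n : ℝ)) ^ (((n:ℝ)^2)⁻¹)) atTop (𝓝 1) := by
  have hupper : Tendsto (fun n : ℕ => ((n:ℝ)) ^ (1 / (n:ℝ))) atTop (𝓝 1) :=
    tendsto_rpow_div.comp tendsto_natCast_atTop_atTop
  apply tendsto_of_tendsto_of_tendsto_of_le_of_le' tendsto_const_nhds hupper
  · filter_upwards with n
    have h1 : (1:ℝ) ≤ (Nat.factorial n : ℝ) := by exact_mod_cast Nat.one_le_iff_ne_zero.mpr (Nat.factorial_ne_zero n)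
    calc (1:ℝ) = 1 ^ (((n:ℝ)^2)⁻¹) := (Real.one_rpow _).symm
      _ ≤ _ := Real.rpow_le_rpow zero_le_one h1 (by positivity)
  · filter_upwards [eventually_ge_atTop 1] with n hn
    have hn0 : (0:ℝ) < (n:ℝ) := by exact_mod_cast hn
    have hfac : (Nat.factorial n : ℝ) ≤ ((n:ℝ)) ^ (n:ℕ) := by
      exact_mod_cast Nat.factorial_le_pow n
    calc (Nat.factorial n : ℝ) ^ (((n:ℝ)^2)⁻¹)
        ≤ (((n:ℝ)) ^ (n:ℕ)) ^ (((n:ℝ)^2)⁻¹) := by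
          apply Real.rpow_le_rpow (by positivity) hfac (by positivity)
      _ = ((n:ℝ)) ^ ((n:ℝ) * ((n:ℝ)^2)⁻¹) := by
          rw [← Real.rpow_natCast (n:ℝ) n, ← Real.rpow_mul (le_of_lt hn0)]
      _ = ((n:ℝ)) ^ (1 / (n:ℝ)) := by
          congr 1
          field_simp
  
lemma tendsto_q_rpow_comp {q : ℝ} (hq0 : 0 < q) {e : ℕ → ℝ} (he : Tendsto e atTop (𝓝 (1/4))) :
    Tendsto (fun n => q ^ e n) atTop (𝓝 (q ^ ((1:ℝ)/4))) := by
  have hrw : ∀ x : ℝ, q ^ x = Real.exp (Real.log q * x) := fun x => by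
    rw [Real.rpow_def_of_pos hq0]
  rw [show q ^ ((1:ℝ)/4) = Real.exp (Real.log q * (1/4)) from hrw _]
  simp only [hrw]
  exact (Real.continuous_exp.tendsto _).comp (he.const_mul _)

lemma tendsto_exp_low :
    Tendsto (fun n : ℕ => ((((n:ℝ))^2 + n) / 4) * (((n:ℝ)^2)⁻¹)) atTop (𝓝 (1/4)) := by
  have h : Tendsto (fun n : ℕ => 1/4 + (1/4) * (1/(n:ℝ))) atTop (𝓝 (1/4)) := by
    have := tendsto_one_div_atTop_nhds_zero_nat.const_mul (1/4 : ℝ)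
    have h2 := tendsto_const_nhds (x := (1/4 : ℝ)) (f := atTop (α := ℕ)) |>.add this
    simpa using h2
  apply h.congr'
  filter_upwards [eventually_ge_atTop 1] with n hn
  have hn0 : ((n:ℝ)) ≠ 0 := by
    have : (0:ℝ) < (n:ℝ) := by exact_mod_cast hn
    exact ne_of_gt this
  field_simp

lemma tendsto_exp_up :
    Tendsto (fun n : ℕ => ((((n:ℝ))^2 - 2*n) / 4) * (((n:ℝ)^2)⁻¹)) atTop (𝓝 (1/4)) := by
  have h : Tendsto (fun n : ℕ => 1/4 - (1/2) * (1/(n:ℝ))) atTop (𝓝 (1/4)) := by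
    have := tendsto_one_div_atTop_nhds_zero_nat.const_mul (1/2 : ℝ)
    have h2 := tendsto_const_nhds (x := (1/4 : ℝ)) (f := atTop (α := ℕ)) |>.sub this
    simpa using h2
  apply h.congr'
  filter_upwards [eventually_ge_atTop 1] with n hn
  have hn0 : ((n:ℝ)) ≠ 0 := by
    have : (0:ℝ) < (n:ℝ) := by exact_mod_cast hn
    exact ne_of_gt this
  field_simp
  ring

/-- `lim_{n→∞} (P_n^q(S_n(123)))^{1/n²} = q^{1/4}`; the pattern `123` is the identity
permutation of `Fin 3`. -/
theorem stmt15 (q : ℝ) (hq : q ∈ Set.Ioo (0:ℝ) 1) :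
    Tendsto (fun n : ℕ => (avoidProb n q (1 : Equiv.Perm (Fin 3))) ^ (((n : ℝ) ^ 2)⁻¹))
      atTop (𝓝 (q ^ ((1 : ℝ) / 4))) := by
  obtain ⟨hq0, hq1⟩ := hq
  have hfacpos : ∀ n : ℕ, (0:ℝ) < (Nat.factorial n : ℝ) := fun n => by
    exact_mod_cast Nat.factorial_pos n
  have hlowlim : Tendsto (fun n : ℕ =>
      (q ^ ((((n:ℝ))^2 + n) / 4) / (Nat.factorial n : ℝ)) ^ (((n:ℝ)^2)⁻¹))
      atTop (𝓝 (q ^ ((1:ℝ)/4))) := by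
    have heq : (fun n : ℕ =>
        (q ^ ((((n:ℝ))^2 + n) / 4) / (Nat.factorial n : ℝ)) ^ (((n:ℝ)^2)⁻¹))
        = fun n : ℕ => q ^ ((((((n:ℝ))^2 + n) / 4)) * (((n:ℝ)^2)⁻¹))
            / ((Nat.factorial n : ℝ)) ^ (((n:ℝ)^2)⁻¹) := by
      funext n
      rw [Real.div_rpow (by positivity) (by positivity), ← Real.rpow_mul (le_of_lt hq0)]
    rw [heq]
    have h := (tendsto_q_rpow_comp hq0 tendsto_exp_low).div tendsto_fac_rpow one_ne_zero
    simpa [Pi.div_def] using h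
  have huplim : Tendsto (fun n : ℕ =>
      ((Nat.factorial n : ℝ) * q ^ ((((n:ℝ))^2 - 2*n) / 4)) ^ (((n:ℝ)^2)⁻¹))
      atTop (𝓝 (q ^ ((1:ℝ)/4))) := by
    have heq : (fun n : ℕ =>
        ((Nat.factorial n : ℝ) * q ^ ((((n:ℝ))^2 - 2*n) / 4)) ^ (((n:ℝ)^2)⁻¹))
        = fun n : ℕ => ((Nat.factorial n : ℝ)) ^ (((n:ℝ)^2)⁻¹)
            * q ^ ((((((n:ℝ))^2 - 2*n) / 4)) * (((n:ℝ)^2)⁻¹)) := by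
      funext n
      rw [Real.mul_rpow (by positivity) (by positivity), ← Real.rpow_mul (le_of_lt hq0)]
    rw [heq]
    have h := tendsto_fac_rpow.mul (tendsto_q_rpow_comp hq0 tendsto_exp_up)
    simpa using h
  apply tendsto_of_tendsto_of_tendsto_of_le_of_le' hlowlim huplim
  · filter_upwards with n
    exact Real.rpow_le_rpow (by positivity) (avoidProb_lower hq0 hq1 n) (by positivity)
  · filter_upwards with n
    exact Real.rpow_le_rpow (avoidProb_nonneg hq0 n) (avoidProb_upper hq0 hq1 n) (by positivity)
end
end

section
/- Let q ∈ (0,1) and let X_1, X_2, ... be independent with P(X_j = m) = (1-q)q^m/(1-q^j) for 0 ≤ m ≤ j-1 (truncated geometric). Then for any indices i_1 < i_2 < ... < i_m, (∏_{j=1}^m (1-q^j)) · q^{m(m-1)/2}/Z_m(q) ≤ P(X_{i_1} < X_{i_2} < ... < X_{i_m}) ≤ q^{m(m-1)/2} / ((∏_{j=1}^m (1-q^j)) Z_m(q)), where Z_m(q) = ∏_{k=1}^m (1-q^k)/(1-q). -/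
open Finset MeasureTheory ProbabilityTheory

namespace Stmt16Aux

lemma nat_sum_tri (g : ℕ → ℕ) (m : ℕ) :
    ∑ j ∈ Finset.range m, ∑ k ∈ Finset.range (j + 1), g k
      = ∑ k ∈ Finset.range m, (m - k) * g k := by
  induction m with
  | zero => simp
  | succ n ih =>
    rw [Finset.sum_range_succ, ih, Finset.sum_range_succ (fun k => (n + 1 - k) * g k),
      Finset.sum_range_succ g]
    have h : ∑ k ∈ Finset.range n, (n + 1 - k) * g k
        = ∑ k ∈ Finset.range n, ((n - k) * g k + g k) := by
      refine Finset.sum_congr rfl fun k hk => ?_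
      have hk' : k < n := Finset.mem_range.mp hk
      have h1 : n + 1 - k = (n - k) + 1 := by omega
      rw [h1, add_mul, one_mul]
    have h2 : n + 1 - n = 1 := by omega
    rw [h, Finset.sum_add_distrib, h2, one_mul]
    omega

def psum (m : ℕ) (c : Fin m → ℕ) : Fin m → ℕ :=
  fun j => j.val + ∑ k ∈ Finset.range (j.val + 1), (if h : k < m then c ⟨k, h⟩ else 0)

lemma psum_inj (m : ℕ) : Function.Injective (psum m) := by
  intro c c' h
  have key : ∀ n (hn : n < m), c ⟨n, hn⟩ = c' ⟨n, hn⟩ := by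
    intro n
    induction n with
    | zero =>
      intro hn
      have h0 := congrFun h ⟨0, hn⟩
      simp only [psum, Fin.val_mk, zero_add, Finset.sum_range_one, dif_pos hn] at h0
      exact h0
    | succ n ih =>
      intro hn
      have hn' : n < m := by omega
      have h1 := congrFun h ⟨n + 1, hn⟩
      have h2 := congrFun h ⟨n, hn'⟩
      simp only [psum, Fin.val_mk] at h1 h2
      rw [Finset.sum_range_succ, Finset.sum_range_succ
        (fun k => if h : k < m then c' ⟨k, h⟩ else 0)] at h1
      rw [dif_pos hn, dif_pos hn] at h1
      omega
  funext j
  have := key j.val j.isLt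
  simpa using this

lemma sum_psum (m : ℕ) (c : Fin m → ℕ) :
    ∑ j : Fin m, psum m c j
      = m * (m - 1) / 2
        + ∑ k ∈ Finset.range m, (m - k) * (if h : k < m then c ⟨k, h⟩ else 0) := by
  simp only [psum]
  rw [Finset.sum_add_distrib]
  congr 1
  · rw [Fin.sum_univ_eq_sum_range (fun k => k) m, Finset.sum_range_id]
  · rw [Fin.sum_univ_eq_sum_range
      (fun n => ∑ k ∈ Finset.range (n + 1), (if h : k < m then c ⟨k, h⟩ else 0)) m,
      nat_sum_tri]

def fdiff (m : ℕ) (a : Fin m → ℕ) : Fin m → ℕ :=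
  fun j => if h : j.val = 0 then a j else a j - (a ⟨j.val - 1, by omega⟩ + 1)

lemma fdiff_le (m : ℕ) (a : Fin m → ℕ) (j : Fin m) : fdiff m a j ≤ a j := by
  unfold fdiff; split <;> omega

lemma psum_fdiff (m : ℕ) (a : Fin m → ℕ) (ha : StrictMono a) :
    psum m (fdiff m a) = a := by
  have key : ∀ n (hn : n < m), psum m (fdiff m a) ⟨n, hn⟩ = a ⟨n, hn⟩ := by
    intro n
    induction n with
    | zero =>
      intro hn
      simp [psum, fdiff, hn]
    | succ n ih =>
      intro hn
      have hn' : n < m := by omega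
      have hih := ih hn'
      simp only [psum, Fin.val_mk] at hih ⊢
      rw [Finset.sum_range_succ, dif_pos hn]
      have hd : fdiff m a ⟨n + 1, hn⟩ = a ⟨n + 1, hn⟩ - (a ⟨n, hn'⟩ + 1) := by
        simp [fdiff]
      have hmono : a ⟨n, hn'⟩ < a ⟨n + 1, hn⟩ := ha (by simp [Fin.mk_lt_mk])
      rw [hd]
      omega
  funext j
  have := key j.val j.isLt
  simpa using this

lemma Q_ub (q : ℝ) (hq0 : 0 < q) (hq1 : q < 1) (m : ℕ) (i : Fin m → ℕ)
    [DecidablePred fun a : Fin m → ℕ => StrictMono a] :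
    ∑ a ∈ (Fintype.piFinset fun j => Finset.range (i j)).filter (fun a => StrictMono a),
        q ^ (∑ j, a j)
      ≤ q ^ (m * (m - 1) / 2) / ∏ k ∈ Finset.Icc 1 m, (1 - q ^ k) := by
  classical
  set N := Finset.univ.sup i + 1 with hN
  set box := Fintype.piFinset (fun _ : Fin m => Finset.range N) with hbox
  have hqpow_lt1 : ∀ n : ℕ, 1 ≤ n → q ^ n < 1 := fun n hn => pow_lt_one₀ hq0.le hq1 (by omega)
  have hre : ∀ g : ℕ → ℝ, (∏ k : Fin m, g (m - (k:ℕ))) = ∏ k ∈ Finset.Icc 1 m, g k := by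
    intro g
    rw [Fin.prod_univ_eq_prod_range (fun k => g (m - k)) m]
    have h1 : ∏ k ∈ Finset.range m, g (m - k) = ∏ k ∈ Finset.range m, g (k + 1) := by
      rw [← Finset.prod_range_reflect (fun j => g (j + 1)) m]
      exact Finset.prod_congr rfl fun j hj => by
        have := Finset.mem_range.mp hj
        congr 1; omega
    rw [h1, ← Finset.Ico_add_one_right_eq_Icc, Finset.prod_Ico_eq_prod_range]
    exact Finset.prod_congr (by norm_num) fun j _ => by rw [add_comm]
  have hgeom : ∀ r : ℝ, 0 ≤ r → r < 1 → ∑ t ∈ Finset.range N, r ^ t ≤ 1 / (1 - r) := by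
    intro r h0 h1
    have h2 : (0:ℝ) < 1 - r := by linarith
    rw [geom_sum_eq (by linarith : r ≠ 1)]
    have h3 : (r ^ N - 1) / (r - 1) = (1 - r ^ N) / (1 - r) := by
      rw [← neg_sub 1 (r ^ N), ← neg_sub 1 r, neg_div_neg_eq]
    rw [h3, div_le_div_iff₀ h2 h2]
    nlinarith [pow_nonneg h0 N]
  have hsub : (Fintype.piFinset fun j => Finset.range (i j)).filter (fun a => StrictMono a)
      ⊆ box.image (psum m) := by
    intro a ha
    obtain ⟨hbox', hmono⟩ := Finset.mem_filter.mp ha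
    refine Finset.mem_image.mpr ⟨fdiff m a, ?_, psum_fdiff m a hmono⟩
    refine Fintype.mem_piFinset.mpr fun j => Finset.mem_range.mpr ?_
    have h1 : fdiff m a j ≤ a j := fdiff_le m a j
    have h2 : a j < i j := Finset.mem_range.mp (Fintype.mem_piFinset.mp hbox' j)
    have h3 : i j ≤ Finset.univ.sup i := Finset.le_sup (Finset.mem_univ j)
    omega
  calc ∑ a ∈ (Fintype.piFinset fun j => Finset.range (i j)).filter (fun a => StrictMono a),
        q ^ (∑ j, a j)
      ≤ ∑ a ∈ box.image (psum m), q ^ (∑ j, a j) :=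
        Finset.sum_le_sum_of_subset_of_nonneg hsub (fun _ _ _ => pow_nonneg hq0.le _)
    _ = ∑ c ∈ box, q ^ (∑ j, psum m c j) :=
        Finset.sum_image (fun c _ c' _ h => psum_inj m h)
    _ = ∑ c ∈ box, q ^ (m * (m - 1) / 2) * ∏ k : Fin m, (q ^ (m - (k:ℕ))) ^ (c k) := by
        refine Finset.sum_congr rfl fun c _ => ?_
        rw [sum_psum, pow_add]
        congr 1
        rw [← Fin.sum_univ_eq_sum_range
          (fun k => (m - k) * (if h : k < m then c ⟨k, h⟩ else 0)) m]
        rw [← Finset.prod_pow_eq_pow_sum]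
        refine Finset.prod_congr rfl fun k _ => ?_
        rw [dif_pos k.isLt]
        simp [pow_mul]
    _ = q ^ (m * (m - 1) / 2) * ∏ k : Fin m, ∑ t ∈ Finset.range N, (q ^ (m - (k:ℕ))) ^ t := by
        rw [← Finset.mul_sum]
        congr 1
        rw [Finset.prod_univ_sum]
    _ ≤ q ^ (m * (m - 1) / 2) * ∏ k : Fin m, 1 / (1 - q ^ (m - (k:ℕ))) := by
        refine mul_le_mul_of_nonneg_left ?_ (pow_nonneg hq0.le _)
        refine Finset.prod_le_prod (fun k _ => ?_) (fun k _ => ?_)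
        · exact Finset.sum_nonneg fun t _ => pow_nonneg (pow_nonneg hq0.le _) _
        · have hk : 1 ≤ m - (k:ℕ) := by have := k.isLt; omega
          exact hgeom _ (pow_nonneg hq0.le _) (hqpow_lt1 _ hk)
    _ = q ^ (m * (m - 1) / 2) / ∏ k ∈ Finset.Icc 1 m, (1 - q ^ k) := by
        rw [hre (fun k => 1 / (1 - q ^ k))]
        rw [Finset.prod_div_distrib, Finset.prod_const_one, mul_one_div]

end Stmt16Aux

/-- Two-sided bounds on the probability that independent truncated geometric random
variables `X_{i_1}, …, X_{i_m}` (with `P(X_j = m) = (1-q)q^m/(1-q^j)` for `0 ≤ m ≤ j-1`)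
are strictly increasing. Here `Z_m(q) = ∏_{k=1}^m (1-q^k)/(1-q)`. -/
theorem stmt16 (q : ℝ) (hq : q ∈ Set.Ioo (0:ℝ) 1)
    {Ω : Type*} [MeasurableSpace Ω] (μ : Measure Ω) [IsProbabilityMeasure μ]
    (X : ℕ → Ω → ℕ) (hmeas : ∀ j, Measurable (X j))
    (hind : iIndepFun X μ)
    (hdist : ∀ j : ℕ, 1 ≤ j → ∀ m : ℕ,
      (μ {ω | X j ω = m}).toReal = if m ≤ j - 1 then (1 - q) * q ^ m / (1 - q ^ j) else 0)
    (m : ℕ) (hm : 1 ≤ m) (i : Fin m → ℕ) (hi : StrictMono i) (hi1 : ∀ j, 1 ≤ i j) :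
    (∏ j ∈ Finset.Icc 1 m, (1 - q ^ j)) * (q ^ (m * (m - 1) / 2) /
        ∏ k ∈ Finset.Icc 1 m, (1 - q ^ k) / (1 - q))
      ≤ (μ {ω | StrictMono fun j : Fin m => X (i j) ω}).toReal ∧
    (μ {ω | StrictMono fun j : Fin m => X (i j) ω}).toReal
      ≤ q ^ (m * (m - 1) / 2) / ((∏ j ∈ Finset.Icc 1 m, (1 - q ^ j)) *
        ∏ k ∈ Finset.Icc 1 m, (1 - q ^ k) / (1 - q)) := by
  classical
  obtain ⟨hq0, hq1⟩ := hq
  have hiv : ∀ j : Fin m, j.val + 1 ≤ i j := by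
    have key : ∀ n (hn : n < m), n + 1 ≤ i ⟨n, hn⟩ := by
      intro n
      induction n with
      | zero => intro hn; exact hi1 _
      | succ n ih =>
        intro hn
        have hn' : n < m := by omega
        have h1 := ih hn'
        have h2 : i ⟨n, hn'⟩ < i ⟨n + 1, hn⟩ := hi (by simp [Fin.mk_lt_mk])
        omega
    intro j
    have := key j.val j.isLt
    simpa using this
  have hqpow_lt1 : ∀ n : ℕ, 1 ≤ n → q ^ n < 1 := fun n hn => pow_lt_one₀ hq0.le hq1 (by omega)
  have hden_pos : ∀ n : ℕ, 1 ≤ n → (0:ℝ) < 1 - q ^ n := fun n hn => by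
    linarith [hqpow_lt1 n hn]
  have h1mq : (0:ℝ) < 1 - q := by linarith
  have hp : ∀ (j : Fin m) (t : ℕ), (μ {ω | X (i j) ω = t}).toReal
      = if t < i j then (1 - q) * q ^ t / (1 - q ^ (i j)) else 0 := by
    intro j t
    rw [hdist (i j) (hi1 j) t]
    have := hi1 j
    split_ifs with h1 h2 h3 <;> first | rfl | omega
  have hnull : ∀ j : Fin m, μ {ω | ¬ X (i j) ω < i j} = 0 := by
    intro j
    have hsub : {ω | ¬ X (i j) ω < i j} ⊆ ⋃ t : ℕ, {ω | X (i j) ω = i j + t} := by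
      intro ω hω
      simp only [Set.mem_setOf_eq, not_lt] at hω
      exact Set.mem_iUnion.mpr ⟨X (i j) ω - i j, by simp; omega⟩
    refine measure_mono_null hsub (measure_iUnion_null fun t => ?_)
    have h0 := hp j (i j + t)
    rw [if_neg (by omega)] at h0
    rcases (ENNReal.toReal_eq_zero_iff _).mp h0 with h | h
    · exact h
    · exact absurd h (measure_ne_top μ _)
  -- independence product
  have hGprod : ∀ a : Fin m → ℕ,
      μ (⋂ j, {ω | X (i j) ω = a j}) = ∏ j : Fin m, μ {ω | X (i j) ω = a j} := by
    intro a
    set sets : ℕ → Set ℕ := fun n => {k | ∀ j : Fin m, i j = n → a j = k} with hsets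
    have hmeasset : ∀ n, n ∈ Finset.image i Finset.univ → MeasurableSet (sets n) :=
      fun n _ => MeasurableSet.of_discrete
    have h := hind.measure_inter_preimage_eq_mul (Finset.image i Finset.univ) hmeasset
    have hset_ij : ∀ j : Fin m, X (i j) ⁻¹' sets (i j) = {ω | X (i j) ω = a j} := by
      intro j
      ext ω
      simp only [Set.mem_preimage, hsets, Set.mem_setOf_eq]
      constructor
      · intro h'; exact (h' j rfl).symm
      · intro h' j' hj'
        have : j' = j := hi.injective hj'
        subst this; exact h'.symm
    have hL : (⋂ n ∈ Finset.image i Finset.univ, X n ⁻¹' sets n)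
        = ⋂ j, {ω | X (i j) ω = a j} := by
      rw [Finset.set_biInter_finset_image]
      simp only [Finset.mem_univ, Set.iInter_true]
      exact Set.iInter_congr hset_ij
    have hR : ∏ n ∈ Finset.image i Finset.univ, μ (X n ⁻¹' sets n)
        = ∏ j : Fin m, μ {ω | X (i j) ω = a j} := by
      rw [Finset.prod_image (fun j _ j' _ h' => hi.injective h')]
      exact Finset.prod_congr rfl fun j _ => by rw [hset_ij]
    rw [hL, hR] at h
    exact h
  -- decomposition
  have hdecomp : μ {ω | StrictMono fun j : Fin m => X (i j) ω}
      = ∑ a ∈ (Fintype.piFinset fun j => Finset.range (i j)).filter (fun a => StrictMono a),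
          μ (⋂ j, {ω | X (i j) ω = a j}) := by
    have hGmeas : ∀ a ∈ (Fintype.piFinset fun j => Finset.range (i j)).filter
        (fun a => StrictMono a), MeasurableSet (⋂ j, {ω | X (i j) ω = a j}) := by
      intro a _
      exact MeasurableSet.iInter fun j => (hmeas (i j)) (measurableSet_singleton (a j))
    have hdisj : (((Fintype.piFinset fun j => Finset.range (i j)).filter
        (fun a => StrictMono a) : Finset (Fin m → ℕ)) : Set (Fin m → ℕ)).PairwiseDisjoint
        (fun a => ⋂ j, {ω | X (i j) ω = a j}) := by
      intro a _ b _ hab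
      refine Set.disjoint_left.mpr fun ω hωa hωb => hab ?_
      funext j
      have h1 := Set.mem_iInter.mp hωa j
      have h2 := Set.mem_iInter.mp hωb j
      simp only [Set.mem_setOf_eq] at h1 h2
      omega
    have hUnion : μ (⋃ a ∈ (Fintype.piFinset fun j => Finset.range (i j)).filter
          (fun a => StrictMono a), ⋂ j, {ω | X (i j) ω = a j})
        = ∑ a ∈ (Fintype.piFinset fun j => Finset.range (i j)).filter
            (fun a => StrictMono a), μ (⋂ j, {ω | X (i j) ω = a j}) :=
      measure_biUnion_finset hdisj hGmeas
    refine le_antisymm ?_ ?_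
    · calc μ {ω | StrictMono fun j : Fin m => X (i j) ω}
          ≤ μ ((⋃ a ∈ (Fintype.piFinset fun j => Finset.range (i j)).filter
              (fun a => StrictMono a), ⋂ j, {ω | X (i j) ω = a j})
              ∪ ⋃ j, {ω | ¬ X (i j) ω < i j}) := by
            refine measure_mono fun ω hω => ?_
            by_cases hall : ∀ j, X (i j) ω < i j
            · left
              have hmem : (fun j => X (i j) ω) ∈ (Fintype.piFinset fun j =>
                  Finset.range (i j)).filter (fun a => StrictMono a) := by
                rw [Finset.mem_filter]
                exact ⟨Fintype.mem_piFinset.mpr fun j => Finset.mem_range.mpr (hall j), hω⟩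
              exact Set.mem_biUnion hmem (Set.mem_iInter.mpr fun j => rfl)
            · right
              push_neg at hall
              obtain ⟨j, hj⟩ := hall
              exact Set.mem_iUnion.mpr ⟨j, by simpa using hj⟩
        _ ≤ μ (⋃ a ∈ (Fintype.piFinset fun j => Finset.range (i j)).filter
              (fun a => StrictMono a), ⋂ j, {ω | X (i j) ω = a j})
              + μ (⋃ j, {ω | ¬ X (i j) ω < i j}) := measure_union_le _ _
        _ = ∑ a ∈ (Fintype.piFinset fun j => Finset.range (i j)).filter
              (fun a => StrictMono a), μ (⋂ j, {ω | X (i j) ω = a j}) := by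
            rw [measure_iUnion_null hnull, add_zero, hUnion]
    · rw [← hUnion]
      refine measure_mono fun ω hω => ?_
      simp only [Set.mem_iUnion] at hω
      obtain ⟨a, haT, hωa⟩ := hω
      have ha : StrictMono a := (Finset.mem_filter.mp haT).2
      have heq : (fun j => X (i j) ω) = a := by
        funext j
        exact Set.mem_iInter.mp hωa j
      show StrictMono fun j => X (i j) ω
      rw [heq]; exact ha
  -- toReal formula
  have htoReal : (μ {ω | StrictMono fun j : Fin m => X (i j) ω}).toReal
      = (∏ j : Fin m, ((1 - q) / (1 - q ^ (i j))))
        * ∑ a ∈ (Fintype.piFinset fun j => Finset.range (i j)).filter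
            (fun a => StrictMono a), q ^ (∑ j, a j) := by
    rw [hdecomp, ENNReal.toReal_sum (fun a _ => measure_ne_top μ _), Finset.mul_sum]
    refine Finset.sum_congr rfl fun a ha => ?_
    rw [hGprod a, ENNReal.toReal_prod]
    have hterm : ∀ j : Fin m, (μ {ω | X (i j) ω = a j}).toReal
        = ((1 - q) / (1 - q ^ (i j))) * q ^ (a j) := by
      intro j
      rw [hp j (a j), if_pos (Finset.mem_range.mp
        (Fintype.mem_piFinset.mp (Finset.mem_filter.mp ha).1 j))]
      rw [mul_div_right_comm]
    rw [Finset.prod_congr rfl (fun j _ => hterm j), Finset.prod_mul_distrib,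
      Finset.prod_pow_eq_pow_sum]
  -- Q bounds
  have hQ_nonneg : (0:ℝ) ≤ ∑ a ∈ (Fintype.piFinset fun j => Finset.range (i j)).filter
      (fun a => StrictMono a), q ^ (∑ j, a j) :=
    Finset.sum_nonneg fun a _ => pow_nonneg hq0.le _
  have hQ_lb : q ^ (m * (m - 1) / 2)
      ≤ ∑ a ∈ (Fintype.piFinset fun j => Finset.range (i j)).filter
          (fun a => StrictMono a), q ^ (∑ j, a j) := by
    have ha0 : (fun j : Fin m => (j : ℕ)) ∈ (Fintype.piFinset fun j =>
        Finset.range (i j)).filter (fun a => StrictMono a) := by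
      rw [Finset.mem_filter]
      constructor
      · exact Fintype.mem_piFinset.mpr fun j => Finset.mem_range.mpr (by have := hiv j; omega)
      · exact fun j j' h => h
    have h := Finset.single_le_sum (f := fun a : Fin m → ℕ => q ^ (∑ j, a j))
      (fun a _ => pow_nonneg hq0.le _) ha0
    have hsum : ∑ j : Fin m, (j : ℕ) = m * (m - 1) / 2 := by
      rw [Fin.sum_univ_eq_sum_range (fun k => k) m, Finset.sum_range_id]
    simpa [hsum] using h
  have hQ_ub := Stmt16Aux.Q_ub q hq0 hq1 m i
  -- Cprod bounds
  have hC_nonneg : (0:ℝ) ≤ ∏ j : Fin m, ((1 - q) / (1 - q ^ (i j))) :=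
    Finset.prod_nonneg fun j _ => div_nonneg h1mq.le (hden_pos (i j) (hi1 j)).le
  have hC_lb : (1 - q) ^ m ≤ ∏ j : Fin m, ((1 - q) / (1 - q ^ (i j))) := by
    have : ((1:ℝ) - q) ^ m = ∏ _j : Fin m, (1 - q) := by
      rw [Finset.prod_const, Finset.card_univ, Fintype.card_fin]
    rw [this]
    refine Finset.prod_le_prod (fun j _ => h1mq.le) (fun j _ => ?_)
    have hd := hden_pos (i j) (hi1 j)
    have hd1 : 1 - q ^ (i j) ≤ 1 := by
      have : (0:ℝ) ≤ q ^ (i j) := pow_nonneg hq0.le _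
      linarith
    calc 1 - q = (1 - q) / 1 := by ring
      _ ≤ (1 - q) / (1 - q ^ (i j)) := by gcongr
  have hprodIcc : ∏ j : Fin m, (1 - q ^ ((j:ℕ) + 1)) = ∏ k ∈ Finset.Icc 1 m, (1 - q ^ k) := by
    rw [Fin.prod_univ_eq_prod_range (fun k => 1 - q ^ (k + 1)) m,
      ← Finset.Ico_add_one_right_eq_Icc, Finset.prod_Ico_eq_prod_range]
    exact Finset.prod_congr (by norm_num) fun j _ => by rw [add_comm]
  have hC_ub : ∏ j : Fin m, ((1 - q) / (1 - q ^ (i j)))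
      ≤ (1 - q) ^ m / ∏ k ∈ Finset.Icc 1 m, (1 - q ^ k) := by
    have h1 : ∏ j : Fin m, ((1 - q) / (1 - q ^ (i j)))
        ≤ ∏ j : Fin m, ((1 - q) / (1 - q ^ ((j:ℕ) + 1))) := by
      refine Finset.prod_le_prod (fun j _ => div_nonneg h1mq.le
        (hden_pos (i j) (hi1 j)).le) (fun j _ => ?_)
      have hd1 := hden_pos ((j:ℕ) + 1) (by omega)
      have hpow : q ^ (i j) ≤ q ^ ((j:ℕ) + 1) :=
        pow_le_pow_of_le_one hq0.le hq1.le (hiv j)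
      gcongr
    have h2 : ∏ j : Fin m, ((1 - q) / (1 - q ^ ((j:ℕ) + 1)))
        = (1 - q) ^ m / ∏ k ∈ Finset.Icc 1 m, (1 - q ^ k) := by
      rw [Finset.prod_div_distrib, Finset.prod_const, Finset.card_univ, Fintype.card_fin,
        hprodIcc]
    linarith
  -- final algebra
  have hP1pos : (0:ℝ) < ∏ k ∈ Finset.Icc 1 m, (1 - q ^ k) :=
    Finset.prod_pos fun k hk => hden_pos k (Finset.mem_Icc.mp hk).1
  have hZ : ∏ k ∈ Finset.Icc 1 m, (1 - q ^ k) / (1 - q)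
      = (∏ k ∈ Finset.Icc 1 m, (1 - q ^ k)) / (1 - q) ^ m := by
    rw [Finset.prod_div_distrib, Finset.prod_const, Nat.card_Icc]
    norm_num
  set P1 := ∏ k ∈ Finset.Icc 1 m, (1 - q ^ k) with hP1
  set D := m * (m - 1) / 2 with hD
  constructor
  · have hgoal_eq : P1 * (q ^ D / (P1 / (1 - q) ^ m)) = (1 - q) ^ m * q ^ D := by
      field_simp
    rw [hZ, hgoal_eq, htoReal]
    exact mul_le_mul hC_lb hQ_lb (pow_nonneg hq0.le _) hC_nonneg
  · have hgoal_eq : q ^ D / (P1 * (P1 / (1 - q) ^ m))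
        = ((1 - q) ^ m / P1) * (q ^ D / P1) := by
      field_simp
    rw [hZ, hgoal_eq, htoReal]
    exact mul_le_mul hC_ub hQ_ub hQ_nonneg
      (div_nonneg (pow_nonneg h1mq.le _) hP1pos.le)
end

section
/- In the online geometric construction of a Mallows permutation σ ∈ S_n from independent truncated geometric variables X_1,...,X_n, the permutation σ avoids the pattern 123 if and only if the values X_j for the indices j with X_j ≠ j-1, listed in increasing order of j, form a strictly increasing sequence. -/
open Finset Filter Topology

noncomputable section

lemma filter_lt_card {n : ℕ} (j : Fin n) :
    (Finset.univ.filter (fun a : Fin n => a < j)).card = j.val := by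
  have : Finset.univ.filter (fun a : Fin n => a < j) = Finset.Iio j := by ext a; simp
  rw [this, Fin.card_Iio]

lemma xval_eq {n : ℕ} (σ : Equiv.Perm (Fin n)) (j : Fin n) :
    xval σ j = (Finset.univ.filter (fun a : Fin n => a < j ∧ σ⁻¹ j < σ⁻¹ a)).card := by
  unfold xval
  apply Finset.card_bij' (fun i _ => σ i) (fun a _ => σ⁻¹ a)
  · intro i hi
    simp only [mem_filter, mem_univ, true_and] at hi ⊢
    exact ⟨hi.2, by simpa using hi.1⟩
  · intro a ha
    simp only [mem_filter, mem_univ, true_and] at ha ⊢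
    exact ⟨ha.2, by simpa using ha.1⟩
  · intro i _; simp
  · intro a _; simp

lemma nonmin {n : ℕ} (σ : Equiv.Perm (Fin n)) (j : Fin n) (h : xval σ j ≠ j.val) :
    ∃ a, a < j ∧ σ⁻¹ a < σ⁻¹ j := by
  by_contra h'
  push_neg at h'
  apply h
  rw [xval_eq, ← filter_lt_card j]
  congr 1
  ext a
  simp only [mem_filter, mem_univ, true_and, and_iff_left_iff_imp]
  intro ha
  rcases lt_or_eq_of_le (h' a ha) with h1 | h1
  · exact h1
  · exact absurd (σ⁻¹.injective h1.symm) (ne_of_lt ha)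

lemma contains_iff {n : ℕ} (σ : Equiv.Perm (Fin n)) :
    ContainsPattern σ (1 : Equiv.Perm (Fin 3)) ↔
      ∃ p1 p2 p3 : Fin n, p1 < p2 ∧ p2 < p3 ∧ σ p1 < σ p2 ∧ σ p2 < σ p3 := by
  constructor
  · rintro ⟨f, hf, hiff⟩
    exact ⟨f 0, f 1, f 2, hf (by decide), hf (by decide),
      (hiff 0 1).mp (by decide), (hiff 1 2).mp (by decide)⟩
  · rintro ⟨p1, p2, p3, h12, h23, hv12, hv23⟩
    refine ⟨![p1, p2, p3], ?_, ?_⟩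
    · intro a b hab
      fin_cases a <;> fin_cases b <;> simp_all <;> first
        | exact h12 | exact h23 | exact h12.trans h23
        | exact absurd hab (by decide)
    · intro j k
      fin_cases j <;> fin_cases k <;>
        simp [Equiv.Perm.one_apply] <;> first
        | exact hv12 | exact hv23 | exact hv12.trans hv23
        | exact le_of_lt hv12 | exact le_of_lt hv23 | exact le_of_lt (hv12.trans hv23)
        | exact lt_irrefl _

/-- `σ` avoids `123` (the identity pattern) iff the insertion values `X_j` over the indices
`j` with `X_j ≠ j - 1` (0-indexed: `xval σ j ≠ j`), taken in increasing order of `j`,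
form a strictly increasing sequence. -/
theorem stmt17 (n : ℕ) (σ : Equiv.Perm (Fin n)) :
    AvoidsPattern σ (1 : Equiv.Perm (Fin 3)) ↔
      ∀ j k : Fin n, j < k → xval σ j ≠ j.val → xval σ k ≠ k.val →
        xval σ j < xval σ k := by
  constructor
  · intro hav j k hjk hj _
    obtain ⟨a, haj, hpa⟩ := nonmin σ j hj
    have hpos : σ⁻¹ k < σ⁻¹ j := by
      rcases lt_trichotomy (σ⁻¹ j) (σ⁻¹ k) with h | h | h
      · exfalso
        apply hav
        rw [contains_iff]
        exact ⟨σ⁻¹ a, σ⁻¹ j, σ⁻¹ k, hpa, h, by simpa using haj, by simpa using hjk⟩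
      · exact absurd (σ⁻¹.injective h) hjk.ne
      · exact h
    rw [xval_eq, xval_eq]
    have hjnot : j ∉ Finset.univ.filter (fun a : Fin n => a < j ∧ σ⁻¹ j < σ⁻¹ a) := by
      simp
    have hsub : insert j (Finset.univ.filter (fun a : Fin n => a < j ∧ σ⁻¹ j < σ⁻¹ a)) ⊆
        Finset.univ.filter (fun a : Fin n => a < k ∧ σ⁻¹ k < σ⁻¹ a) := by
      intro x hx
      rcases Finset.mem_insert.mp hx with rfl | hx
      · simp [hjk, hpos]; exact hpos
      · simp only [mem_filter, mem_univ, true_and] at hx ⊢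
        exact ⟨hx.1.trans hjk, hpos.trans hx.2⟩
    calc (Finset.univ.filter (fun a : Fin n => a < j ∧ σ⁻¹ j < σ⁻¹ a)).card
        < (insert j (Finset.univ.filter (fun a : Fin n => a < j ∧ σ⁻¹ j < σ⁻¹ a))).card := by
          rw [Finset.card_insert_of_notMem hjnot]; omega
      _ ≤ _ := Finset.card_le_card hsub
  · intro hC hcon
    classical
    rw [contains_iff] at hcon
    set P : ℕ → Prop := fun m => ∃ p1 p2 p3 : Fin n,
      p1 < p2 ∧ p2 < p3 ∧ σ p1 < σ p2 ∧ σ p2 < σ p3 ∧ (σ p3).val = m with hP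
    have hex : ∃ m, P m := by
      obtain ⟨p1, p2, p3, h12, h23, hv12, hv23⟩ := hcon
      exact ⟨(σ p3).val, p1, p2, p3, h12, h23, hv12, hv23, rfl⟩
    obtain ⟨p1, p2, p3, h12, h23, hv12, hv23, hm⟩ := Nat.find_spec hex
    -- σ p2 is not a left-to-right minimum
    have hcardlt : ∀ p q : Fin n, p < q → σ p < σ q → xval σ (σ q) ≠ (σ q).val := by
      intro p q hpq hvpq
      rw [xval_eq, ← filter_lt_card (σ q)]
      have hsub : Finset.univ.filter (fun a : Fin n => a < σ q ∧ σ⁻¹ (σ q) < σ⁻¹ a) ⊆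
          Finset.univ.filter (fun a : Fin n => a < σ q) := by
        intro x hx; simp only [mem_filter, mem_univ, true_and] at hx ⊢; exact hx.1
      have hmem : σ p ∈ Finset.univ.filter (fun a : Fin n => a < σ q) := by
        simp [hvpq]
      have hnot : σ p ∉ Finset.univ.filter (fun a : Fin n => a < σ q ∧ σ⁻¹ (σ q) < σ⁻¹ a) := by
        simp only [mem_filter, mem_univ, true_and, not_and]
        intro _
        simpa using not_lt.mpr hpq.le
      exact ne_of_lt (Finset.card_lt_card (Finset.ssubset_iff_of_subset hsub |>.mpr
        ⟨σ p, hmem, hnot⟩))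
    have hlt := hC (σ p2) (σ p3) hv23 (hcardlt p1 p2 h12 hv12)
      (hcardlt p1 p3 (h12.trans h23) (hv12.trans hv23))
    rw [xval_eq, xval_eq] at hlt
    have key : ∃ v : Fin n, σ p2 < v ∧ v < σ p3 ∧ p3 < σ⁻¹ v := by
      by_contra hno
      push_neg at hno
      refine absurd hlt (not_lt.mpr (Finset.card_le_card ?_))
      intro v hv
      simp only [mem_filter, mem_univ, true_and, Equiv.Perm.coe_inv, Equiv.symm_apply_apply] at hv ⊢
      rcases lt_trichotomy v (σ p2) with h | h | h
      · exact ⟨h, h23.trans hv.2⟩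
      · exfalso
        rw [h] at hv
        simp only [Equiv.Perm.coe_inv, Equiv.symm_apply_apply] at hv
        exact absurd (h23.trans hv.2) (lt_irrefl p2)
      · exact absurd hv.2 (not_lt.mpr (hno v h hv.1))
    obtain ⟨v, hv2, hv3, hpv⟩ := key
    have hPv : P v.val := ⟨p1, p2, σ⁻¹ v, h12, h23.trans hpv, hv12, by simpa using hv2,
      by simp⟩
    exact Nat.find_min hex (hm ▸ hv3) hPv
end
end

section
/- For q ∈ (0,1), lim_{n→∞} (P_n^q(S_n(132)))^{1/n} = lim_{n→∞} (P_n^q(S_n(213)))^{1/n} = 1-q. -/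
open Finset Filter Topology

noncomputable section

namespace Stmt18Aux

variable {n : ℕ}

/-- Lehmer code of a permutation. -/
def code (σ : Equiv.Perm (Fin n)) (i : Fin n) : ℕ :=
  (Finset.univ.filter (fun j : Fin n => i < j ∧ σ j < σ i)).card

lemma invCount_eq_sum_code (σ : Equiv.Perm (Fin n)) :
    invCount σ = ∑ i : Fin n, code σ i := by
  classical
  rw [invCount, Finset.card_filter, Fintype.sum_prod_type]
  refine Finset.sum_congr rfl fun i _ => ?_
  rw [code, Finset.card_filter]

lemma code_lt (σ : Equiv.Perm (Fin n)) (i : Fin n) : code σ i < n - (i : ℕ) := by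
  classical
  have h1 : (Finset.univ.filter (fun j : Fin n => i < j ∧ σ j < σ i)) ⊆
      Finset.univ.filter (fun j : Fin n => i < j) := fun j hj => by
    simp only [Finset.mem_filter] at *; exact ⟨hj.1, hj.2.1⟩
  have h2 : (Finset.univ.filter (fun j : Fin n => i < j)).card = n - 1 - (i : ℕ) := by
    have : Finset.univ.filter (fun j : Fin n => i < j) = Finset.Ioi i := by ext j; simp
    rw [this, Fin.card_Ioi]
  have h3 := Finset.card_le_card h1
  rw [h2] at h3
  have hi : (i : ℕ) < n := i.isLt
  calc code σ i ≤ n - 1 - (i:ℕ) := h3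
    _ < n - (i:ℕ) := by omega

lemma code_add_left (σ : Equiv.Perm (Fin n)) (i : Fin n) :
    code σ i + (Finset.univ.filter (fun j : Fin n => j < i ∧ σ j < σ i)).card = (σ i : ℕ) := by
  classical
  have hdisj : Disjoint (Finset.univ.filter (fun j : Fin n => i < j ∧ σ j < σ i))
      (Finset.univ.filter (fun j : Fin n => j < i ∧ σ j < σ i)) := by
    rw [Finset.disjoint_filter]
    rintro j _ ⟨h1, -⟩ ⟨h2, -⟩; exact absurd (h1.trans h2) (lt_irrefl i)
  have hunion : (Finset.univ.filter (fun j : Fin n => i < j ∧ σ j < σ i)) ∪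
      (Finset.univ.filter (fun j : Fin n => j < i ∧ σ j < σ i)) =
      Finset.univ.filter (fun j : Fin n => σ j < σ i) := by
    ext j
    simp only [Finset.mem_union, Finset.mem_filter, Finset.mem_univ, true_and]
    constructor
    · rintro (⟨-, h⟩ | ⟨-, h⟩) <;> exact h
    · intro h
      rcases lt_trichotomy i j with hij | rfl | hij
      · exact Or.inl ⟨hij, h⟩
      · exact absurd h (lt_irrefl _)
      · exact Or.inr ⟨hij, h⟩
  have hcard : (Finset.univ.filter (fun j : Fin n => σ j < σ i)).card = (σ i : ℕ) := by
    have himg : Finset.univ.filter (fun j : Fin n => σ j < σ i) =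
        (Finset.Iio (σ i)).image σ.symm := by
      ext j
      simp only [Finset.mem_filter, Finset.mem_univ, true_and, Finset.mem_image, Finset.mem_Iio]
      constructor
      · intro h; exact ⟨σ j, h, σ.symm_apply_apply j⟩
      · rintro ⟨v, hv, rfl⟩; simpa using hv
    rw [himg, Finset.card_image_of_injective _ σ.symm.injective, Fin.card_Iio]
  rw [← hcard, ← hunion, Finset.card_union_of_disjoint hdisj, code]

lemma not_lt_of_code_eq (σ σ' : Equiv.Perm (Fin n)) (i : Fin n)
    (hc : code σ i = code σ' i) (hagree : ∀ j, j < i → σ j = σ' j) : ¬ (σ i < σ' i) := by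
  classical
  intro hlt
  set A := Finset.univ.filter (fun j : Fin n => j < i ∧ σ j < σ i) with hA
  set B := Finset.univ.filter (fun j : Fin n => j < i ∧ σ' j < σ' i) with hB
  set D := Finset.univ.filter (fun j : Fin n => j < i ∧ σ i ≤ σ j ∧ σ j < σ' i) with hD
  have h1 := code_add_left σ i
  have h2 := code_add_left σ' i
  rw [← hA] at h1; rw [← hB] at h2
  have hBsplit : B = A ∪ D := by
    ext j
    simp only [hA, hB, hD, Finset.mem_union, Finset.mem_filter, Finset.mem_univ, true_and]
    constructor
    · rintro ⟨hj, hv⟩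
      rw [← hagree j hj] at hv
      rcases lt_or_ge (σ j) (σ i) with h | h
      · exact Or.inl ⟨hj, h⟩
      · exact Or.inr ⟨hj, h, hv⟩
    · rintro (⟨hj, hv⟩ | ⟨hj, _, hv⟩)
      · exact ⟨hj, by rw [← hagree j hj]; exact hv.trans hlt⟩
      · exact ⟨hj, by rw [← hagree j hj]; exact hv⟩
  have hdisj : Disjoint A D := by
    rw [Finset.disjoint_filter]
    rintro j _ ⟨-, hv⟩ ⟨-, hv', -⟩
    exact absurd hv (not_lt_of_ge hv')
  have hcardB : B.card = A.card + D.card := by rw [hBsplit, Finset.card_union_of_disjoint hdisj]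
  have hDle : D.card ≤ (Finset.Ioo (σ i) (σ' i)).card := by
    refine Finset.card_le_card_of_injOn σ ?_ ?_
    · intro j hj
      simp only [hD, Finset.mem_coe, Finset.mem_filter, Finset.mem_univ, true_and] at hj
      obtain ⟨hji, hge, hlt'⟩ := hj
      refine Finset.mem_Ioo.mpr ⟨lt_of_le_of_ne hge ?_, hlt'⟩
      intro heq
      exact absurd (σ.injective heq.symm) (ne_of_lt hji)
    · exact fun a _ b _ hab => σ.injective hab
  rw [Fin.card_Ioo] at hDle
  have : (σ i : ℕ) < (σ' i : ℕ) := hlt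
  omega

lemma code_injective : Function.Injective (fun σ : Equiv.Perm (Fin n) => code σ) := by
  classical
  intro σ σ' h
  have h' : ∀ i, code σ i = code σ' i := fun i => congrFun h i
  have key : ∀ m : ℕ, ∀ i : Fin n, (i : ℕ) = m → σ i = σ' i := by
    intro m
    induction m using Nat.strong_induction_on with
    | _ m IH =>
      rintro i rfl
      have hagree : ∀ j, j < i → σ j = σ' j := fun j hj => IH (j : ℕ) hj j rfl
      have h1 := not_lt_of_code_eq σ σ' i (h' i) hagree
      have h2 := not_lt_of_code_eq σ' σ i (h' i).symm (fun j hj => (hagree j hj).symm)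
      exact le_antisymm (le_of_not_gt h2) (le_of_not_gt h1)
  exact Equiv.ext fun i => key (i : ℕ) i rfl

/-- The box of possible codes. -/
def codeBox (n : ℕ) : Finset (Fin n → ℕ) := Fintype.piFinset (fun i => Finset.range (n - i))

lemma card_codeBox : (codeBox n).card = n.factorial := by
  rw [codeBox, Fintype.card_piFinset]
  simp only [Finset.card_range]
  rw [Fin.prod_univ_eq_prod_range (fun i => n - i) n, ← Finset.prod_range_reflect]
  have h : ∀ j ∈ Finset.range n, n - (n - 1 - j) = j + 1 := fun j hj => by
    have := Finset.mem_range.mp hj; omega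
  rw [Finset.prod_congr rfl h]
  clear h
  induction n with
  | zero => simp
  | succ m ih => rw [Finset.prod_range_succ, ih, Nat.factorial_succ, mul_comm]

lemma image_code : Finset.univ.image (fun σ : Equiv.Perm (Fin n) => code σ) = codeBox n := by
  classical
  apply Finset.eq_of_subset_of_card_le
  · intro c hc
    obtain ⟨σ, -, rfl⟩ := Finset.mem_image.mp hc
    exact Fintype.mem_piFinset.mpr fun i => Finset.mem_range.mpr (code_lt σ i)
  · rw [card_codeBox, Finset.card_image_of_injective _ code_injective]
    simp [Fintype.card_perm]

lemma mallowsZ_eq_prod (q : ℝ) :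
    mallowsZ n q = ∏ i : Fin n, ∑ j ∈ Finset.range (n - (i:ℕ)), q ^ j := by
  classical
  rw [Finset.prod_univ_sum, mallowsZ]
  rw [show (Fintype.piFinset fun i : Fin n => Finset.range (n - (i:ℕ))) = codeBox n from rfl]
  rw [← image_code, Finset.sum_image (fun σ _ σ' _ h => code_injective h)]
  refine Finset.sum_congr rfl fun σ _ => ?_
  rw [invCount_eq_sum_code, ← Finset.prod_pow_eq_pow_sum]

lemma contains_of_indices (σ : Equiv.Perm (Fin n)) (i j k : Fin n)
    (hij : i < j) (hjk : j < k) (h1 : σ i < σ k) (h2 : σ k < σ j) :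
    ContainsPattern σ p132 := by
  refine ⟨![i, j, k], ?_, ?_⟩
  · intro a b hab
    fin_cases a <;> fin_cases b <;>
      first
        | exact absurd hab (by decide)
        | exact hij
        | exact hjk
        | exact hij.trans hjk
  · intro a b
    fin_cases a <;> fin_cases b <;>
      first
        | exact iff_of_false (by decide) (lt_irrefl _)
        | exact iff_of_true (by decide) (h1.trans h2)
        | exact iff_of_true (by decide) h1
        | exact iff_of_true (by decide) h2
        | exact iff_of_false (by decide) (lt_asymm (h1.trans h2))
        | exact iff_of_false (by decide) (lt_asymm h1)
        | exact iff_of_false (by decide) (lt_asymm h2)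

lemma code_antitone_of_avoids (σ : Equiv.Perm (Fin n)) (hav : AvoidsPattern σ p132)
    (i j : Fin n) (hij : i < j) : code σ j ≤ code σ i := by
  classical
  apply Finset.card_le_card
  intro k hk
  simp only [Finset.mem_filter, Finset.mem_univ, true_and] at *
  obtain ⟨hjk, hkj⟩ := hk
  refine ⟨hij.trans hjk, ?_⟩
  by_contra hge
  push_neg at hge
  have hne : σ i ≠ σ k := fun h => absurd (σ.injective h) (ne_of_lt (hij.trans hjk))
  have h1 : σ i < σ k := lt_of_le_of_ne hge hne
  exact hav (contains_of_indices σ i j k hij hjk h1 hkj)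

/-- Extension of the code to `ℕ`. -/
def ec (σ : Equiv.Perm (Fin n)) (m : ℕ) : ℕ := if h : m < n then code σ ⟨m, h⟩ else 0

/-- Difference sequence of the extended code. -/
def dd (σ : Equiv.Perm (Fin n)) (m : ℕ) : ℕ := ec σ m - ec σ (m + 1)

lemma ec_le (σ : Equiv.Perm (Fin n)) (m : ℕ) : ec σ m ≤ n := by
  rw [ec]
  split
  · exact le_of_lt ((code_lt σ _).trans_le (Nat.sub_le _ _))
  · exact Nat.zero_le _

lemma ec_antitone (σ : Equiv.Perm (Fin n)) (hav : AvoidsPattern σ p132) (m : ℕ) :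
    ec σ (m + 1) ≤ ec σ m := by
  rw [ec, ec]
  split
  · rename_i h1
    have h0 : m < n := by omega
    rw [dif_pos h0]
    exact code_antitone_of_avoids σ hav ⟨m, h0⟩ ⟨m+1, h1⟩ (by simp [Fin.lt_def])
  · exact Nat.zero_le _

lemma ec_eq_sum (σ : Equiv.Perm (Fin n)) (hav : AvoidsPattern σ p132) (m : ℕ) :
    ec σ m = ∑ j ∈ Finset.Ico m n, dd σ j := by
  have H : ∀ t m : ℕ, n ≤ m + t → ec σ m = ∑ j ∈ Finset.Ico m n, dd σ j := by
    intro t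
    induction t with
    | zero =>
      intro m hm
      rw [Finset.Ico_eq_empty (by omega), Finset.sum_empty, ec, dif_neg (by omega)]
    | succ t ih =>
      intro m hm
      by_cases hmn : m < n
      · rw [Finset.sum_eq_sum_Ico_succ_bot hmn]
        have h1 : ec σ m = dd σ m + ec σ (m + 1) := by
          have := ec_antitone σ hav m
          rw [dd]; omega
        rw [h1, ih (m+1) (by omega)]
      · rw [Finset.Ico_eq_empty (by omega), Finset.sum_empty, ec, dif_neg (by omega)]
  exact H (n + 1) m (by omega)

lemma dd_le (σ : Equiv.Perm (Fin n)) (m : ℕ) : dd σ m ≤ n :=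
  (Nat.sub_le _ _).trans (ec_le σ m)

lemma sum_code_eq (σ : Equiv.Perm (Fin n)) (hav : AvoidsPattern σ p132) :
    ∑ i : Fin n, code σ i = ∑ j ∈ Finset.range n, (j + 1) * dd σ j := by
  have h1 : ∀ i : Fin n, code σ i = ec σ (i : ℕ) := fun i => by
    rw [ec, dif_pos i.isLt]
  calc ∑ i : Fin n, code σ i = ∑ i : Fin n, ec σ (i : ℕ) := Finset.sum_congr rfl fun i _ => h1 i
    _ = ∑ m ∈ Finset.range n, ec σ m := Fin.sum_univ_eq_sum_range (ec σ) n
    _ = ∑ m ∈ Finset.range n, ∑ j ∈ Finset.Ico m n, dd σ j :=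
        Finset.sum_congr rfl fun m _ => ec_eq_sum σ hav m
    _ = ∑ j ∈ Finset.range n, ∑ m ∈ Finset.range (j + 1), dd σ j := by
        refine Finset.sum_comm' ?_
        intro m j
        simp only [Finset.mem_range, Finset.mem_Ico]
        omega
    _ = ∑ j ∈ Finset.range n, (j + 1) * dd σ j := by
        refine Finset.sum_congr rfl fun j _ => ?_
        rw [Finset.sum_const, Finset.card_range, smul_eq_mul]

lemma dd_injOn (σ σ' : Equiv.Perm (Fin n)) (hav : AvoidsPattern σ p132)
    (hav' : AvoidsPattern σ' p132) (h : ∀ j : ℕ, dd σ j = dd σ' j) : σ = σ' := by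
  have hec : ∀ m, ec σ m = ec σ' m := fun m => by
    rw [ec_eq_sum σ hav m, ec_eq_sum σ' hav' m]
    exact Finset.sum_congr rfl fun j _ => h j
  apply code_injective
  funext i
  have := hec (i : ℕ)
  rw [ec, ec, dif_pos i.isLt, dif_pos i.isLt] at this
  simpa using this

open scoped Classical in
lemma avoidSum_le (q : ℝ) (hq0 : 0 ≤ q) :
    (∑ σ : Equiv.Perm (Fin n), if AvoidsPattern σ p132 then q ^ invCount σ else 0)
      ≤ ∏ j : Fin n, ∑ t ∈ Finset.range (n + 1), (q ^ ((j : ℕ) + 1)) ^ t := by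
  classical
  set g : (Fin n → ℕ) → ℝ := fun c => ∏ j : Fin n, (q ^ ((j : ℕ) + 1)) ^ (c j) with hg
  set S : Finset (Equiv.Perm (Fin n)) := Finset.univ.filter (fun σ => AvoidsPattern σ p132)
    with hS
  set Ψ : Equiv.Perm (Fin n) → (Fin n → ℕ) := fun σ => fun j => dd σ (j : ℕ) with hΨ
  have step1 : (∑ σ : Equiv.Perm (Fin n), if AvoidsPattern σ p132 then q ^ invCount σ else 0)
      = ∑ σ ∈ S, q ^ invCount σ := (Finset.sum_filter _ _).symm
  have step2 : ∀ σ ∈ S, q ^ invCount σ = g (Ψ σ) := by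
    intro σ hσ
    have hav : AvoidsPattern σ p132 := (Finset.mem_filter.mp hσ).2
    rw [invCount_eq_sum_code, sum_code_eq σ hav, ← Fin.sum_univ_eq_sum_range
      (fun j => (j + 1) * dd σ j) n, ← Finset.prod_pow_eq_pow_sum]
    exact Finset.prod_congr rfl fun j _ => by rw [pow_mul]
  have hinj : ∀ x ∈ S, ∀ y ∈ S, Ψ x = Ψ y → x = y := by
    intro x hx y hy hxy
    have havx := (Finset.mem_filter.mp hx).2
    have havy := (Finset.mem_filter.mp hy).2
    refine dd_injOn x y havx havy fun j => ?_
    by_cases hj : j < n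
    · exact congrFun hxy ⟨j, hj⟩
    · have h1 : ∀ m, ¬ m < n → ec x m = ec y m := fun m hm => by
        rw [ec, ec, dif_neg hm, dif_neg hm]
      rw [dd, dd, h1 j hj, h1 (j+1) (by omega)]
  have step3 : ∑ σ ∈ S, g (Ψ σ) = ∑ c ∈ S.image Ψ, g c := (Finset.sum_image hinj).symm
  have hsub : S.image Ψ ⊆ Fintype.piFinset (fun _ : Fin n => Finset.range (n + 1)) := by
    intro c hc
    obtain ⟨σ, -, rfl⟩ := Finset.mem_image.mp hc
    exact Fintype.mem_piFinset.mpr fun j => Finset.mem_range.mpr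
      (Nat.lt_succ_of_le (dd_le σ (j : ℕ)))
  have hgnn : ∀ c, 0 ≤ g c := fun c =>
    Finset.prod_nonneg fun j _ => pow_nonneg (pow_nonneg hq0 _) _
  calc (∑ σ : Equiv.Perm (Fin n), if AvoidsPattern σ p132 then q ^ invCount σ else 0)
      = ∑ σ ∈ S, g (Ψ σ) := by rw [step1]; exact Finset.sum_congr rfl step2
    _ = ∑ c ∈ S.image Ψ, g c := step3
    _ ≤ ∑ c ∈ Fintype.piFinset (fun _ : Fin n => Finset.range (n + 1)), g c :=
        Finset.sum_le_sum_of_subset_of_nonneg hsub fun c _ _ => hgnn c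
    _ = ∏ j : Fin n, ∑ t ∈ Finset.range (n + 1), (q ^ ((j : ℕ) + 1)) ^ t := by
        rw [Finset.prod_univ_sum]

/-- Reverse-complement of a permutation. -/
def rc (ρ : Equiv.Perm (Fin n)) : Equiv.Perm (Fin n) := Fin.revPerm * ρ * Fin.revPerm

lemma rc_apply (ρ : Equiv.Perm (Fin n)) (x : Fin n) : rc ρ x = (ρ x.rev).rev := rfl

lemma rc_rc (ρ : Equiv.Perm (Fin n)) : rc (rc ρ) = ρ := by
  ext x
  simp [rc_apply, Fin.rev_rev]

lemma invCount_rc (ρ : Equiv.Perm (Fin n)) : invCount (rc ρ) = invCount ρ := by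
  classical
  rw [invCount, invCount]
  refine Finset.card_bij (fun p _ => (p.2.rev, p.1.rev)) ?_ ?_ ?_
  · intro p hp
    obtain ⟨a, b⟩ := p
    simp only [Finset.mem_filter, Finset.mem_univ, true_and] at hp ⊢
    obtain ⟨hab, hv⟩ := hp
    rw [rc_apply, rc_apply] at hv
    exact ⟨Fin.rev_lt_rev.mpr hab, Fin.rev_lt_rev.mp (by simpa [Fin.rev_rev] using hv)⟩
  · intro p hp p' hp' h
    obtain ⟨a, b⟩ := p
    obtain ⟨c, d⟩ := p'
    simp only [Prod.mk.injEq] at h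
    have h1 := congrArg Fin.rev h.1
    have h2 := congrArg Fin.rev h.2
    rw [Fin.rev_rev, Fin.rev_rev] at h1 h2
    simp [Prod.ext_iff, h1, h2]
  · intro p hp
    obtain ⟨a, b⟩ := p
    simp only [Finset.mem_filter, Finset.mem_univ, true_and] at hp
    obtain ⟨hab, hv⟩ := hp
    refine ⟨(b.rev, a.rev), ?_, by simp [Fin.rev_rev]⟩
    simp only [Finset.mem_filter, Finset.mem_univ, true_and]
    refine ⟨Fin.rev_lt_rev.mpr hab, ?_⟩
    rw [rc_apply, rc_apply, Fin.rev_rev, Fin.rev_rev]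
    exact Fin.rev_lt_rev.mpr hv

lemma contains_rc (ρ : Equiv.Perm (Fin n)) (τ τ' : Equiv.Perm (Fin 3))
    (hrel : ∀ j k : Fin 3, τ' j < τ' k ↔ τ k.rev < τ j.rev) :
    ContainsPattern ρ τ → ContainsPattern (rc ρ) τ' := by
  rintro ⟨f, hf, hcond⟩
  refine ⟨fun j => (f j.rev).rev, ?_, ?_⟩
  · intro a b hab
    exact Fin.rev_lt_rev.mpr (hf (Fin.rev_lt_rev.mpr hab))
  · intro a b
    rw [hrel a b, hcond b.rev a.rev]
    rw [rc_apply, rc_apply, Fin.rev_rev, Fin.rev_rev]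
    exact (Fin.rev_lt_rev).symm

lemma avoids_rc_iff (ρ : Equiv.Perm (Fin n)) :
    AvoidsPattern (rc ρ) p213 ↔ AvoidsPattern ρ p132 := by
  have h1 : ∀ j k : Fin 3, p213 j < p213 k ↔ p132 k.rev < p132 j.rev := by decide
  have h2 : ∀ j k : Fin 3, p132 j < p132 k ↔ p213 k.rev < p213 j.rev := by decide
  constructor
  · intro h hc
    exact h (contains_rc ρ p132 p213 h1 hc)
  · intro h hc
    have := contains_rc (rc ρ) p213 p132 h2 hc
    rw [rc_rc] at this
    exact h this

lemma avoidProb_213 (q : ℝ) : avoidProb n q p213 = avoidProb n q p132 := by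
  classical
  rw [avoidProb, avoidProb]
  have hbij : Function.Bijective (fun ρ : Equiv.Perm (Fin n) => rc ρ) :=
    Function.Involutive.bijective rc_rc
  rw [← Fintype.sum_bijective _ hbij _ _ (fun ρ => ?_)]
  rw [avoids_rc_iff]
  congr 1
  rw [mallowsP, mallowsP, invCount_rc]

/-! ### Analytic estimates -/

lemma geom_bound (x : ℝ) (h0 : 0 ≤ x) (h1 : x < 1) (m : ℕ) :
    ∑ i ∈ Finset.range m, x ^ i ≤ (1 - x)⁻¹ := by
  have hpos : (0:ℝ) < 1 - x := by linarith
  have hgm := geom_sum_mul x m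
  have key : (∑ i ∈ Finset.range m, x ^ i) * (1 - x) ≤ 1 := by
    have hxn : (0:ℝ) ≤ x ^ m := pow_nonneg h0 m
    nlinarith [hgm]
  rw [inv_eq_one_div, le_div_iff₀ hpos]
  exact key

lemma exp_le_one_sub (x : ℝ) (h0 : 0 ≤ x) (h1 : x < 1) :
    Real.exp (-(x / (1 - x))) ≤ 1 - x := by
  have hpos : (0:ℝ) < 1 - x := by linarith
  have h := Real.add_one_le_exp (x / (1 - x))
  have hmul := mul_le_mul_of_nonneg_right h (le_of_lt hpos)
  have hx : x / (1 - x) * (1 - x) = x := div_mul_cancel₀ x (ne_of_gt hpos)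
  have hmul' : (1:ℝ) ≤ Real.exp (x / (1 - x)) * (1 - x) := by nlinarith [hmul, hx]
  have e1 : Real.exp (-(x / (1 - x))) * Real.exp (x / (1 - x)) = 1 := by
    rw [← Real.exp_add]; simp
  nlinarith [mul_le_mul_of_nonneg_left hmul' (le_of_lt (Real.exp_pos (-(x / (1 - x))))), e1,
    Real.exp_pos (-(x / (1 - x)))]

lemma one_sub_pow_ge (q : ℝ) (hq0 : 0 < q) (hq1 : q < 1) (k : ℕ) :
    Real.exp (-(q ^ (k + 1) / (1 - q))) ≤ 1 - q ^ (k + 1) := by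
  have hx0 : (0:ℝ) ≤ q ^ (k + 1) := pow_nonneg hq0.le _
  have hxq : q ^ (k + 1) ≤ q := by
    calc q ^ (k+1) ≤ q ^ 1 := pow_le_pow_of_le_one hq0.le hq1.le (by omega)
      _ = q := pow_one q
  have hx1 : q ^ (k + 1) < 1 := lt_of_le_of_lt hxq hq1
  refine le_trans (Real.exp_le_exp.mpr ?_) (exp_le_one_sub _ hx0 hx1)
  have hd1 : (0:ℝ) < 1 - q ^ (k+1) := by linarith
  have hd2 : (0:ℝ) < 1 - q := by linarith
  have : q ^ (k+1) / (1 - q ^ (k+1)) ≤ q ^ (k+1) / (1 - q) :=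
    div_le_div_of_nonneg_left hx0 hd2 (by linarith) |>.trans_eq rfl
  linarith

lemma sum_pow_succ_le (q : ℝ) (hq0 : 0 < q) (hq1 : q < 1) (m : ℕ) :
    ∑ k ∈ Finset.range m, q ^ (k + 1) ≤ q * (1 - q)⁻¹ := by
  have : ∑ k ∈ Finset.range m, q ^ (k + 1) = q * ∑ k ∈ Finset.range m, q ^ k := by
    rw [Finset.mul_sum]
    exact Finset.sum_congr rfl fun k _ => by ring
  rw [this]
  exact mul_le_mul_of_nonneg_left (geom_bound q hq0.le hq1 m) hq0.le

lemma prodW_lower (q : ℝ) (hq0 : 0 < q) (hq1 : q < 1) (m : ℕ) :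
    Real.exp (-(q / (1 - q) ^ 2)) ≤ ∏ k ∈ Finset.range m, (1 - q ^ (k + 1)) := by
  have hd2 : (0:ℝ) < 1 - q := by linarith
  have step1 : Real.exp (-(q / (1 - q) ^ 2)) ≤
      Real.exp (∑ k ∈ Finset.range m, -(q ^ (k + 1) / (1 - q))) := by
    rw [Real.exp_le_exp]
    have h1 : ∑ k ∈ Finset.range m, -(q ^ (k + 1) / (1 - q)) =
        -((∑ k ∈ Finset.range m, q ^ (k + 1)) / (1 - q)) := by
      rw [Finset.sum_div, ← Finset.sum_neg_distrib]
    rw [h1, neg_le_neg_iff]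
    have h2 := sum_pow_succ_le q hq0 hq1 m
    rw [div_le_iff₀ hd2]
    have h3 : q / (1 - q) ^ 2 * (1 - q) = q * (1 - q)⁻¹ := by
      field_simp
    rw [h3]
    exact h2
  refine step1.trans ?_
  rw [Real.exp_sum]
  exact Finset.prod_le_prod (fun k _ => (Real.exp_pos _).le)
    (fun k _ => one_sub_pow_ge q hq0 hq1 k)

lemma prodW_le_one (q : ℝ) (hq0 : 0 < q) (hq1 : q < 1) (m : ℕ) :
    ∏ k ∈ Finset.range m, (1 - q ^ (k + 1)) ≤ 1 := by
  apply Finset.prod_le_one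
  · intro k _
    have := one_sub_pow_ge q hq0 hq1 k
    have := Real.exp_pos (-(q ^ (k + 1) / (1 - q)))
    linarith
  · intro k _
    have : (0:ℝ) ≤ q ^ (k+1) := pow_nonneg hq0.le _
    linarith

lemma mallowsZ_eq_prod' (q : ℝ) (hq0 : 0 < q) (hq1 : q < 1) :
    mallowsZ n q = (∏ k ∈ Finset.range n, (1 - q ^ (k + 1))) * ((1 - q)⁻¹) ^ n := by
  have hd2 : (0:ℝ) < 1 - q := by linarith
  have hne : q ≠ 1 := ne_of_lt hq1
  have hterm : ∀ m : ℕ, ∑ j ∈ Finset.range m, q ^ j = (1 - q ^ m) * (1 - q)⁻¹ := by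
    intro m
    rw [geom_sum_eq hne, div_eq_mul_inv, show q - 1 = -(1 - q) by ring, inv_neg]
    ring
  rw [mallowsZ_eq_prod]
  calc ∏ i : Fin n, ∑ j ∈ Finset.range (n - (i:ℕ)), q ^ j
      = ∏ i : Fin n, (1 - q ^ (n - (i:ℕ))) * (1 - q)⁻¹ :=
        Finset.prod_congr rfl fun i _ => hterm _
    _ = (∏ i : Fin n, (1 - q ^ (n - (i:ℕ)))) * ((1 - q)⁻¹) ^ n := by
        rw [Finset.prod_mul_distrib, Finset.prod_const, Finset.card_univ, Fintype.card_fin]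
    _ = (∏ k ∈ Finset.range n, (1 - q ^ (k + 1))) * ((1 - q)⁻¹) ^ n := by
        congr 1
        rw [Fin.prod_univ_eq_prod_range (fun i => 1 - q ^ (n - i)) n,
          ← Finset.prod_range_reflect (fun j => 1 - q ^ (j + 1)) n]
        refine Finset.prod_congr rfl fun j hj => ?_
        have := Finset.mem_range.mp hj
        congr 2
        omega

lemma mallowsZ_lower (q : ℝ) (hq0 : 0 < q) (hq1 : q < 1) :
    Real.exp (-(q / (1 - q) ^ 2)) * ((1 - q)⁻¹) ^ n ≤ mallowsZ n q := by
  rw [mallowsZ_eq_prod' q hq0 hq1]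
  have hd2 : (0:ℝ) < 1 - q := by linarith
  exact mul_le_mul_of_nonneg_right (prodW_lower q hq0 hq1 n)
    (pow_nonneg (inv_nonneg.mpr hd2.le) n)

lemma mallowsZ_upper (q : ℝ) (hq0 : 0 < q) (hq1 : q < 1) :
    mallowsZ n q ≤ ((1 - q)⁻¹) ^ n := by
  rw [mallowsZ_eq_prod' q hq0 hq1]
  have hd2 : (0:ℝ) < 1 - q := by linarith
  have h := prodW_le_one q hq0 hq1 n
  have h2 := prodW_lower q hq0 hq1 n
  have h3 : (0:ℝ) < ∏ k ∈ Finset.range n, (1 - q ^ (k + 1)) :=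
    lt_of_lt_of_le (Real.exp_pos _) h2
  nlinarith [pow_nonneg (inv_nonneg.mpr hd2.le) n,
    mul_le_mul_of_nonneg_right h (pow_nonneg (inv_nonneg.mpr hd2.le) n)]

lemma mallowsZ_pos (q : ℝ) (hq0 : 0 < q) (hq1 : q < 1) : 0 < mallowsZ n q := by
  have hd2 : (0:ℝ) < 1 - q := by linarith
  have := mallowsZ_lower (n := n) q hq0 hq1
  have h1 : (0:ℝ) < Real.exp (-(q / (1 - q) ^ 2)) * ((1 - q)⁻¹) ^ n :=
    mul_pos (Real.exp_pos _) (pow_pos (inv_pos.mpr hd2) n)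
  linarith

lemma identity_avoids : AvoidsPattern (1 : Equiv.Perm (Fin n)) p132 := by
  rintro ⟨f, hf, hcond⟩
  have h21 : p132 2 < p132 1 := by decide
  have := (hcond 2 1).mp h21
  simp only [Equiv.Perm.one_apply] at this
  exact absurd (hf (by decide : (1:Fin 3) < 2)) (lt_asymm this)

lemma invCount_one : invCount (1 : Equiv.Perm (Fin n)) = 0 := by
  rw [invCount, Finset.card_eq_zero, Finset.filter_eq_empty_iff]
  rintro p -
  simp only [Equiv.Perm.one_apply]
  rintro ⟨h1, h2⟩
  exact absurd (h1.trans h2) (lt_irrefl _)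

open scoped Classical in
lemma avoidSum_lower (q : ℝ) (hq0 : 0 < q) :
    (1:ℝ) ≤ ∑ σ : Equiv.Perm (Fin n), if AvoidsPattern σ p132 then q ^ invCount σ else 0 := by
  have h1 : (if AvoidsPattern (1 : Equiv.Perm (Fin n)) p132
      then q ^ invCount (1 : Equiv.Perm (Fin n)) else 0) = 1 := by
    rw [if_pos identity_avoids, invCount_one, pow_zero]
  rw [← h1]
  refine Finset.single_le_sum
    (f := fun σ : Equiv.Perm (Fin n) => if AvoidsPattern σ p132 then q ^ invCount σ else 0)
    (fun σ _ => ?_) (Finset.mem_univ _)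
  split
  · exact pow_nonneg hq0.le _
  · exact le_refl 0

open scoped Classical in
lemma avoidSum_upper (q : ℝ) (hq0 : 0 < q) (hq1 : q < 1) :
    (∑ σ : Equiv.Perm (Fin n), if AvoidsPattern σ p132 then q ^ invCount σ else 0)
      ≤ (Real.exp (-(q / (1 - q) ^ 2)))⁻¹ := by
  refine (avoidSum_le q hq0.le).trans ?_
  have hd2 : (0:ℝ) < 1 - q := by linarith
  have step1 : ∏ j : Fin n, ∑ t ∈ Finset.range (n + 1), (q ^ ((j:ℕ) + 1)) ^ t
      ≤ ∏ j : Fin n, (1 - q ^ ((j:ℕ) + 1))⁻¹ := by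
    refine Finset.prod_le_prod (fun j _ => Finset.sum_nonneg fun t _ =>
      pow_nonneg (pow_nonneg hq0.le _) _) (fun j _ => ?_)
    have hx0 : (0:ℝ) ≤ q ^ ((j:ℕ) + 1) := pow_nonneg hq0.le _
    have hx1 : q ^ ((j:ℕ) + 1) < 1 := by
      calc q ^ ((j:ℕ)+1) ≤ q ^ 1 := pow_le_pow_of_le_one hq0.le hq1.le (by omega)
        _ = q := pow_one q
        _ < 1 := hq1
    exact geom_bound _ hx0 hx1 _
  refine step1.trans ?_
  have step2 : ∏ j : Fin n, (1 - q ^ ((j:ℕ) + 1))⁻¹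
      = (∏ k ∈ Finset.range n, (1 - q ^ (k + 1)))⁻¹ := by
    rw [Fin.prod_univ_eq_prod_range (fun j => (1 - q ^ (j + 1))⁻¹) n,
      ← Finset.prod_inv_distrib]
  rw [step2]
  have h2 := prodW_lower q hq0 hq1 n
  exact inv_anti₀ (Real.exp_pos _) h2

open scoped Classical in
lemma avoidProb_eq_div (q : ℝ) :
    avoidProb n q p132 =
      (∑ σ : Equiv.Perm (Fin n), if AvoidsPattern σ p132 then q ^ invCount σ else 0)
        / mallowsZ n q := by
  rw [avoidProb, Finset.sum_div]
  refine Finset.sum_congr rfl fun σ _ => ?_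
  rw [mallowsP]
  split <;> simp

lemma avoidProb_bounds (q : ℝ) (hq0 : 0 < q) (hq1 : q < 1) :
    (1 - q) ^ n ≤ avoidProb n q p132 ∧
      avoidProb n q p132 ≤ ((Real.exp (-(q / (1 - q) ^ 2)))⁻¹ * (Real.exp (-(q / (1 - q) ^ 2)))⁻¹) * (1 - q) ^ n := by
  classical
  have hd2 : (0:ℝ) < 1 - q := by linarith
  set E := Real.exp (-(q / (1 - q) ^ 2)) with hE
  have hEpos : 0 < E := Real.exp_pos _
  have hZpos : 0 < mallowsZ n q := mallowsZ_pos q hq0 hq1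
  have hA1 := avoidSum_lower (n := n) q hq0
  have hA2 := avoidSum_upper (n := n) q hq0 hq1
  have hZ1 := mallowsZ_lower (n := n) q hq0 hq1
  have hZ2 := mallowsZ_upper (n := n) q hq0 hq1
  rw [avoidProb_eq_div]
  set A := ∑ σ : Equiv.Perm (Fin n), if AvoidsPattern σ p132 then q ^ invCount σ else 0 with hA
  have hipow : ((1 - q)⁻¹) ^ n = ((1 - q) ^ n)⁻¹ := by rw [inv_pow]
  have hppos : (0:ℝ) < (1 - q) ^ n := pow_pos hd2 n
  constructor
  · have h1 : (1 - q) ^ n * mallowsZ n q ≤ A := by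
      calc (1 - q) ^ n * mallowsZ n q ≤ (1 - q) ^ n * ((1 - q)⁻¹) ^ n :=
            mul_le_mul_of_nonneg_left hZ2 hppos.le
        _ = 1 := by rw [hipow, mul_inv_cancel₀ (ne_of_gt hppos)]
        _ ≤ A := hA1
    rw [le_div_iff₀ hZpos]
    exact h1
  · rw [div_le_iff₀ hZpos]
    calc A ≤ E⁻¹ := hA2
      _ = (E⁻¹ * E⁻¹ * (1 - q) ^ n) * (E * ((1 - q)⁻¹) ^ n) := by
          rw [hipow]
          field_simp
      _ ≤ (E⁻¹ * E⁻¹ * (1 - q) ^ n) * mallowsZ n q := by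
          refine mul_le_mul_of_nonneg_left hZ1 ?_
          positivity

lemma tendsto_rpow_of_bounds (a : ℕ → ℝ) (L K : ℝ) (hL0 : 0 < L) (hK : 1 ≤ K)
    (hlo : ∀ n, L ^ n ≤ a n) (hhi : ∀ n, a n ≤ K * L ^ n) :
    Tendsto (fun n : ℕ => (a n) ^ ((n : ℝ)⁻¹)) atTop (𝓝 L) := by
  have hKpos : (0:ℝ) < K := lt_of_lt_of_le one_pos hK
  have hinv : Tendsto (fun n : ℕ => ((n:ℝ))⁻¹) atTop (𝓝 0) :=
    tendsto_inv_atTop_nhds_zero_nat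
  have hKlim : Tendsto (fun n : ℕ => K ^ ((n:ℝ)⁻¹)) atTop (𝓝 1) := by
    have heq : (fun n : ℕ => K ^ ((n:ℝ)⁻¹))
        = fun n : ℕ => Real.exp (Real.log K * ((n:ℝ))⁻¹) := by
      funext n
      rw [Real.rpow_def_of_pos hKpos]
    rw [heq]
    have h2 : Tendsto (fun n : ℕ => Real.log K * ((n:ℝ))⁻¹) atTop (𝓝 0) := by
      have := hinv.const_mul (Real.log K)
      simpa using this
    have h3 := (Real.continuous_exp.tendsto 0).comp h2
    rw [Real.exp_zero] at h3
    exact h3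
  have hg : Tendsto (fun n : ℕ => K ^ ((n:ℝ)⁻¹) * L) atTop (𝓝 L) := by
    have := hKlim.mul_const L
    simpa using this
  refine tendsto_of_tendsto_of_tendsto_of_le_of_le' tendsto_const_nhds hg ?_ ?_
  · filter_upwards [Filter.eventually_ge_atTop 1] with n hn
    have hne : ((n:ℝ)) ≠ 0 := Nat.cast_ne_zero.mpr (by omega)
    have h1 : (L ^ n : ℝ) ^ ((n:ℝ)⁻¹) = L := by
      rw [← Real.rpow_natCast L n, ← Real.rpow_mul hL0.le, mul_inv_cancel₀ hne, Real.rpow_one]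
    calc L = (L ^ n : ℝ) ^ ((n:ℝ)⁻¹) := h1.symm
      _ ≤ (a n) ^ ((n:ℝ)⁻¹) :=
          Real.rpow_le_rpow (pow_nonneg hL0.le n) (hlo n) (inv_nonneg.mpr (Nat.cast_nonneg n))
  · filter_upwards [Filter.eventually_ge_atTop 1] with n hn
    have hne : ((n:ℝ)) ≠ 0 := Nat.cast_ne_zero.mpr (by omega)
    have h1 : (L ^ n : ℝ) ^ ((n:ℝ)⁻¹) = L := by
      rw [← Real.rpow_natCast L n, ← Real.rpow_mul hL0.le, mul_inv_cancel₀ hne, Real.rpow_one]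
    have h0an : 0 ≤ a n := le_trans (pow_nonneg hL0.le n) (hlo n)
    calc (a n) ^ ((n:ℝ)⁻¹) ≤ (K * L ^ n) ^ ((n:ℝ)⁻¹) :=
          Real.rpow_le_rpow h0an (hhi n) (inv_nonneg.mpr (Nat.cast_nonneg n))
      _ = K ^ ((n:ℝ)⁻¹) * (L ^ n : ℝ) ^ ((n:ℝ)⁻¹) :=
          Real.mul_rpow hKpos.le (pow_nonneg hL0.le n)
      _ = K ^ ((n:ℝ)⁻¹) * L := by rw [h1]

lemma main132 (q : ℝ) (hq : q ∈ Set.Ioo (0:ℝ) 1) :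
    Tendsto (fun n : ℕ => (avoidProb n q p132) ^ ((n : ℝ)⁻¹)) atTop (𝓝 (1 - q)) := by
  obtain ⟨hq0, hq1⟩ := hq
  have hd2 : (0:ℝ) < 1 - q := by linarith
  set E := Real.exp (-(q / (1 - q) ^ 2)) with hE
  have hEpos : 0 < E := Real.exp_pos _
  have hE1 : E ≤ 1 := by
    rw [hE]
    apply Real.exp_le_one_iff.mpr
    have : (0:ℝ) ≤ q / (1 - q) ^ 2 := div_nonneg hq0.le (sq_nonneg _)
    linarith
  have hK : 1 ≤ E⁻¹ * E⁻¹ := by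
    have h1 : 1 ≤ E⁻¹ := (one_le_inv₀ hEpos).mpr hE1
    nlinarith
  exact tendsto_rpow_of_bounds _ _ _ hd2 hK
    (fun n => (avoidProb_bounds (n := n) q hq0 hq1).1)
    (fun n => (avoidProb_bounds (n := n) q hq0 hq1).2)

end Stmt18Aux

/-- `lim_{n→∞} (P_n^q(S_n(132)))^{1/n} = lim_{n→∞} (P_n^q(S_n(213)))^{1/n} = 1 - q`. -/
theorem stmt18 (q : ℝ) (hq : q ∈ Set.Ioo (0:ℝ) 1) :
    Tendsto (fun n : ℕ => (avoidProb n q p132) ^ ((n : ℝ)⁻¹)) atTop (𝓝 (1 - q)) ∧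
    Tendsto (fun n : ℕ => (avoidProb n q p213) ^ ((n : ℝ)⁻¹)) atTop (𝓝 (1 - q)) := by
  refine ⟨Stmt18Aux.main132 q hq, ?_⟩
  have heq : (fun n : ℕ => (avoidProb n q p213) ^ ((n : ℝ)⁻¹))
      = fun n : ℕ => (avoidProb n q p132) ^ ((n : ℝ)⁻¹) := by
    funext n
    rw [Stmt18Aux.avoidProb_213]
  rw [heq]
  exact Stmt18Aux.main132 q hq
end
end
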